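/- arXiv:2505.05368 — 6 statements merged into one kernel-verified Lean document; each statement's English description precedes it below -/
import Mathlib

section
/- For every p ∈ ℝ⁴, the function z ↦ −¼·(p·Q)(z)·(Δ(p·Q))(z) + ¼·((∂ₓ(p·Q))(z)² + (∂_y(p·Q))(z)²) on ℂ is constant, equal to B(p,p) = −(p⁰)² + (p¹)² + (p²)² + (p³)². (Equivalently, −T ∂_z∂_z̄ T + ∂_z T ∂_z̄ T = B(p,p) for T = p·Q; this is the statement that the scalar curvature R of the metric 4 dz dz̄ / T² satisfies −R/2 = B(p,p).) -/
noncomputable section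

/-- The null embedding of the celestial sphere into the light-cone of Minkowski space. -/
def Q (z : ℂ) : Fin 4 → ℝ :=
  ![-1 - z.re ^ 2 - z.im ^ 2, 2 * z.re, 2 * z.im, 1 - z.re ^ 2 - z.im ^ 2]

/-- The contraction `p·Q(z) = Σ_μ pᵘ Qᵘ(z)`. -/
def dotQ (p : Fin 4 → ℝ) (z : ℂ) : ℝ := ∑ μ : Fin 4, p μ * Q z μ

/-- The Minkowski bilinear form on `ℝ⁴`. -/
def mink (u v : Fin 4 → ℝ) : ℝ :=
  -(u 0 * v 0) + u 1 * v 1 + u 2 * v 2 + u 3 * v 3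

/-- The partial derivative `∂ₓ` of a function on `ℂ ≅ ℝ²`. -/
def pdx (f : ℂ → ℝ) (z : ℂ) : ℝ := fderiv ℝ f z 1

/-- The partial derivative `∂_y` of a function on `ℂ ≅ ℝ²`. -/
def pdy (f : ℂ → ℝ) (z : ℂ) : ℝ := fderiv ℝ f z Complex.I

open Complex in
lemma hasFDerivAt_quad (a b c d : ℝ) (z : ℂ) :
    HasFDerivAt (fun w : ℂ => a + b * w.re + c * w.im + d * (w.re ^ 2 + w.im ^ 2))
      ((b + 2 * d * z.re) • (reCLM : ℂ →L[ℝ] ℝ) + (c + 2 * d * z.im) • (imCLM : ℂ →L[ℝ] ℝ)) z := by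
  have hr : HasFDerivAt (fun w : ℂ => w.re) (reCLM : ℂ →L[ℝ] ℝ) z := reCLM.hasFDerivAt
  have hi : HasFDerivAt (fun w : ℂ => w.im) (imCLM : ℂ →L[ℝ] ℝ) z := imCLM.hasFDerivAt
  have h := (((hasFDerivAt_const a z).add (hr.const_mul b)).add (hi.const_mul c)).add
    (((hr.mul hr).add (hi.mul hi)).const_mul d)
  refine (h.congr_fderiv ?_).congr_of_eventuallyEq (Filter.Eventually.of_forall fun w => ?_)
  · ext w
    simp
    ring
  · simp only [Pi.add_apply, Pi.mul_apply]; ring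

open Complex in
lemma pdx_quad (a b c d : ℝ) (z : ℂ) :
    pdx (fun w : ℂ => a + b * w.re + c * w.im + d * (w.re ^ 2 + w.im ^ 2)) z
      = b + 2 * d * z.re := by
  rw [pdx, (hasFDerivAt_quad a b c d z).fderiv]
  simp

open Complex in
lemma pdy_quad (a b c d : ℝ) (z : ℂ) :
    pdy (fun w : ℂ => a + b * w.re + c * w.im + d * (w.re ^ 2 + w.im ^ 2)) z
      = c + 2 * d * z.im := by
  rw [pdy, (hasFDerivAt_quad a b c d z).fderiv]
  simp

lemma dotQ_eq (p : Fin 4 → ℝ) :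
    dotQ p = fun z : ℂ => (-p 0 + p 3) + (2 * p 1) * z.re + (2 * p 2) * z.im
      + (-(p 0) - p 3) * (z.re ^ 2 + z.im ^ 2) := by
  funext z
  simp [dotQ, Q, Fin.sum_univ_four]
  ring

/-- For `T = p·Q`, the function `−¼ T ΔT + ¼((∂ₓT)² + (∂_yT)²)` is constant, equal to
`B(p,p)`: the scalar curvature of the metric `4 dz dz̄ / T²` recovers the Minkowski
square of the translation `p`. -/
theorem curvature_of_dotQ (p : Fin 4 → ℝ) (z : ℂ) :
    -(1 / 4) * dotQ p z * (pdx (pdx (dotQ p)) z + pdy (pdy (dotQ p)) z)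
      + (1 / 4) * ((pdx (dotQ p) z) ^ 2 + (pdy (dotQ p) z) ^ 2) = mink p p := by
  set a := -p 0 + p 3 with ha
  set b := 2 * p 1 with hb
  set c := 2 * p 2 with hc
  set d := -(p 0) - p 3 with hd
  have h1 : pdx (dotQ p)
      = fun w : ℂ => b + (2 * d) * w.re + 0 * w.im + 0 * (w.re ^ 2 + w.im ^ 2) := by
    funext w
    rw [dotQ_eq, pdx_quad]
    ring
  have h2 : pdy (dotQ p)
      = fun w : ℂ => c + 0 * w.re + (2 * d) * w.im + 0 * (w.re ^ 2 + w.im ^ 2) := by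
    funext w
    rw [dotQ_eq, pdy_quad]
    ring
  have e0 : dotQ p z = a + b * z.re + c * z.im + d * (z.re ^ 2 + z.im ^ 2) :=
    congrFun (dotQ_eq p) z
  have e1 : pdx (dotQ p) z = b + 2 * d * z.re := by rw [dotQ_eq]; exact pdx_quad _ _ _ _ z
  have e2 : pdy (dotQ p) z = c + 2 * d * z.im := by rw [dotQ_eq]; exact pdy_quad _ _ _ _ z
  have e3 : pdx (pdx (dotQ p)) z = 2 * d + 2 * 0 * z.re := by
    rw [h1]; exact pdx_quad _ _ _ _ z
  have e4 : pdy (pdy (dotQ p)) z = 2 * d + 2 * 0 * z.im := by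
    rw [h2]; exact pdy_quad _ _ _ _ z
  rw [e0, e1, e2, e3, e4, mink, ha, hb, hc, hd]
  ring
end
end

section
/- Let f : ℝ² → ℝ be twice continuously differentiable. Then f satisfies ∂ₓₓf = ∂_yy f and ∂ₓ∂_y f = 0 at every point (equivalently, the second Wirtinger derivative ∂_z² f vanishes identically) if and only if there exist real constants a, b, c, d such that f(x,y) = a + b x + c y + d(x² + y²) for all (x,y); equivalently, if and only if f = p·Q for some p ∈ ℝ⁴. (This is the statement that the kernel of the two-dimensional Paneitz operator ∂_z²∂_z̄² on weight-one densities consists exactly of the translations.) -/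
noncomputable section

namespace PaneitzAux

open Complex

def Pf (a b c d : ℝ) (z : ℂ) : ℝ := a + b * z.re + c * z.im + d * (z.re ^ 2 + z.im ^ 2)

def Lf (b c d : ℝ) (z : ℂ) : ℂ →L[ℝ] ℝ :=
  (b + 2 * d * z.re) • Complex.reCLM + (c + 2 * d * z.im) • Complex.imCLM

lemma Lf_apply (b c d : ℝ) (z w : ℂ) :
    Lf b c d z w = (b + 2 * d * z.re) * w.re + (c + 2 * d * z.im) * w.im := by
  simp [Lf]

lemma hasFDerivAt_Pf (a b c d : ℝ) (z : ℂ) : HasFDerivAt (Pf a b c d) (Lf b c d z) z := by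
  have hre : HasFDerivAt (fun w : ℂ => w.re) (Complex.reCLM : ℂ →L[ℝ] ℝ) z :=
    Complex.reCLM.hasFDerivAt
  have him : HasFDerivAt (fun w : ℂ => w.im) (Complex.imCLM : ℂ →L[ℝ] ℝ) z :=
    Complex.imCLM.hasFDerivAt
  have h := (((hre.const_mul b).const_add a).add (him.const_mul c)).add
      (((hre.mul hre).add (him.mul him)).const_mul d)
  have hfun : (Pf a b c d) = fun y : ℂ =>
      a + b * y.re + c * y.im + d * (y.re * y.re + y.im * y.im) := by
    funext y; show a + b * y.re + c * y.im + d * (y.re ^ 2 + y.im ^ 2) = _; ring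
  rw [hfun]
  refine h.congr_fderiv ?_
  ext w
  simp [Lf]
  ring

lemma clm_ext_reim {T S : ℂ →L[ℝ] ℝ} (h1 : T 1 = S 1) (hI : T I = S I) : T = S := by
  ext w
  have hw : w = w.re • (1 : ℂ) + w.im • I := by
    apply Complex.ext <;> simp
  rw [hw, map_add, map_smul, map_smul, h1, hI, map_add, map_smul, map_smul]

lemma hasDerivAt_ofReal (y : ℝ) : HasDerivAt (fun t : ℝ => (t : ℂ)) 1 y := by
  exact Complex.ofRealCLM.hasDerivAt

lemma forward (f : ℂ → ℝ) (hf : ContDiff ℝ 2 f)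
    (h : ∀ z : ℂ, pdx (pdx f) z = pdy (pdy f) z ∧ pdx (pdy f) z = 0) :
    ∃ a b c d : ℝ, ∀ z : ℂ, f z = Pf a b c d z := by
  have hdf : Differentiable ℝ f := hf.differentiable (by norm_num)
  have hf' : ContDiff ℝ 1 (fderiv ℝ f) := hf.fderiv_right (by norm_num)
  have hdf' : Differentiable ℝ (fderiv ℝ f) := hf'.differentiable one_ne_zero
  set F : ℂ → ℂ →L[ℝ] ℂ →L[ℝ] ℝ := fun z => fderiv ℝ (fderiv ℝ f) z with hF
  -- directional second derivative
  have hdir : ∀ (v z : ℂ), HasFDerivAt (fun w => fderiv ℝ f w v)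
      ((ContinuousLinearMap.apply ℝ ℝ v).comp (F z)) z := fun v z =>
    ((ContinuousLinearMap.apply ℝ ℝ v).hasFDerivAt).comp z (hdf' z).hasFDerivAt
  have hsymm : ∀ (z v w : ℂ), F z v w = F z w v := fun z v w =>
    second_derivative_symmetric (fun y => (hdf y).hasFDerivAt) (hdf' z).hasFDerivAt v w
  -- identify the hypotheses
  have hxx : ∀ z, pdx (pdx f) z = F z 1 1 := fun z => by
    show fderiv ℝ (fun w => fderiv ℝ f w 1) z 1 = _
    rw [(hdir 1 z).fderiv]; rfl
  have hyy : ∀ z, pdy (pdy f) z = F z I I := fun z => by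
    show fderiv ℝ (fun w => fderiv ℝ f w I) z I = _
    rw [(hdir I z).fderiv]; rfl
  have hxy : ∀ z, pdx (pdy f) z = F z 1 I := fun z => by
    show fderiv ℝ (fun w => fderiv ℝ f w I) z 1 = _
    rw [(hdir I z).fderiv]; rfl
  have H11 : ∀ z, F z 1 1 = F z I I := fun z => by
    rw [← hxx, ← hyy]; exact (h z).1
  have H1I : ∀ z, F z 1 I = 0 := fun z => by rw [← hxy]; exact (h z).2
  have HI1 : ∀ z, F z I 1 = 0 := fun z => by rw [hsymm]; exact H1I z
  set u : ℂ → ℝ := fun z => fderiv ℝ f z 1 with hu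
  set v : ℂ → ℝ := fun z => fderiv ℝ f z I with hv
  -- u is constant on vertical lines
  have hu_vert : ∀ z : ℂ, u z = u z.re := by
    intro z
    have hline : ∀ t : ℝ, HasDerivAt (fun s : ℝ => (z.re : ℂ) + s * I) I t := fun t => by
      simpa using (((hasDerivAt_ofReal t).mul_const I).const_add (z.re : ℂ))
    have hder : ∀ t : ℝ, HasDerivAt (fun s : ℝ => u ((z.re : ℂ) + s * I)) 0 t := fun t => by
      have := (hdir 1 ((z.re : ℂ) + t * I)).comp_hasDerivAt t (hline t)
      simp [HI1] at this
      exact this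
    have hc := is_const_of_deriv_eq_zero (fun t => (hder t).differentiableAt)
      (fun t => (hder t).deriv) z.im 0
    simpa [Complex.re_add_im] using hc
  -- v is constant on horizontal lines
  have hv_horiz : ∀ z : ℂ, v z = v ((z.im : ℝ) * I) := by
    intro z
    have hline : ∀ t : ℝ, HasDerivAt (fun s : ℝ => (s : ℂ) + (z.im : ℂ) * I) 1 t := fun t =>
      (hasDerivAt_ofReal t).add_const _
    have hder : ∀ t : ℝ, HasDerivAt (fun s : ℝ => v ((s : ℂ) + (z.im : ℂ) * I)) 0 t := fun t => by
      have := (hdir I ((t : ℂ) + (z.im : ℂ) * I)).comp_hasDerivAt t (hline t)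
      simpa [Function.comp_def, H1I] using this
    have hc := is_const_of_deriv_eq_zero (fun t => (hder t).differentiableAt)
      (fun t => (hder t).deriv) z.re 0
    simpa [Complex.re_add_im] using hc
  -- derivative of ψ t = u t
  have hψ : ∀ z : ℂ, HasDerivAt (fun t : ℝ => u (t : ℂ)) (F z 1 1) z.re := by
    intro z
    have hline : HasDerivAt (fun s : ℝ => (s : ℂ) + (z.im : ℂ) * I) 1 z.re :=
      (hasDerivAt_ofReal z.re).add_const _
    have h1' := (hdir 1 ((z.re : ℂ) + (z.im : ℂ) * I)).comp_hasDerivAt z.re hline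
    have h1 : HasDerivAt (fun s : ℝ => u ((s : ℂ) + (z.im : ℂ) * I))
        (((ContinuousLinearMap.apply ℝ ℝ 1).comp (F ((z.re : ℂ) + (z.im : ℂ) * I))) 1) z.re := h1'
    have hfun : (fun s : ℝ => u ((s : ℂ) + (z.im : ℂ) * I)) = fun t : ℝ => u (t : ℂ) := by
      funext t
      rw [hu_vert ((t : ℂ) + (z.im : ℂ) * I)]
      norm_num
    rw [hfun] at h1
    simpa [Complex.re_add_im] using h1
  have h2d : ∀ z : ℂ, F z 1 1 = F (z.re : ℂ) 1 1 := fun z =>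
    (hψ z).unique (by simpa using hψ (z.re : ℂ))
  -- derivative of χ t = v (t*I)
  have hχ : ∀ z : ℂ, HasDerivAt (fun t : ℝ => v ((t : ℂ) * I)) (F z I I) z.im := by
    intro z
    have hline : HasDerivAt (fun s : ℝ => (z.re : ℂ) + (s : ℂ) * I) I z.im := by
      simpa using (((hasDerivAt_ofReal z.im).mul_const I).const_add (z.re : ℂ))
    have h1' := (hdir I ((z.re : ℂ) + (z.im : ℂ) * I)).comp_hasDerivAt z.im hline
    have h1 : HasDerivAt (fun s : ℝ => v ((z.re : ℂ) + (s : ℂ) * I))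
        (((ContinuousLinearMap.apply ℝ ℝ I).comp (F ((z.re : ℂ) + (z.im : ℂ) * I))) I) z.im := h1'
    have hfun : (fun s : ℝ => v ((z.re : ℂ) + (s : ℂ) * I)) = fun t : ℝ => v ((t : ℂ) * I) := by
      funext t
      rw [hv_horiz ((z.re : ℂ) + (t : ℂ) * I)]
      norm_num
    rw [hfun] at h1
    simpa [Complex.re_add_im] using h1
  have h2dI : ∀ z : ℂ, F z I I = F ((z.im : ℝ) * I) I I := fun z =>
    (hχ z).unique (by simpa using hχ ((z.im : ℂ) * I))
  set e : ℝ := F 0 1 1 with he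
  have hconst : ∀ z : ℂ, F z 1 1 = e := by
    intro z
    rw [H11 z, h2dI z, ← H11, h2d]
    norm_num
    exact he.symm
  -- u is affine: u z = u 0 + e * z.re
  have hψ' : ∀ t : ℝ, HasDerivAt (fun s : ℝ => u (s : ℂ)) e t := fun t => by
    have := hψ (t : ℂ)
    rw [hconst] at this
    simpa using this
  have hu_val : ∀ z : ℂ, u z = u 0 + e * z.re := by
    intro z
    have hθ : ∀ t : ℝ, HasDerivAt (fun s : ℝ => u (s : ℂ) - e * s) 0 t := fun t => by
      have := (hψ' t).sub ((hasDerivAt_id t).const_mul e)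
      simp at this
      exact this
    have hc := is_const_of_deriv_eq_zero (fun t => (hθ t).differentiableAt)
      (fun t => (hθ t).deriv) z.re 0
    rw [hu_vert z]
    push_cast at hc ⊢
    linarith
  have hχ' : ∀ t : ℝ, HasDerivAt (fun s : ℝ => v ((s : ℂ) * I)) e t := fun t => by
    have := hχ ((t : ℂ) * I)
    rw [← H11, hconst] at this
    simpa using this
  have hv_val : ∀ z : ℂ, v z = v 0 + e * z.im := by
    intro z
    have hθ : ∀ t : ℝ, HasDerivAt (fun s : ℝ => v ((s : ℂ) * I) - e * s) 0 t := fun t => by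
      have := (hχ' t).sub ((hasDerivAt_id t).const_mul e)
      simp at this
      exact this
    have hc := is_const_of_deriv_eq_zero (fun t => (hθ t).differentiableAt)
      (fun t => (hθ t).deriv) z.im 0
    simp only [Complex.ofReal_zero, zero_mul] at hc
    rw [hv_horiz z]
    norm_num at hc
    linarith
  refine ⟨f 0, u 0, v 0, e / 2, ?_⟩
  have hfd : ∀ z : ℂ, fderiv ℝ f z = Lf (u 0) (v 0) (e / 2) z := by
    intro z
    apply clm_ext_reim
    · rw [Lf_apply]
      show u z = _
      rw [hu_val z]
      simp only [Complex.one_re, Complex.one_im, mul_one, mul_zero, add_zero]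
      ring
    · rw [Lf_apply]
      show v z = _
      rw [hv_val z]
      simp only [Complex.I_re, Complex.I_im, mul_one, mul_zero, zero_add, add_zero]
      ring
  have hg : ∀ z : ℂ, HasFDerivAt (fun w => f w - Pf (f 0) (u 0) (v 0) (e / 2) w) (0 : ℂ →L[ℝ] ℝ) z := by
    intro z
    have := (hdf z).hasFDerivAt.sub (hasFDerivAt_Pf (f 0) (u 0) (v 0) (e / 2) z)
    rwa [hfd z, sub_self] at this
  intro z
  have hc := is_const_of_fderiv_eq_zero (𝕜 := ℝ) (fun w => (hg w).differentiableAt)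
    (fun w => (hg w).fderiv) z 0
  have hP0 : Pf (f 0) (u 0) (v 0) (e / 2) 0 = f 0 := by simp [Pf]
  rw [hP0] at hc
  linarith

lemma pdx_Pf (a b c d : ℝ) (z : ℂ) : pdx (Pf a b c d) z = b + 2 * d * z.re := by
  show fderiv ℝ (Pf a b c d) z 1 = _
  rw [(hasFDerivAt_Pf a b c d z).fderiv, Lf_apply]
  simp

lemma pdy_Pf (a b c d : ℝ) (z : ℂ) : pdy (Pf a b c d) z = c + 2 * d * z.im := by
  show fderiv ℝ (Pf a b c d) z I = _
  rw [(hasFDerivAt_Pf a b c d z).fderiv, Lf_apply]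
  simp

lemma backward (f : ℂ → ℝ) (a b c d : ℝ) (h : ∀ z : ℂ, f z = Pf a b c d z) :
    ∀ z : ℂ, pdx (pdx f) z = pdy (pdy f) z ∧ pdx (pdy f) z = 0 := by
  have hfP : f = Pf a b c d := funext h
  have h1 : pdx f = Pf b (2 * d) 0 0 := by
    funext z
    rw [hfP, pdx_Pf]
    show _ = b + 2 * d * z.re + 0 * z.im + 0 * (z.re ^ 2 + z.im ^ 2)
    ring
  have h2 : pdy f = Pf c 0 (2 * d) 0 := by
    funext z
    rw [hfP, pdy_Pf]
    show _ = c + 0 * z.re + 2 * d * z.im + 0 * (z.re ^ 2 + z.im ^ 2)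
    ring
  intro z
  rw [h1, h2, pdx_Pf, pdy_Pf, pdx_Pf]
  constructor <;> ring

lemma dotQ_eq (p : Fin 4 → ℝ) (z : ℂ) :
    dotQ p z = Pf (p 3 - p 0) (2 * p 1) (2 * p 2) (-(p 0) - p 3) z := by
  simp [dotQ, Q, Pf, Fin.sum_univ_four]
  ring

end PaneitzAux

/-- A `C²` function `f` on `ℝ²` satisfies `∂ₓₓf = ∂_yyf` and `∂ₓ∂_yf = 0` everywhere
(i.e. `∂_z²f ≡ 0`) iff `f(x,y) = a + bx + cy + d(x²+y²)` for some constants, iff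
`f = p·Q` for some `p ∈ ℝ⁴`: the kernel of the 2d Paneitz operator on weight-one
densities consists exactly of the translations. -/
theorem paneitz_kernel (f : ℂ → ℝ) (hf : ContDiff ℝ 2 f) :
    ((∀ z : ℂ, pdx (pdx f) z = pdy (pdy f) z ∧ pdx (pdy f) z = 0) ↔
      ∃ a b c d : ℝ, ∀ z : ℂ, f z = a + b * z.re + c * z.im + d * (z.re ^ 2 + z.im ^ 2)) ∧
    ((∀ z : ℂ, pdx (pdx f) z = pdy (pdy f) z ∧ pdx (pdy f) z = 0) ↔
      ∃ p : Fin 4 → ℝ, ∀ z : ℂ, f z = dotQ p z) := by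
  constructor
  · constructor
    · exact fun h => PaneitzAux.forward f hf h
    · rintro ⟨a, b, c, d, hp⟩
      exact PaneitzAux.backward f a b c d hp
  · constructor
    · intro h
      obtain ⟨a, b, c, d, hp⟩ := PaneitzAux.forward f hf h
      refine ⟨![-(a + d) / 2, b / 2, c / 2, (a - d) / 2], fun z => ?_⟩
      rw [hp z, PaneitzAux.dotQ_eq]
      simp [PaneitzAux.Pf]
      ring
    · rintro ⟨p, hp⟩
      refine PaneitzAux.backward f (p 3 - p 0) (2 * p 1) (2 * p 2) (-(p 0) - p 3) fun z => ?_
      rw [hp z, PaneitzAux.dotQ_eq]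
end
end

section
/- Let T be a smooth weight-one density. Then the functions (x,y) ↦ T·Δ²T and (x,y) ↦ (∂ₓₓT − ∂_yyT)² + 4(∂ₓ∂_yT)² are both Lebesgue integrable on ℝ², and ∫_{ℝ²} T·Δ²T dA = ∫_{ℝ²} [(∂ₓₓT − ∂_yyT)² + 4(∂ₓ∂_yT)²] dA. In particular ∫_{ℝ²} T·Δ²T dA ≥ 0. (Since Δ² = 16 ∂_z²∂_z̄², this is the identity ⟨∂_z²∂_z̄²T, T⟩ = ∫ |∂_z²T|² exhibiting the SL(2,ℂ)-invariant inner product on supertranslations as positive semi-definite.) -/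
open MeasureTheory

noncomputable section

/-- The flat Laplacian `Δ = ∂ₓₓ + ∂_yy` on `ℝ²`. -/
def lap (f : ℂ → ℝ) (z : ℂ) : ℝ := pdx (pdx f) z + pdy (pdy f) z

/-- A smooth weight-one density (supertranslation): a smooth `T : ℂ → ℝ` admitting a
smooth expression `T̂` in the chart at infinity with `T(z) = |z|² T̂(1/z)` for `z ≠ 0`. -/
def SmoothWeightOneDensity (T : ℂ → ℝ) : Prop :=
  ContDiff ℝ (⊤ : ℕ∞) T ∧ ∃ That : ℂ → ℝ, ContDiff ℝ (⊤ : ℕ∞) That ∧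
    ∀ z : ℂ, z ≠ 0 → T z = Complex.normSq z * That z⁻¹


namespace PZaux

open scoped ContDiff

/-- the smoothness exponent `∞` -/
def iSmooth : WithTop ℕ∞ := ∞

lemma one_le_infty : (1 : WithTop ℕ∞) ≤ ∞ := by exact_mod_cast le_top

lemma infty_add_one_le : ∞ + 1 ≤ (∞ : WithTop ℕ∞) := le_rfl



lemma clm_ext {A B : ℂ →L[ℝ] ℂ} (h1 : A 1 = B 1) (hI : A Complex.I = B Complex.I) : A = B := by
  ext v
  have hv : v = v.re • (1 : ℂ) + v.im • Complex.I := by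
    rw [Complex.real_smul, Complex.real_smul, mul_one, Complex.re_add_im]
  rw [hv]
  simp only [ContinuousLinearMap.map_add, ContinuousLinearMap.map_smul, h1, hI]

def wlin (p q : ℂ) : ℂ →L[ℝ] ℂ :=
  p • (ContinuousLinearMap.id ℝ ℂ) + q • (Complex.conjCLE.toContinuousLinearMap)

@[simp] lemma wlin_apply (p q v : ℂ) : wlin p q v = p * v + q * (starRingEnd ℂ) v := by
  simp [wlin, Complex.conjCLE_apply, smul_eq_mul]

def wd (f : ℂ → ℂ) (z : ℂ) : ℂ :=
  (fderiv ℝ f z 1 - Complex.I * fderiv ℝ f z Complex.I) / 2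

def wdb (f : ℂ → ℂ) (z : ℂ) : ℂ :=
  (fderiv ℝ f z 1 + Complex.I * fderiv ℝ f z Complex.I) / 2

lemma wd_add_wdb (f : ℂ → ℂ) (z : ℂ) : wd f z + wdb f z = fderiv ℝ f z 1 := by
  rw [wd, wdb]; ring

lemma I_wd_sub_wdb (f : ℂ → ℂ) (z : ℂ) :
    Complex.I * wd f z - Complex.I * wdb f z = fderiv ℝ f z Complex.I := by
  rw [wd, wdb]
  linear_combination (-(fderiv ℝ f z Complex.I)) * Complex.I_sq

def HasWD (f : ℂ → ℂ) (z p q : ℂ) : Prop := HasFDerivAt f (wlin p q) z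

lemma HasWD.wd_eq {f : ℂ → ℂ} {z p q : ℂ} (h : HasWD f z p q) : wd f z = p := by
  have hd := HasFDerivAt.fderiv h
  rw [wd, hd]
  simp only [wlin_apply, map_one, Complex.conj_I, mul_one]
  linear_combination ((q - p)/2) * Complex.I_sq

lemma HasWD.wdb_eq {f : ℂ → ℂ} {z p q : ℂ} (h : HasWD f z p q) : wdb f z = q := by
  have hd := HasFDerivAt.fderiv h
  rw [wdb, hd]
  simp only [wlin_apply, map_one, Complex.conj_I, mul_one]
  linear_combination ((p - q)/2) * Complex.I_sq

lemma DifferentiableAt.hasWD {f : ℂ → ℂ} {z : ℂ} (h : DifferentiableAt ℝ f z) :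
    HasWD f z (wd f z) (wdb f z) := by
  have h' := h.hasFDerivAt
  have e : wlin (wd f z) (wdb f z) = fderiv ℝ f z := by
    apply clm_ext
    · simpa using wd_add_wdb f z
    · simp only [wlin_apply, Complex.conj_I]
      linear_combination I_wd_sub_wdb f z
  rw [HasWD, e]
  exact h'

lemma wd_congr {f g : ℂ → ℂ} {z : ℂ} (he : f =ᶠ[nhds z] g) : wd f z = wd g z := by
  rw [wd, wd, he.fderiv_eq]

lemma wdb_congr {f g : ℂ → ℂ} {z : ℂ} (he : f =ᶠ[nhds z] g) : wdb f z = wdb g z := by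
  rw [wdb, wdb, he.fderiv_eq]

lemma hasWD_const (z c : ℂ) : HasWD (fun _ => c) z 0 0 := by
  have e : wlin 0 0 = (0 : ℂ →L[ℝ] ℂ) := by apply clm_ext <;> simp
  rw [HasWD, e]
  exact hasFDerivAt_const c z

lemma hasWD_id (z : ℂ) : HasWD (fun w => w) z 1 0 := by
  have e : wlin 1 0 = ContinuousLinearMap.id ℝ ℂ := by apply clm_ext <;> simp
  rw [HasWD, e]
  exact hasFDerivAt_id z

lemma hasWD_conj (z : ℂ) : HasWD (fun w => (starRingEnd ℂ) w) z 0 1 := by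
  have e : wlin 0 1 = Complex.conjCLE.toContinuousLinearMap := by
    apply clm_ext <;> simp
  rw [HasWD, e]
  exact Complex.conjCLE.toContinuousLinearMap.hasFDerivAt

lemma HasWD.add {f g : ℂ → ℂ} {z p₁ q₁ p₂ q₂ : ℂ} (hf : HasWD f z p₁ q₁)
    (hg : HasWD g z p₂ q₂) : HasWD (fun w => f w + g w) z (p₁ + p₂) (q₁ + q₂) := by
  have h := HasFDerivAt.add hf hg
  have e : wlin (p₁ + p₂) (q₁ + q₂) = wlin p₁ q₁ + wlin p₂ q₂ := by
    apply clm_ext <;> simp <;> ring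
  rw [HasWD, e]
  exact h

lemma HasWD.sub {f g : ℂ → ℂ} {z p₁ q₁ p₂ q₂ : ℂ} (hf : HasWD f z p₁ q₁)
    (hg : HasWD g z p₂ q₂) : HasWD (fun w => f w - g w) z (p₁ - p₂) (q₁ - q₂) := by
  have h := HasFDerivAt.sub hf hg
  have e : wlin (p₁ - p₂) (q₁ - q₂) = wlin p₁ q₁ - wlin p₂ q₂ := by
    apply clm_ext <;> simp <;> ring
  rw [HasWD, e]
  exact h

lemma HasWD.mul {f g : ℂ → ℂ} {z p₁ q₁ p₂ q₂ : ℂ} (hf : HasWD f z p₁ q₁)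
    (hg : HasWD g z p₂ q₂) :
    HasWD (fun w => f w * g w) z (p₁ * g z + f z * p₂) (q₁ * g z + f z * q₂) := by
  have h := HasFDerivAt.mul hf hg
  have e : wlin (p₁ * g z + f z * p₂) (q₁ * g z + f z * q₂)
      = f z • wlin p₂ q₂ + g z • wlin p₁ q₁ := by
    apply clm_ext <;> simp [smul_eq_mul] <;> ring
  rw [HasWD, e]
  exact h

lemma HasWD.const_mul {f : ℂ → ℂ} {z p q : ℂ} (c : ℂ) (hf : HasWD f z p q) :
    HasWD (fun w => c * f w) z (c * p) (c * q) := by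
  have h := (hasWD_const z c).mul hf
  simpa using h

lemma HasWD.comp_inv {g : ℂ → ℂ} {z p q : ℂ} (hz : z ≠ 0) (h : HasWD g z⁻¹ p q) :
    HasWD (fun w => g w⁻¹) z (-(z ^ 2)⁻¹ * p) (-((starRingEnd ℂ) z ^ 2)⁻¹ * q) := by
  have hi : HasFDerivAt (fun w : ℂ => w⁻¹)
      (ContinuousLinearMap.restrictScalars ℝ
        ((1 : ℂ →L[ℂ] ℂ).smulRight (-(z ^ 2)⁻¹))) z :=
    ((hasDerivAt_inv hz).hasFDerivAt).restrictScalars ℝ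
  have hcomp := (HasFDerivAt.comp z h hi : HasFDerivAt (fun w => g w⁻¹) _ z)
  have e : wlin (-(z ^ 2)⁻¹ * p) (-((starRingEnd ℂ) z ^ 2)⁻¹ * q)
      = (wlin p q).comp (ContinuousLinearMap.restrictScalars ℝ
          ((1 : ℂ →L[ℂ] ℂ).smulRight (-(z ^ 2)⁻¹))) := by
    apply clm_ext <;>
      simp [smul_eq_mul, Complex.conj_I, map_inv₀, map_pow, map_neg, map_mul] <;> ring
  rw [HasWD, e]
  exact hcomp



lemma contDiff_wd {f : ℂ → ℂ} (hf : ContDiff ℝ ∞ f) : ContDiff ℝ ∞ (wd f) :=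
  (( (hf.fderiv_right infty_add_one_le).clm_apply contDiff_const).sub
    (contDiff_const.mul ((hf.fderiv_right infty_add_one_le).clm_apply contDiff_const))).div_const 2

lemma contDiff_wdb {f : ℂ → ℂ} (hf : ContDiff ℝ ∞ f) : ContDiff ℝ ∞ (wdb f) :=
  (( (hf.fderiv_right infty_add_one_le).clm_apply contDiff_const).add
    (contDiff_const.mul ((hf.fderiv_right infty_add_one_le).clm_apply contDiff_const))).div_const 2

lemma fderiv_apply_one_of_comb {f : ℂ → ℂ} (hf : ContDiff ℝ ∞ f) (z v u : ℂ) :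
    fderiv ℝ (fun y => fderiv ℝ f y u) z v = fderiv ℝ (fderiv ℝ f) z v u := by
  have h2 : DifferentiableAt ℝ (fderiv ℝ f) z :=
    ((hf.fderiv_right infty_add_one_le).differentiable (by simp)).differentiableAt
  rw [fderiv_clm_apply h2 (differentiableAt_const u)]
  simp

lemma fderiv_wdb_apply {f : ℂ → ℂ} (hf : ContDiff ℝ ∞ f) (z v : ℂ) :
    fderiv ℝ (wdb f) z v
      = (fderiv ℝ (fderiv ℝ f) z v 1 + Complex.I * fderiv ℝ (fderiv ℝ f) z v Complex.I) / 2 := by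
  have h2 : DifferentiableAt ℝ (fderiv ℝ f) z :=
    ((hf.fderiv_right infty_add_one_le).differentiable (by simp)).differentiableAt
  have d1 : DifferentiableAt ℝ (fun y => fderiv ℝ f y 1) z :=
    h2.clm_apply (differentiableAt_const _)
  have dI : DifferentiableAt ℝ (fun y => fderiv ℝ f y Complex.I) z :=
    h2.clm_apply (differentiableAt_const _)
  have e : wdb f = fun y => (2:ℂ)⁻¹ * (fderiv ℝ f y 1 + Complex.I * fderiv ℝ f y Complex.I) := by
    funext y; rw [wdb]; ring
  rw [e, fderiv_const_mul (by exact d1.add (dI.const_mul _)),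
    fderiv_fun_add d1 (dI.const_mul _), fderiv_const_mul dI]
  simp only [ContinuousLinearMap.coe_smul', Pi.smul_apply, ContinuousLinearMap.add_apply,
    smul_eq_mul, fderiv_apply_one_of_comb hf]
  ring

lemma fderiv_wd_apply {f : ℂ → ℂ} (hf : ContDiff ℝ ∞ f) (z v : ℂ) :
    fderiv ℝ (wd f) z v
      = (fderiv ℝ (fderiv ℝ f) z v 1 - Complex.I * fderiv ℝ (fderiv ℝ f) z v Complex.I) / 2 := by
  have h2 : DifferentiableAt ℝ (fderiv ℝ f) z :=
    ((hf.fderiv_right infty_add_one_le).differentiable (by simp)).differentiableAt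
  have d1 : DifferentiableAt ℝ (fun y => fderiv ℝ f y 1) z :=
    h2.clm_apply (differentiableAt_const _)
  have dI : DifferentiableAt ℝ (fun y => fderiv ℝ f y Complex.I) z :=
    h2.clm_apply (differentiableAt_const _)
  have e : wd f = fun y => (2:ℂ)⁻¹ * (fderiv ℝ f y 1 - Complex.I * fderiv ℝ f y Complex.I) := by
    funext y; rw [wd]; ring
  rw [e, fderiv_const_mul (by exact d1.sub (dI.const_mul _)),
    fderiv_fun_sub d1 (dI.const_mul _), fderiv_const_mul dI]
  simp only [ContinuousLinearMap.coe_smul', Pi.smul_apply, ContinuousLinearMap.sub_apply,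
    smul_eq_mul, fderiv_apply_one_of_comb hf]
  ring

/-- mixed Wirtinger derivatives commute for smooth functions -/
lemma wd_wdb_comm {f : ℂ → ℂ} (hf : ContDiff ℝ ∞ f) (z : ℂ) :
    wd (wdb f) z = wdb (wd f) z := by
  have h2 : DifferentiableAt ℝ (fderiv ℝ f) z :=
    ((hf.fderiv_right infty_add_one_le).differentiable (by simp)).differentiableAt
  have hsymm : ∀ u v : ℂ, fderiv ℝ (fderiv ℝ f) z u v = fderiv ℝ (fderiv ℝ f) z v u := by
    intro u v
    exact second_derivative_symmetric
      (fun y => ((hf.differentiable (by simp)) y).hasFDerivAt) h2.hasFDerivAt u v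
  rw [wd, wdb, fderiv_wdb_apply hf, fderiv_wdb_apply hf, fderiv_wd_apply hf, fderiv_wd_apply hf,
    hsymm 1 Complex.I]
  ring



def cf (f : ℂ → ℝ) : ℂ → ℂ := fun z => (f z : ℂ)

lemma contDiff_cf {f : ℂ → ℝ} (hf : ContDiff ℝ ∞ f) : ContDiff ℝ ∞ (cf f) :=
  Complex.ofRealCLM.contDiff.comp hf

lemma contDiff_pdx {f : ℂ → ℝ} (hf : ContDiff ℝ ∞ f) : ContDiff ℝ ∞ (pdx f) :=
  (hf.fderiv_right infty_add_one_le).clm_apply contDiff_const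

lemma contDiff_pdy {f : ℂ → ℝ} (hf : ContDiff ℝ ∞ f) : ContDiff ℝ ∞ (pdy f) :=
  (hf.fderiv_right infty_add_one_le).clm_apply contDiff_const

lemma fderiv_cf {f : ℂ → ℝ} {z : ℂ} (hf : DifferentiableAt ℝ f z) (v : ℂ) :
    fderiv ℝ (cf f) z v = ((fderiv ℝ f z v : ℝ) : ℂ) := by
  have h := (Complex.ofRealCLM.hasFDerivAt.comp z hf.hasFDerivAt).fderiv
  have : cf f = Complex.ofRealCLM ∘ f := rfl
  rw [this, h]
  rfl

-- linearity of wd/wdb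
lemma wd_add {f g : ℂ → ℂ} {z : ℂ} (hf : DifferentiableAt ℝ f z) (hg : DifferentiableAt ℝ g z) :
    wd (fun y => f y + g y) z = wd f z + wd g z := by
  rw [wd, wd, wd, fderiv_fun_add hf hg]; simp; ring
lemma wdb_add {f g : ℂ → ℂ} {z : ℂ} (hf : DifferentiableAt ℝ f z) (hg : DifferentiableAt ℝ g z) :
    wdb (fun y => f y + g y) z = wdb f z + wdb g z := by
  rw [wdb, wdb, wdb, fderiv_fun_add hf hg]; simp; ring
lemma wd_sub {f g : ℂ → ℂ} {z : ℂ} (hf : DifferentiableAt ℝ f z) (hg : DifferentiableAt ℝ g z) :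
    wd (fun y => f y - g y) z = wd f z - wd g z := by
  rw [wd, wd, wd, fderiv_fun_sub hf hg]; simp; ring
lemma wdb_sub {f g : ℂ → ℂ} {z : ℂ} (hf : DifferentiableAt ℝ f z) (hg : DifferentiableAt ℝ g z) :
    wdb (fun y => f y - g y) z = wdb f z - wdb g z := by
  rw [wdb, wdb, wdb, fderiv_fun_sub hf hg]; simp; ring
lemma wd_const_mul {f : ℂ → ℂ} {z : ℂ} (c : ℂ) (hf : DifferentiableAt ℝ f z) :
    wd (fun y => c * f y) z = c * wd f z := by
  rw [wd, wd, fderiv_const_mul hf]; simp; ring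
lemma wdb_const_mul {f : ℂ → ℂ} {z : ℂ} (c : ℂ) (hf : DifferentiableAt ℝ f z) :
    wdb (fun y => c * f y) z = c * wdb f z := by
  rw [wdb, wdb, fderiv_const_mul hf]; simp; ring

lemma wdb_cf_conj {f : ℂ → ℝ} {z : ℂ} (hf : DifferentiableAt ℝ f z) :
    wdb (cf f) z = (starRingEnd ℂ) (wd (cf f) z) := by
  rw [wd, wdb, fderiv_cf hf, fderiv_cf hf]
  simp [Complex.conj_ofReal, Complex.conj_I, map_ofNat]

lemma wdb_conj_comp {g : ℂ → ℂ} {z : ℂ} (hg : DifferentiableAt ℝ g z) :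
    wdb (fun w => (starRingEnd ℂ) (g w)) z = (starRingEnd ℂ) (wd g z) := by
  have h := ((Complex.conjCLE.toContinuousLinearMap.hasFDerivAt).comp z hg.hasFDerivAt).fderiv
  have e : (fun w => (starRingEnd ℂ) (g w)) = Complex.conjCLE.toContinuousLinearMap ∘ g := rfl
  rw [wdb, wd, e, h]
  simp [Complex.conj_I, map_ofNat]

lemma cf_pdx {f : ℂ → ℝ} (hf : ContDiff ℝ ∞ f) :
    cf (pdx f) = fun z => wd (cf f) z + wdb (cf f) z := by
  funext z
  have : cf (pdx f) z = fderiv ℝ (cf f) z 1 := by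
    rw [fderiv_cf ((hf.differentiable (by simp)) z)]; rfl
  rw [this, wd, wdb]; ring

lemma cf_pdy {f : ℂ → ℝ} (hf : ContDiff ℝ ∞ f) :
    cf (pdy f) = fun z => Complex.I * wd (cf f) z - Complex.I * wdb (cf f) z := by
  funext z
  have : cf (pdy f) z = fderiv ℝ (cf f) z Complex.I := by
    rw [fderiv_cf ((hf.differentiable (by simp)) z)]; rfl
  rw [this, wd, wdb]
  linear_combination (fderiv ℝ (cf f) z Complex.I) * Complex.I_sq

lemma c_pdxx {f : ℂ → ℝ} (hf : ContDiff ℝ ∞ f) (z : ℂ) :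
    ((pdx (pdx f) z : ℝ) : ℂ) = wd (wd (cf f)) z + wd (wdb (cf f)) z
      + wdb (wd (cf f)) z + wdb (wdb (cf f)) z := by
  have h1 : ((pdx (pdx f) z : ℝ) : ℂ) = cf (pdx (pdx f)) z := rfl
  have dw : DifferentiableAt ℝ (wd (cf f)) z :=
    ((contDiff_wd (contDiff_cf hf)).differentiable (by simp)).differentiableAt
  have dwb : DifferentiableAt ℝ (wdb (cf f)) z :=
    ((contDiff_wdb (contDiff_cf hf)).differentiable (by simp)).differentiableAt
  rw [h1, cf_pdx (contDiff_pdx hf), cf_pdx hf]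
  beta_reduce
  rw [wd_add dw dwb, wdb_add dw dwb]
  ring

lemma c_pdyy {f : ℂ → ℝ} (hf : ContDiff ℝ ∞ f) (z : ℂ) :
    ((pdy (pdy f) z : ℝ) : ℂ) = -wd (wd (cf f)) z + wd (wdb (cf f)) z
      + wdb (wd (cf f)) z - wdb (wdb (cf f)) z := by
  have h1 : ((pdy (pdy f) z : ℝ) : ℂ) = cf (pdy (pdy f)) z := rfl
  have dw : DifferentiableAt ℝ (wd (cf f)) z :=
    ((contDiff_wd (contDiff_cf hf)).differentiable (by simp)).differentiableAt
  have dwb : DifferentiableAt ℝ (wdb (cf f)) z :=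
    ((contDiff_wdb (contDiff_cf hf)).differentiable (by simp)).differentiableAt
  rw [h1, cf_pdy (contDiff_pdy hf), cf_pdy hf]
  beta_reduce
  rw [wd_sub (dw.const_mul _) (dwb.const_mul _), wdb_sub (dw.const_mul _) (dwb.const_mul _),
    wd_const_mul _ dw, wd_const_mul _ dwb, wdb_const_mul _ dw, wdb_const_mul _ dwb]
  linear_combination (wd (wd (cf f)) z - wd (wdb (cf f)) z - wdb (wd (cf f)) z + wdb (wdb (cf f)) z) * Complex.I_sq

lemma c_pdxy {f : ℂ → ℝ} (hf : ContDiff ℝ ∞ f) (z : ℂ) :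
    ((pdx (pdy f) z : ℝ) : ℂ) = Complex.I * wd (wd (cf f)) z - Complex.I * wd (wdb (cf f)) z
      + Complex.I * wdb (wd (cf f)) z - Complex.I * wdb (wdb (cf f)) z := by
  have h1 : ((pdx (pdy f) z : ℝ) : ℂ) = cf (pdx (pdy f)) z := rfl
  have dw : DifferentiableAt ℝ (wd (cf f)) z :=
    ((contDiff_wd (contDiff_cf hf)).differentiable (by simp)).differentiableAt
  have dwb : DifferentiableAt ℝ (wdb (cf f)) z :=
    ((contDiff_wdb (contDiff_cf hf)).differentiable (by simp)).differentiableAt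
  rw [h1, cf_pdx (contDiff_pdy hf), cf_pdy hf]
  beta_reduce
  rw [wd_sub (dw.const_mul _) (dwb.const_mul _), wdb_sub (dw.const_mul _) (dwb.const_mul _),
    wd_const_mul _ dw, wd_const_mul _ dwb, wdb_const_mul _ dw, wdb_const_mul _ dwb]
  ring

lemma c_lap {f : ℂ → ℝ} (hf : ContDiff ℝ ∞ f) (z : ℂ) :
    ((lap f z : ℝ) : ℂ) = 4 * wdb (wd (cf f)) z := by
  have : ((lap f z : ℝ) : ℂ) = ((pdx (pdx f) z : ℝ) : ℂ) + ((pdy (pdy f) z : ℝ) : ℂ) := by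
    rw [lap]; push_cast; ring
  rw [this, c_pdxx hf, c_pdyy hf, wd_wdb_comm (contDiff_cf hf)]
  ring


/-! ### chart at infinity computations -/

section chart
variable (H : ℂ → ℂ)

def A0 : ℂ → ℂ := fun z => z * (starRingEnd ℂ) z * H z⁻¹
def A1 : ℂ → ℂ := fun z => (starRingEnd ℂ) z * H z⁻¹ - (starRingEnd ℂ) z * z⁻¹ * wd H z⁻¹
def A1b : ℂ → ℂ := fun z => z * H z⁻¹ - z * (starRingEnd ℂ) (z⁻¹) * wdb H z⁻¹
def A2 : ℂ → ℂ := fun z => H z⁻¹ - (starRingEnd ℂ) (z⁻¹) * wdb H z⁻¹ - z⁻¹ * wd H z⁻¹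
  + z⁻¹ * (starRingEnd ℂ) (z⁻¹) * wdb (wd H) z⁻¹
def A3 : ℂ → ℂ := fun z => z⁻¹ * z⁻¹ * z⁻¹ * wd (wd H) z⁻¹
  - z⁻¹ * z⁻¹ * z⁻¹ * (starRingEnd ℂ) (z⁻¹) * wd (wdb (wd H)) z⁻¹
def A4 : ℂ → ℂ := fun z => (z⁻¹)^3 * ((starRingEnd ℂ) (z⁻¹))^3 * wdb (wd (wdb (wd H))) z⁻¹
def M2 : ℂ → ℂ := fun z => (starRingEnd ℂ) z * (z⁻¹ * z⁻¹ * z⁻¹) * wd (wd H) z⁻¹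
def MX : ℂ → ℂ := fun z => (z⁻¹)^3 * wd (wd H) z⁻¹
  - (z⁻¹)^3 * (starRingEnd ℂ) (z⁻¹) * wdb (wd (wd H)) z⁻¹

variable {H}

lemma hasWD_inv {z : ℂ} (hz : z ≠ 0) : HasWD (fun w => w⁻¹) z (-(z^2)⁻¹) 0 := by
  simpa using (hasWD_id z⁻¹).comp_inv hz

lemma hasWD_cinv {z : ℂ} (hz : z ≠ 0) :
    HasWD (fun w => (starRingEnd ℂ) (w⁻¹)) z 0 (-(((starRingEnd ℂ) z)^2)⁻¹) := by
  simpa using (hasWD_conj z⁻¹).comp_inv hz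

lemma hasWD_K (K : ℂ → ℂ) (hK : ContDiff ℝ ∞ K) {z : ℂ} (hz : z ≠ 0) :
    HasWD (fun w => K w⁻¹) z (-(z^2)⁻¹ * wd K z⁻¹)
      (-((starRingEnd ℂ) z ^ 2)⁻¹ * wdb K z⁻¹) :=
  (DifferentiableAt.hasWD ((hK.differentiable (by simp)) z⁻¹)).comp_inv hz

lemma wd_A0 (hH : ContDiff ℝ ∞ H) {z : ℂ} (hz : z ≠ 0) : wd (A0 H) z = A1 H z := by
  have hzw : z * z⁻¹ = 1 := mul_inv_cancel₀ hz
  have e := HasWD.wd_eq (((hasWD_id z).mul (hasWD_conj z)).mul (hasWD_K H hH hz))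
  refine Eq.trans e ?_
  beta_reduce
  simp only [A1, pow_two, mul_inv, ← map_inv₀]
  linear_combination (-(starRingEnd ℂ) z * wd H z⁻¹ * z⁻¹) * hzw

lemma wdb_A1 (hH : ContDiff ℝ ∞ H) {z : ℂ} (hz : z ≠ 0) : wdb (A1 H) z = A2 H z := by
  have hzw : z * z⁻¹ = 1 := mul_inv_cancel₀ hz
  have hc : (starRingEnd ℂ) z * (starRingEnd ℂ) (z⁻¹) = 1 := by
    rw [← map_mul, hzw, map_one]
  have e := HasWD.wdb_eq ((((hasWD_conj z).mul (hasWD_K H hH hz))).sub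
      (((hasWD_conj z).mul (hasWD_inv hz)).mul (hasWD_K (wd H) (contDiff_wd hH) hz)))
  refine Eq.trans e ?_
  beta_reduce
  simp only [A1, A2, pow_two, mul_inv, ← map_inv₀]
  linear_combination (z⁻¹ * (starRingEnd ℂ) (z⁻¹) * wdb (wd H) z⁻¹
    - (starRingEnd ℂ) (z⁻¹) * wdb H z⁻¹) * hc

lemma wd_A1 (hH : ContDiff ℝ ∞ H) {z : ℂ} (hz : z ≠ 0) : wd (A1 H) z = M2 H z := by
  have e := HasWD.wd_eq ((((hasWD_conj z).mul (hasWD_K H hH hz))).sub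
      (((hasWD_conj z).mul (hasWD_inv hz)).mul (hasWD_K (wd H) (contDiff_wd hH) hz)))
  refine Eq.trans e ?_
  beta_reduce
  simp only [A1, M2, pow_two, mul_inv, ← map_inv₀]
  ring

lemma wdb_M2 (hH : ContDiff ℝ ∞ H) {z : ℂ} (hz : z ≠ 0) : wdb (M2 H) z = MX H z := by
  have hzw : z * z⁻¹ = 1 := mul_inv_cancel₀ hz
  have hc : (starRingEnd ℂ) z * (starRingEnd ℂ) (z⁻¹) = 1 := by
    rw [← map_mul, hzw, map_one]
  have e := HasWD.wdb_eq (((hasWD_conj z).mul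
      (((hasWD_inv hz).mul (hasWD_inv hz)).mul (hasWD_inv hz))).mul
      (hasWD_K (wd (wd H)) (contDiff_wd (contDiff_wd hH)) hz))
  refine Eq.trans e ?_
  beta_reduce
  simp only [M2, MX, pow_two, mul_inv, ← map_inv₀]
  linear_combination (-(z⁻¹ * z⁻¹ * z⁻¹ * (starRingEnd ℂ) (z⁻¹) * wdb (wd (wd H)) z⁻¹)) * hc

lemma wd_A2 (hH : ContDiff ℝ ∞ H) {z : ℂ} (hz : z ≠ 0) : wd (A2 H) z = A3 H z := by
  have e := HasWD.wd_eq ((((hasWD_K H hH hz).sub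
        ((hasWD_cinv hz).mul (hasWD_K (wdb H) (contDiff_wdb hH) hz))).sub
        ((hasWD_inv hz).mul (hasWD_K (wd H) (contDiff_wd hH) hz))).add
        (((hasWD_inv hz).mul (hasWD_cinv hz)).mul
          (hasWD_K (wdb (wd H)) (contDiff_wdb (contDiff_wd hH)) hz)))
  refine Eq.trans e ?_
  beta_reduce
  rw [wd_wdb_comm hH]
  simp only [A2, A3, pow_two, mul_inv, ← map_inv₀]
  ring

lemma wdb_A3 (hH : ContDiff ℝ ∞ H) {z : ℂ} (hz : z ≠ 0) : wdb (A3 H) z = A4 H z := by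
  have i3 := ((hasWD_inv hz).mul (hasWD_inv hz)).mul (hasWD_inv hz)
  have t1 := i3.mul (hasWD_K (wd (wd H)) (contDiff_wd (contDiff_wd hH)) hz)
  have t2 := (i3.mul (hasWD_cinv hz)).mul
    (hasWD_K (wd (wdb (wd H))) (contDiff_wd (contDiff_wdb (contDiff_wd hH))) hz)
  have e := HasWD.wdb_eq (t1.sub t2)
  refine Eq.trans e ?_
  beta_reduce
  rw [wd_wdb_comm (contDiff_wd hH)]
  simp only [A3, A4, pow_two, mul_inv, ← map_inv₀]
  ring

lemma wdb_real {K : ℂ → ℂ} (hr : ∀ w, (starRingEnd ℂ) (K w) = K w) {z : ℂ}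
    (hd : DifferentiableAt ℝ K z) : wdb K z = (starRingEnd ℂ) (wd K z) := by
  have h := wdb_conj_comp hd
  rw [show (fun w => (starRingEnd ℂ) (K w)) = K from funext hr] at h
  exact h

lemma conj_A1 (hr : ∀ w, (starRingEnd ℂ) (H w) = H w) (hH : ContDiff ℝ ∞ H) (z : ℂ) :
    (starRingEnd ℂ) (A1 H z) = A1b H z := by
  have hd : DifferentiableAt ℝ H z⁻¹ := (hH.differentiable (by simp)) z⁻¹
  simp only [A1, A1b, map_sub, map_mul, Complex.conj_conj, hr, map_inv₀, ← wdb_real hr hd]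

end chart
/-! ### link with the density T -/

section link
variable {T That : ℂ → ℝ}

lemma ev_ne {z : ℂ} (hz : z ≠ 0) : ∀ᶠ w in nhds z, w ≠ 0 :=
  eventually_ne_nhds hz

lemma cfT_ev (heq : ∀ z : ℂ, z ≠ 0 → T z = Complex.normSq z * That z⁻¹)
    {z : ℂ} (hz : z ≠ 0) : cf T =ᶠ[nhds z] A0 (cf That) := by
  filter_upwards [ev_ne hz] with w hw
  have : (T w : ℂ) = ((Complex.normSq w * That w⁻¹ : ℝ) : ℂ) := by rw [heq w hw]
  rw [cf, this, A0]
  push_cast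
  rw [Complex.mul_conj]
  rfl

variable (hT : ContDiff ℝ ∞ T) (hh : ContDiff ℝ ∞ That)
  (heq : ∀ z : ℂ, z ≠ 0 → T z = Complex.normSq z * That z⁻¹)

include hh heq in
lemma S1 {z : ℂ} (hz : z ≠ 0) : wd (cf T) z = A1 (cf That) z :=
  (wd_congr (cfT_ev heq hz)).trans (wd_A0 (contDiff_cf hh) hz)

include hh heq in
lemma S1ev {z : ℂ} (hz : z ≠ 0) : wd (cf T) =ᶠ[nhds z] A1 (cf That) := by
  filter_upwards [ev_ne hz] with w hw
  exact S1 hh heq hw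

include hh heq in
lemma S2 {z : ℂ} (hz : z ≠ 0) : wdb (wd (cf T)) z = A2 (cf That) z :=
  (wdb_congr (S1ev hh heq hz)).trans (wdb_A1 (contDiff_cf hh) hz)

include hh heq in
lemma S2ev {z : ℂ} (hz : z ≠ 0) : wdb (wd (cf T)) =ᶠ[nhds z] A2 (cf That) := by
  filter_upwards [ev_ne hz] with w hw
  exact S2 hh heq hw

include hh heq in
lemma S3 {z : ℂ} (hz : z ≠ 0) : wd (wdb (wd (cf T))) z = A3 (cf That) z :=
  (wd_congr (S2ev hh heq hz)).trans (wd_A2 (contDiff_cf hh) hz)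

include hh heq in
lemma S3ev {z : ℂ} (hz : z ≠ 0) : wd (wdb (wd (cf T))) =ᶠ[nhds z] A3 (cf That) := by
  filter_upwards [ev_ne hz] with w hw
  exact S3 hh heq hw

include hh heq in
lemma S7 {z : ℂ} (hz : z ≠ 0) : wdb (wd (wdb (wd (cf T)))) z = A4 (cf That) z :=
  (wdb_congr (S3ev hh heq hz)).trans (wdb_A3 (contDiff_cf hh) hz)

include hh heq in
lemma SY {z : ℂ} (hz : z ≠ 0) : wd (wd (cf T)) z = M2 (cf That) z :=
  (wd_congr (S1ev hh heq hz)).trans (wd_A1 (contDiff_cf hh) hz)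

include hh heq in
lemma SYev {z : ℂ} (hz : z ≠ 0) : wd (wd (cf T)) =ᶠ[nhds z] M2 (cf That) := by
  filter_upwards [ev_ne hz] with w hw
  exact SY hh heq hw

include hh heq in
lemma SX {z : ℂ} (hz : z ≠ 0) : wdb (wd (wd (cf T))) z = MX (cf That) z :=
  (wdb_congr (SYev hh heq hz)).trans (wdb_M2 (contDiff_cf hh) hz)

include hT hh heq in
lemma S2b {z : ℂ} (hz : z ≠ 0) : wdb (cf T) z = A1b (cf That) z := by
  have hr : ∀ w, (starRingEnd ℂ) (cf That w) = cf That w := fun w => Complex.conj_ofReal _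
  rw [wdb_cf_conj ((hT.differentiable (by simp)) z), S1 hh heq hz,
    conj_A1 hr (contDiff_cf hh) z]

/-! ### global identities -/

include hT in
lemma contDiff_lapT : ContDiff ℝ ∞ (lap T) :=
  (contDiff_pdx (contDiff_pdx hT)).add (contDiff_pdy (contDiff_pdy hT))

include hT in
lemma c_laplap (z : ℂ) :
    ((lap (lap T) z : ℝ) : ℂ) = 16 * wdb (wd (wdb (wd (cf T)))) z := by
  have h4 : cf (lap T) = fun w => 4 * wdb (wd (cf T)) w := funext fun w => c_lap hT w
  have hstep := c_lap (contDiff_lapT hT) z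
  have f1 : wd (fun w => (4:ℂ) * wdb (wd (cf T)) w) = fun w => 4 * wd (wdb (wd (cf T))) w :=
    funext fun w => wd_const_mul 4
      (((contDiff_wdb (contDiff_wd (contDiff_cf hT))).differentiable (by simp)) w)
  rw [hstep, h4, f1, wdb_const_mul 4
    (((contDiff_wd (contDiff_wdb (contDiff_wd (contDiff_cf hT)))).differentiable (by simp)) z)]
  ring

include hT in
lemma wdb_wdb_cf (z : ℂ) :
    wdb (wdb (cf T)) z = (starRingEnd ℂ) (wd (wd (cf T)) z) := by
  have f1 : wdb (cf T) = fun w => (starRingEnd ℂ) (wd (cf T) w) :=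
    funext fun w => wdb_cf_conj ((hT.differentiable (by simp)) w)
  rw [f1]
  exact wdb_conj_comp (((contDiff_wd (contDiff_cf hT)).differentiable (by simp)) z)

include hT in
lemma rhs16 (z : ℂ) :
    (pdx (pdx T) z - pdy (pdy T) z)^2 + 4*(pdx (pdy T) z)^2
      = 16 * Complex.normSq (wd (wd (cf T)) z) := by
  set Y := wd (wd (cf T)) z with hYdef
  have hmix : wd (wdb (cf T)) z = wdb (wd (cf T)) z := wd_wdb_comm (contDiff_cf hT) z
  have h1 : ((pdx (pdx T) z - pdy (pdy T) z : ℝ) : ℂ) = 2 * Y + 2 * (starRingEnd ℂ) Y := by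
    push_cast
    rw [c_pdxx hT, c_pdyy hT, wdb_wdb_cf hT]
    ring
  have h2 : ((pdx (pdy T) z : ℝ) : ℂ)
      = Complex.I * Y - Complex.I * (starRingEnd ℂ) Y := by
    rw [c_pdxy hT, hmix, wdb_wdb_cf hT]
    ring
  have hre : pdx (pdx T) z - pdy (pdy T) z = 4 * Y.re := by
    have : ((pdx (pdx T) z - pdy (pdy T) z : ℝ) : ℂ) = ((4 * Y.re : ℝ) : ℂ) := by
      rw [h1]
      rw [show (2:ℂ) * Y + 2 * (starRingEnd ℂ) Y = 2 * (Y + (starRingEnd ℂ) Y) by ring,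
        Complex.add_conj]
      push_cast; ring
    exact_mod_cast this
  have him : pdx (pdy T) z = -2 * Y.im := by
    have : ((pdx (pdy T) z : ℝ) : ℂ) = ((-2 * Y.im : ℝ) : ℂ) := by
      rw [h2, show Complex.I * Y - Complex.I * (starRingEnd ℂ) Y
          = Complex.I * (Y - (starRingEnd ℂ) Y) by ring, Complex.sub_conj]
      push_cast
      linear_combination (2 * (Y.im:ℂ)) * Complex.I_sq
    exact_mod_cast this
  rw [hre, him, Complex.normSq_apply]
  ring

/-! ### the divergence field -/

def Ff (T : ℂ → ℝ) : ℂ → ℂ := fun z =>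
  8 * (cf T z * wdb (wd (wd (cf T))) z - wd (wd (cf T)) z * wdb (cf T) z)
def V1 (T : ℂ → ℝ) : ℂ → ℝ := fun z => (Ff T z).re
def V2 (T : ℂ → ℝ) : ℂ → ℝ := fun z => -((Ff T z).im)

include hT in
lemma contDiff_Ff : ContDiff ℝ ∞ (Ff T) :=
  contDiff_const.mul (((contDiff_cf hT).mul
      (contDiff_wdb (contDiff_wd (contDiff_wd (contDiff_cf hT))))).sub
    ((contDiff_wd (contDiff_wd (contDiff_cf hT))).mul (contDiff_wdb (contDiff_cf hT))))

include hT in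
lemma contDiff_V1 : ContDiff ℝ ∞ (V1 T) :=
  Complex.reCLM.contDiff.comp (contDiff_Ff hT)

include hT in
lemma contDiff_V2 : ContDiff ℝ ∞ (V2 T) :=
  (Complex.imCLM.contDiff.comp (contDiff_Ff hT)).neg

lemma wdb_mul {f g : ℂ → ℂ} {z : ℂ} (hf : DifferentiableAt ℝ f z)
    (hg : DifferentiableAt ℝ g z) :
    wdb (fun w => f w * g w) z = wdb f z * g z + f z * wdb g z :=
  HasWD.wdb_eq ((DifferentiableAt.hasWD hf).mul (DifferentiableAt.hasWD hg))

include hT in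
lemma wdbF_eq (z : ℂ) :
    wdb (Ff T) z = 8 * (cf T z * wdb (wd (wdb (wd (cf T)))) z
      - wd (wd (cf T)) z * (starRingEnd ℂ) (wd (wd (cf T)) z)) := by
  have hcT : DifferentiableAt ℝ (cf T) z := ((contDiff_cf hT).differentiable (by simp)) z
  have hY : DifferentiableAt ℝ (wd (wd (cf T))) z :=
    ((contDiff_wd (contDiff_wd (contDiff_cf hT))).differentiable (by simp)) z
  have hX : DifferentiableAt ℝ (wdb (wd (wd (cf T)))) z :=
    ((contDiff_wdb (contDiff_wd (contDiff_wd (contDiff_cf hT)))).differentiable (by simp)) z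
  have hwb : DifferentiableAt ℝ (wdb (cf T)) z :=
    ((contDiff_wdb (contDiff_cf hT)).differentiable (by simp)) z
  have fX : wdb (wd (wd (cf T))) = wd (wdb (wd (cf T))) :=
    funext fun w => (wd_wdb_comm (contDiff_wd (contDiff_cf hT)) w).symm
  have e : wdb (Ff T) z = 8 * ((wdb (cf T) z * wdb (wd (wd (cf T))) z
        + cf T z * wdb (wdb (wd (wd (cf T)))) z)
      - (wdb (wd (wd (cf T))) z * wdb (cf T) z + wd (wd (cf T)) z * wdb (wdb (cf T)) z)) := by
    rw [show Ff T = (fun w => (8:ℂ) * (cf T w * wdb (wd (wd (cf T))) w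
        - wd (wd (cf T)) w * wdb (cf T) w)) from rfl,
      wdb_const_mul 8 ((hcT.fun_mul hX).fun_sub (hY.fun_mul hwb)),
      wdb_sub (hcT.fun_mul hX) (hY.fun_mul hwb), wdb_mul hcT hX, wdb_mul hY hwb]
  rw [e, wdb_wdb_cf hT]
  have : wdb (wdb (wd (wd (cf T)))) z = wdb (wd (wdb (wd (cf T)))) z := by rw [fX]
  rw [this]
  ring

include hT in
lemma div_identity (z : ℂ) :
    pdx (V1 T) z + pdy (V2 T) z
      = T z * lap (lap T) z
        - ((pdx (pdx T) z - pdy (pdy T) z)^2 + 4*(pdx (pdy T) z)^2) := by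
  have hdF : DifferentiableAt ℝ (Ff T) z := ((contDiff_Ff hT).differentiable (by simp)) z
  have e1 : pdx (V1 T) z = (fderiv ℝ (Ff T) z 1).re := by
    have hc : HasFDerivAt (V1 T) (Complex.reCLM.comp (fderiv ℝ (Ff T) z)) z :=
      Complex.reCLM.hasFDerivAt.comp z hdF.hasFDerivAt
    rw [pdx, hc.fderiv]
    rfl
  have e2 : pdy (V2 T) z = -((fderiv ℝ (Ff T) z Complex.I).im) := by
    have hc : HasFDerivAt (V2 T) (-(Complex.imCLM.comp (fderiv ℝ (Ff T) z))) z :=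
      (Complex.imCLM.hasFDerivAt.comp z hdF.hasFDerivAt).neg
    rw [pdy, hc.fderiv]
    rfl
  have key : ∀ u v : ℂ, (u + v).re - (Complex.I * u - Complex.I * v).im = 2 * v.re := by
    intro u v
    simp [Complex.add_re, Complex.sub_im, Complex.mul_im, Complex.I_re, Complex.I_im]
    ring
  have e3 : pdx (V1 T) z + pdy (V2 T) z = 2 * (wdb (Ff T) z).re := by
    rw [e1, e2, ← wd_add_wdb (Ff T) z, ← I_wd_sub_wdb (Ff T) z]
    have := key (wd (Ff T) z) (wdb (Ff T) z)
    linarith [this]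
  rw [e3, wdbF_eq hT, rhs16 hT]
  have hlap := c_laplap hT z
  set Y := wd (wd (cf T)) z
  set W := wdb (wd (wdb (wd (cf T)))) z
  have hW : (8:ℂ) * (cf T z * W - Y * (starRingEnd ℂ) Y)
      = 8 * cf T z * W - 8 * ((Complex.normSq Y : ℝ) : ℂ) := by
    rw [Complex.mul_conj]
    ring
  rw [hW]
  have hTW : (8:ℂ) * cf T z * W = ((T z * lap (lap T) z / 2 : ℝ) : ℂ) := by
    push_cast
    rw [hlap, cf]
    ring
  rw [hTW]
  simp only [Complex.sub_re, Complex.mul_re, Complex.ofReal_re, Complex.ofReal_im,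
    Complex.re_ofNat, Complex.im_ofNat]
  push_cast
  ring

end link

/-! ### decay bounds -/

section decay
variable {T That : ℂ → ℝ}
variable (hT : ContDiff ℝ ∞ T) (hh : ContDiff ℝ ∞ That)
  (heq : ∀ z : ℂ, z ≠ 0 → T z = Complex.normSq z * That z⁻¹)

include heq in
lemma cfT_pt {z : ℂ} (hz : z ≠ 0) : cf T z = A0 (cf That) z := by
  have : (T z : ℂ) = ((Complex.normSq z * That z⁻¹ : ℝ) : ℂ) := by rw [heq z hz]
  rw [cf, this, A0]
  push_cast
  rw [Complex.mul_conj]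
  rfl

include hT hh heq in
lemma F_chart {z : ℂ} (hz : z ≠ 0) :
    Ff T z = 8 * (z⁻¹)^2 * (wd (wd (cf That)) z⁻¹ * wdb (cf That) z⁻¹
      - cf That z⁻¹ * wdb (wd (wd (cf That))) z⁻¹) := by
  have hzw : z * z⁻¹ = 1 := mul_inv_cancel₀ hz
  have hc : (starRingEnd ℂ) z * (starRingEnd ℂ) (z⁻¹) = 1 := by
    rw [← map_mul, hzw, map_one]
  have e : Ff T z = 8 * (cf T z * wdb (wd (wd (cf T))) z
      - wd (wd (cf T)) z * wdb (cf T) z) := rfl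
  rw [e, cfT_pt heq hz, SX hh heq hz, SY hh heq hz, S2b hT hh heq hz, A0, MX, M2, A1b]
  set h0 := cf That z⁻¹
  set bb := wdb (cf That) z⁻¹
  set d2 := wd (wd (cf That)) z⁻¹
  set x := wdb (wd (wd (cf That))) z⁻¹
  linear_combination (8 * (d2 * bb - h0 * x) * z⁻¹ * z⁻¹ * (starRingEnd ℂ) z
      * (starRingEnd ℂ) (z⁻¹)) * hzw
    + (8 * (d2 * bb - h0 * x) * z⁻¹ * z⁻¹) * hc

lemma bound_on_ball (G : ℂ → ℂ) (hG : Continuous G) :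
    ∃ C : ℝ, 0 ≤ C ∧ ∀ w : ℂ, ‖w‖ ≤ 1 → ‖G w‖ ≤ C := by
  obtain ⟨C, hC⟩ := (isCompact_closedBall (0:ℂ) 1).exists_bound_of_continuousOn
    hG.continuousOn
  refine ⟨max C 0, le_max_right _ _, fun w hw => ?_⟩
  exact le_trans (hC w (by simpa [Metric.mem_closedBall, dist_eq_norm] using hw))
    (le_max_left _ _)

include hT hh heq in
lemma decay_bounds : ∃ C : ℝ, 0 ≤ C ∧ ∀ z : ℂ, 1 ≤ ‖z‖ →
    |T z * lap (lap T) z| * ‖z‖^4 ≤ C ∧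
    |(pdx (pdx T) z - pdy (pdy T) z)^2 + 4*(pdx (pdy T) z)^2| * ‖z‖^4 ≤ C ∧
    ‖Ff T z‖ * ‖z‖^2 ≤ C := by
  obtain ⟨C0, hC0n, hC0⟩ := bound_on_ball (cf That) (contDiff_cf hh).continuous
  obtain ⟨C4, hC4n, hC4⟩ := bound_on_ball (wdb (wd (wdb (wd (cf That)))))
    (contDiff_wdb (contDiff_wd (contDiff_wdb (contDiff_wd (contDiff_cf hh))))).continuous
  obtain ⟨C2, hC2n, hC2⟩ := bound_on_ball (wd (wd (cf That)))
    (contDiff_wd (contDiff_wd (contDiff_cf hh))).continuous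
  obtain ⟨CE, hCEn, hCE⟩ := bound_on_ball
    (fun w => wd (wd (cf That)) w * wdb (cf That) w
      - cf That w * wdb (wd (wd (cf That))) w)
    (((contDiff_wd (contDiff_wd (contDiff_cf hh))).mul (contDiff_wdb (contDiff_cf hh))).sub
      ((contDiff_cf hh).mul
        (contDiff_wdb (contDiff_wd (contDiff_wd (contDiff_cf hh)))))).continuous
  refine ⟨max (16*C0*C4) (max (16*C2^2) (8*CE)), by positivity, fun z hz1 => ?_⟩
  have hz : z ≠ 0 := by
    intro h; rw [h, norm_zero] at hz1; linarith
  have hrpos : (0:ℝ) < ‖z‖ := lt_of_lt_of_le one_pos hz1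
  have hu : ‖z⁻¹‖ ≤ 1 := by
    rw [norm_inv]
    exact inv_le_one_of_one_le₀ hz1
  have hun : (0:ℝ) ≤ ‖z⁻¹‖ := norm_nonneg _
  have hru : ‖z‖ * ‖z⁻¹‖ = 1 := by
    rw [norm_inv]; exact mul_inv_cancel₀ (ne_of_gt hrpos)
  have h6 : ‖z‖^6 * ‖z⁻¹‖^6 = 1 := by
    rw [← mul_pow, hru, one_pow]
  refine ⟨?_, ?_, ?_⟩
  · -- T · Δ²T
    have hTb : |T z| ≤ C0 * ‖z‖^2 := by
      rw [heq z hz, abs_mul, abs_of_nonneg (Complex.normSq_nonneg z)]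
      have h1 : Complex.normSq z = ‖z‖^2 := by
        rw [Complex.normSq_eq_norm_sq]
      have h2 : |That z⁻¹| ≤ C0 := by
        have := hC0 z⁻¹ hu
        rwa [cf, Complex.norm_real] at this
      rw [h1]
      calc ‖z‖^2 * |That z⁻¹| ≤ ‖z‖^2 * C0 := by
            exact mul_le_mul_of_nonneg_left h2 (by positivity)
        _ = C0 * ‖z‖^2 := by ring
    have hLb : |lap (lap T) z| ≤ 16 * C4 * ‖z⁻¹‖^6 := by
      have h1 : |lap (lap T) z| = ‖((lap (lap T) z : ℝ) : ℂ)‖ := (Complex.norm_real _).symm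
      rw [h1, c_laplap hT, S7 hh heq hz, A4]
      rw [norm_mul, norm_mul, norm_mul, norm_pow, norm_pow]
      have hcn : ‖(starRingEnd ℂ) (z⁻¹)‖ = ‖z⁻¹‖ := by
        simp
      rw [hcn]
      have h16 : ‖(16:ℂ)‖ = 16 := by norm_num
      rw [h16]
      have hK : ‖wdb (wd (wdb (wd (cf That)))) z⁻¹‖ ≤ C4 := hC4 z⁻¹ hu
      calc 16 * (‖z⁻¹‖^3 * ‖z⁻¹‖^3 * ‖wdb (wd (wdb (wd (cf That)))) z⁻¹‖)
          ≤ 16 * (‖z⁻¹‖^3 * ‖z⁻¹‖^3 * C4) := by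
            refine mul_le_mul_of_nonneg_left ?_ (by norm_num)
            exact mul_le_mul_of_nonneg_left hK (by positivity)
        _ = 16 * C4 * ‖z⁻¹‖^6 := by ring
    calc |T z * lap (lap T) z| * ‖z‖^4
        = (|T z| * |lap (lap T) z|) * ‖z‖^4 := by rw [abs_mul]
      _ ≤ ((C0 * ‖z‖^2) * (16 * C4 * ‖z⁻¹‖^6)) * ‖z‖^4 := by
          refine mul_le_mul_of_nonneg_right ?_ (by positivity)
          exact mul_le_mul hTb hLb (abs_nonneg _) (by positivity)
      _ = (16*C0*C4) * (‖z‖^6 * ‖z⁻¹‖^6) := by ring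
      _ = 16*C0*C4 := by rw [h6, mul_one]
      _ ≤ _ := le_max_left _ _
  · -- RHS integrand
    have hYb : ‖wd (wd (cf T)) z‖ ≤ C2 * (‖z‖ * ‖z⁻¹‖^3) := by
      rw [SY hh heq hz, M2]
      rw [norm_mul, norm_mul]
      have hcn : ‖(starRingEnd ℂ) z‖ = ‖z‖ := by simp
      rw [hcn]
      have hd : ‖wd (wd (cf That)) z⁻¹‖ ≤ C2 := hC2 z⁻¹ hu
      have h3 : ‖z⁻¹ * z⁻¹ * z⁻¹‖ = ‖z⁻¹‖^3 := by
        rw [norm_mul, norm_mul]; ring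
      rw [h3]
      calc ‖z‖ * ‖z⁻¹‖^3 * ‖wd (wd (cf That)) z⁻¹‖
          ≤ ‖z‖ * ‖z⁻¹‖^3 * C2 := by
            exact mul_le_mul_of_nonneg_left hd (by positivity)
        _ = C2 * (‖z‖ * ‖z⁻¹‖^3) := by ring
    have hI : (pdx (pdx T) z - pdy (pdy T) z)^2 + 4*(pdx (pdy T) z)^2
        = 16 * ‖wd (wd (cf T)) z‖^2 := by
      rw [rhs16 hT, Complex.normSq_eq_norm_sq]
    rw [hI]
    have habs : |16 * ‖wd (wd (cf T)) z‖^2| = 16 * ‖wd (wd (cf T)) z‖^2 := by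
      exact abs_of_nonneg (by positivity)
    rw [habs]
    calc 16 * ‖wd (wd (cf T)) z‖^2 * ‖z‖^4
        ≤ 16 * (C2 * (‖z‖ * ‖z⁻¹‖^3))^2 * ‖z‖^4 := by
          refine mul_le_mul_of_nonneg_right ?_ (by positivity)
          refine mul_le_mul_of_nonneg_left ?_ (by norm_num)
          exact pow_le_pow_left₀ (norm_nonneg _) hYb 2
      _ = 16 * C2^2 * (‖z‖^6 * ‖z⁻¹‖^6) := by ring
      _ = 16 * C2^2 := by rw [h6, mul_one]
      _ ≤ _ := le_trans (le_max_left _ _) (le_max_right _ _)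
  · -- Ff bound
    have hE : ‖wd (wd (cf That)) z⁻¹ * wdb (cf That) z⁻¹
        - cf That z⁻¹ * wdb (wd (wd (cf That))) z⁻¹‖ ≤ CE := hCE z⁻¹ hu
    rw [F_chart hT hh heq hz]
    rw [norm_mul, norm_mul, norm_pow]
    have h8 : ‖(8:ℂ)‖ = 8 := by norm_num
    rw [h8]
    calc 8 * ‖z⁻¹‖^2 * ‖wd (wd (cf That)) z⁻¹ * wdb (cf That) z⁻¹
          - cf That z⁻¹ * wdb (wd (wd (cf That))) z⁻¹‖ * ‖z‖^2
        ≤ 8 * ‖z⁻¹‖^2 * CE * ‖z‖^2 := by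
          refine mul_le_mul_of_nonneg_right ?_ (by positivity)
          exact mul_le_mul_of_nonneg_left hE (by positivity)
      _ = 8 * CE * (‖z‖ * ‖z⁻¹‖)^2 := by ring
      _ = 8 * CE := by rw [hru]; ring
      _ ≤ _ := le_trans (le_max_right _ _) (le_max_right _ _)

end decay

/-! ### integrability from decay -/

lemma integrable_of_decay (f : ℂ → ℝ) (hf : Continuous f) (C : ℝ)
    (hd : ∀ z : ℂ, 1 ≤ ‖z‖ → |f z| * ‖z‖^4 ≤ C) : Integrable f := by
  obtain ⟨M, hM⟩ := (isCompact_closedBall (0:ℂ) 1).exists_bound_of_continuousOn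
    hf.continuousOn
  set C' := max M 0 * 16 + max C 0 * 16 with hC'
  have key : ∀ z : ℂ, ‖f z‖ ≤ C' * (1 + ‖z‖)^(-4:ℝ) := by
    intro z
    have hp : (0:ℝ) < 1 + ‖z‖ := by positivity
    have hr4 : (1 + ‖z‖)^(-4:ℝ) = ((1+‖z‖)^(4:ℕ))⁻¹ := by
      rw [show (-4:ℝ) = -((4:ℕ):ℝ) by norm_num, Real.rpow_neg hp.le, Real.rpow_natCast]
    rw [hr4, ← div_eq_mul_inv, le_div_iff₀ (by positivity)]
    rcases le_total ‖z‖ 1 with h1 | h1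
    · have hfz : ‖f z‖ ≤ max M 0 := le_trans
        (hM z (by simpa [Metric.mem_closedBall, dist_eq_norm] using h1)) (le_max_left _ _)
      have hpow : (1 + ‖z‖)^(4:ℕ) ≤ 16 := by
        calc (1 + ‖z‖)^(4:ℕ) ≤ 2^(4:ℕ) :=
              pow_le_pow_left₀ (by positivity) (by linarith) 4
          _ = 16 := by norm_num
      have h2 : ‖f z‖ * (1 + ‖z‖)^(4:ℕ) ≤ max M 0 * 16 :=
        mul_le_mul hfz hpow (by positivity) (le_max_right _ _)
      have h3 : (0:ℝ) ≤ max C 0 * 16 := by positivity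
      linarith
    · have hfz : |f z| * ‖z‖^4 ≤ max C 0 := le_trans (hd z h1) (le_max_left _ _)
      have hpow : (1 + ‖z‖)^(4:ℕ) ≤ 16 * ‖z‖^4 := by
        calc (1 + ‖z‖)^(4:ℕ) ≤ (2*‖z‖)^(4:ℕ) :=
              pow_le_pow_left₀ (by positivity) (by linarith) 4
          _ = 16 * ‖z‖^4 := by ring
      have h2 : ‖f z‖ * (1 + ‖z‖)^(4:ℕ) ≤ |f z| * (16 * ‖z‖^4) := by
        rw [Real.norm_eq_abs]
        exact mul_le_mul_of_nonneg_left hpow (abs_nonneg _)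
      have h3 : |f z| * (16 * ‖z‖^4) = 16 * (|f z| * ‖z‖^4) := by ring
      have h4 : (16:ℝ) * (|f z| * ‖z‖^4) ≤ 16 * max C 0 := by linarith
      have h5 : (0:ℝ) ≤ max M 0 * 16 := by positivity
      linarith
  have hfin : ((Module.finrank ℝ ℂ : ℝ)) < 4 := by
    rw [Complex.finrank_real_complex]; norm_num
  exact ((integrable_one_add_norm hfin).const_mul C').mono'
    hf.aestronglyMeasurable (Filter.Eventually.of_forall key)

/-! ### vanishing of integrals of derivatives of compactly supported functions -/

lemma integral_deriv_zero_1d (u : ℝ → ℝ) (hu : ContDiff ℝ 1 u) (hsu : HasCompactSupport u) :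
    ∫ x : ℝ, deriv u x = 0 := by
  have hint : Integrable (deriv u) :=
    (hu.continuous_deriv le_rfl).integrable_of_hasCompactSupport hsu.deriv
  have h1 := HasCompactSupport.integral_Iic_deriv_eq hu hsu 0
  have h2 := HasCompactSupport.integral_Ioi_deriv_eq hu hsu 0
  have h3 := integral_add_compl (measurableSet_Iic : MeasurableSet (Set.Iic (0:ℝ))) hint
  rw [Set.compl_Iic] at h3
  rw [← h3, h1, h2]
  ring

lemma slice_x {g : ℂ → ℝ} (hg : ContDiff ℝ ∞ g) (hs : HasCompactSupport g) (y : ℝ) :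
    ∫ x : ℝ, pdx g ((x:ℂ) + (y:ℝ) * Complex.I) = 0 := by
  set u : ℝ → ℝ := fun x => g ((x:ℂ) + (y:ℝ) * Complex.I) with hu
  have hder : ∀ x : ℝ, HasDerivAt u (pdx g ((x:ℂ) + (y:ℝ) * Complex.I)) x := by
    intro x
    have hl : HasDerivAt (fun x : ℝ => ((x:ℂ) + (y:ℝ) * Complex.I)) 1 x := by
      simpa using (Complex.ofRealCLM.hasDerivAt (x := x)).add_const ((y:ℝ) * Complex.I)
    exact ((hg.differentiable (by simp)) _).hasFDerivAt.comp_hasDerivAt x hl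
  obtain ⟨R, hR⟩ := hs.isBounded.subset_closedBall 0
  have hsu : HasCompactSupport u := by
    apply HasCompactSupport.intro (isCompact_Icc (a := -R) (b := R))
    intro x hx
    show g ((x:ℂ) + (y:ℝ) * Complex.I) = 0
    apply image_eq_zero_of_notMem_tsupport
    intro hmem
    apply hx
    have hball := hR hmem
    have h2 : ‖((x:ℂ) + (y:ℝ) * Complex.I)‖ ≤ R := by
      simpa [Metric.mem_closedBall, dist_eq_norm] using hball
    have h1 : |x| ≤ ‖((x:ℂ) + (y:ℝ) * Complex.I)‖ := by
      have := Complex.abs_re_le_norm ((x:ℂ) + (y:ℝ) * Complex.I)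
      simpa using this
    have : |x| ≤ R := le_trans h1 h2
    exact ⟨by linarith [(abs_le.mp this).1], by linarith [(abs_le.mp this).2]⟩
  have hu1 : ContDiff ℝ 1 u :=
    (hg.comp (Complex.ofRealCLM.contDiff.add contDiff_const)).of_le one_le_infty
  have h0 := integral_deriv_zero_1d u hu1 hsu
  have : (fun x : ℝ => pdx g ((x:ℂ) + (y:ℝ) * Complex.I)) = fun x => deriv u x := by
    funext x
    rw [(hder x).deriv]
  rw [this, h0]

lemma slice_y {g : ℂ → ℝ} (hg : ContDiff ℝ ∞ g) (hs : HasCompactSupport g) (x : ℝ) :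
    ∫ y : ℝ, pdy g ((x:ℂ) + (y:ℝ) * Complex.I) = 0 := by
  set u : ℝ → ℝ := fun y => g ((x:ℂ) + (y:ℝ) * Complex.I) with hu
  have hder : ∀ y : ℝ, HasDerivAt u (pdy g ((x:ℂ) + (y:ℝ) * Complex.I)) y := by
    intro y
    have hl1 : HasDerivAt (fun y : ℝ => ((y:ℝ):ℂ) * Complex.I) Complex.I y := by
      simpa using (Complex.ofRealCLM.hasDerivAt (x := y)).mul_const Complex.I
    have hl : HasDerivAt (fun y : ℝ => ((x:ℂ) + (y:ℝ) * Complex.I)) Complex.I y :=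
      hl1.const_add _
    exact ((hg.differentiable (by simp)) _).hasFDerivAt.comp_hasDerivAt y hl
  obtain ⟨R, hR⟩ := hs.isBounded.subset_closedBall 0
  have hsu : HasCompactSupport u := by
    apply HasCompactSupport.intro (isCompact_Icc (a := -R) (b := R))
    intro y hy
    show g ((x:ℂ) + (y:ℝ) * Complex.I) = 0
    apply image_eq_zero_of_notMem_tsupport
    intro hmem
    apply hy
    have hball := hR hmem
    have h2 : ‖((x:ℂ) + (y:ℝ) * Complex.I)‖ ≤ R := by
      simpa [Metric.mem_closedBall, dist_eq_norm] using hball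
    have h1 : |y| ≤ ‖((x:ℂ) + (y:ℝ) * Complex.I)‖ := by
      have := Complex.abs_im_le_norm ((x:ℂ) + (y:ℝ) * Complex.I)
      simpa using this
    have : |y| ≤ R := le_trans h1 h2
    exact ⟨by linarith [(abs_le.mp this).1], by linarith [(abs_le.mp this).2]⟩
  have hu1 : ContDiff ℝ 1 u := by
    have : ContDiff ℝ ∞ (fun y : ℝ => ((x:ℂ) + (y:ℝ) * Complex.I)) :=
      contDiff_const.add (Complex.ofRealCLM.contDiff.mul contDiff_const)
    exact (hg.comp this).of_le one_le_infty
  have h0 := integral_deriv_zero_1d u hu1 hsu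
  have : (fun y : ℝ => pdy g ((x:ℂ) + (y:ℝ) * Complex.I)) = fun y => deriv u y := by
    funext y
    rw [(hder y).deriv]
  rw [this, h0]

lemma hasCompactSupport_pdx {g : ℂ → ℝ} (hs : HasCompactSupport g) :
    HasCompactSupport (pdx g) :=
  (hs.fderiv ℝ).comp_left (g := fun L : ℂ →L[ℝ] ℝ => L 1) (by simp)

lemma hasCompactSupport_pdy {g : ℂ → ℝ} (hs : HasCompactSupport g) :
    HasCompactSupport (pdy g) :=
  (hs.fderiv ℝ).comp_left (g := fun L : ℂ →L[ℝ] ℝ => L Complex.I) (by simp)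

lemma symm_apply_eq (x y : ℝ) :
    Complex.measurableEquivRealProd.symm (x, y) = (x:ℂ) + (y:ℝ) * Complex.I := by
  have : Complex.measurableEquivRealProd.symm (x, y) = Complex.mk x y := rfl
  rw [this, Complex.mk_eq_add_mul_I]

lemma integral_pdx_eq_zero {g : ℂ → ℝ} (hg : ContDiff ℝ ∞ g) (hs : HasCompactSupport g) :
    ∫ z : ℂ, pdx g z = 0 := by
  have hcont : Continuous (pdx g) := (contDiff_pdx hg).continuous
  have hint : Integrable (pdx g) :=
    hcont.integrable_of_hasCompactSupport (hasCompactSupport_pdx hs)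
  have epres := MeasurePreserving.symm _ Complex.volume_preserving_equiv_real_prod
  have h1 : ∫ p : ℝ × ℝ, pdx g (Complex.measurableEquivRealProd.symm p)
      = ∫ z : ℂ, pdx g z :=
    epres.integral_comp Complex.measurableEquivRealProd.symm.measurableEmbedding _
  rw [← h1]
  have hintp : Integrable (fun p : ℝ × ℝ => pdx g (Complex.measurableEquivRealProd.symm p))
      (volume.prod volume) := by
    rw [← MeasureTheory.Measure.volume_eq_prod]
    exact (epres.integrable_comp_emb
      Complex.measurableEquivRealProd.symm.measurableEmbedding).mpr hint
  rw [MeasureTheory.Measure.volume_eq_prod, MeasureTheory.integral_prod _ hintp,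
    MeasureTheory.integral_integral_swap hintp]
  have hinner : ∀ y : ℝ, (∫ x : ℝ, pdx g (Complex.measurableEquivRealProd.symm (x, y))) = 0 := by
    intro y
    have : (fun x : ℝ => pdx g (Complex.measurableEquivRealProd.symm (x, y)))
        = fun x : ℝ => pdx g ((x:ℂ) + (y:ℝ) * Complex.I) := by
      funext x; rw [symm_apply_eq]
    rw [this]
    exact slice_x hg hs y
  simp only [hinner, integral_zero]

lemma integral_pdy_eq_zero {g : ℂ → ℝ} (hg : ContDiff ℝ ∞ g) (hs : HasCompactSupport g) :
    ∫ z : ℂ, pdy g z = 0 := by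
  have hcont : Continuous (pdy g) := (contDiff_pdy hg).continuous
  have hint : Integrable (pdy g) :=
    hcont.integrable_of_hasCompactSupport (hasCompactSupport_pdy hs)
  have epres := MeasurePreserving.symm _ Complex.volume_preserving_equiv_real_prod
  have h1 : ∫ p : ℝ × ℝ, pdy g (Complex.measurableEquivRealProd.symm p)
      = ∫ z : ℂ, pdy g z :=
    epres.integral_comp Complex.measurableEquivRealProd.symm.measurableEmbedding _
  rw [← h1]
  have hintp : Integrable (fun p : ℝ × ℝ => pdy g (Complex.measurableEquivRealProd.symm p))
      (volume.prod volume) := by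
    rw [← MeasureTheory.Measure.volume_eq_prod]
    exact (epres.integrable_comp_emb
      Complex.measurableEquivRealProd.symm.measurableEmbedding).mpr hint
  rw [MeasureTheory.Measure.volume_eq_prod, MeasureTheory.integral_prod _ hintp]
  have hinner : ∀ x : ℝ, (∫ y : ℝ, pdy g (Complex.measurableEquivRealProd.symm (x, y))) = 0 := by
    intro x
    have : (fun y : ℝ => pdy g (Complex.measurableEquivRealProd.symm (x, y)))
        = fun y : ℝ => pdy g ((x:ℂ) + (y:ℝ) * Complex.I) := by
      funext y; rw [symm_apply_eq]
    rw [this]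
    exact slice_y hg hs x
  simp only [hinner, integral_zero]

lemma pdx_mul {f g : ℂ → ℝ} {z : ℂ} (hf : DifferentiableAt ℝ f z)
    (hg : DifferentiableAt ℝ g z) :
    pdx (fun w => f w * g w) z = pdx f z * g z + f z * pdx g z := by
  rw [pdx, (hf.hasFDerivAt.fun_mul hg.hasFDerivAt).fderiv]
  simp [pdx, smul_eq_mul]
  ring

lemma pdy_mul {f g : ℂ → ℝ} {z : ℂ} (hf : DifferentiableAt ℝ f z)
    (hg : DifferentiableAt ℝ g z) :
    pdy (fun w => f w * g w) z = pdy f z * g z + f z * pdy g z := by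
  rw [pdy, (hf.hasFDerivAt.fun_mul hg.hasFDerivAt).fderiv]
  simp [pdy, smul_eq_mul]
  ring

/-! ### the main limiting argument -/

def Dfun (T : ℂ → ℝ) : ℂ → ℝ := fun z =>
  T z * lap (lap T) z - ((pdx (pdx T) z - pdy (pdy T) z)^2 + 4*(pdx (pdy T) z)^2)

section final
variable {T : ℂ → ℝ}

theorem integral_D_zero (hT : ContDiff ℝ ∞ T) (hDint : Integrable (Dfun T)) (CF : ℝ)
    (hCFn : 0 ≤ CF) (hCF : ∀ z : ℂ, 1 ≤ ‖z‖ → ‖Ff T z‖ * ‖z‖^2 ≤ CF) :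
    ∫ z : ℂ, Dfun T z = 0 := by
  classical
  set χ : ContDiffBump (0:ℂ) := ⟨1, 2, one_pos, one_lt_two⟩ with hχdef
  obtain ⟨K, hK⟩ := Continuous.bounded_above_of_compact_support
    ((χ.contDiff (n := (⊤ : ℕ∞))).continuous_fderiv (by simp)) (χ.hasCompactSupport.fderiv ℝ)
  have hKn : 0 ≤ K := le_trans (norm_nonneg _) (hK 0)
  set v1 := (volume (Metric.ball (0:ℂ) 1)).toReal with hv1
  have hv1n : 0 ≤ v1 := ENNReal.toReal_nonneg
  have key : ∀ n : ℕ,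
      |∫ z : ℂ, χ ((((n:ℝ)+1))⁻¹ • z) * Dfun T z| ≤ (8*K*CF*v1) / ((n:ℝ)+1) := by
    intro n
    set R : ℝ := (n:ℝ) + 1 with hRdef
    have hR1 : (1:ℝ) ≤ R := by rw [hRdef]; linarith [Nat.cast_nonneg (α := ℝ) n]
    have hRpos : (0:ℝ) < R := lt_of_lt_of_le one_pos hR1
    set A : ℂ →L[ℝ] ℂ := (R⁻¹ : ℝ) • ContinuousLinearMap.id ℝ ℂ with hA
    have hAap : ∀ z : ℂ, A z = (R⁻¹ : ℝ) • z := fun z => rfl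
    set χn : ℂ → ℝ := fun z => χ ((R⁻¹ : ℝ) • z) with hχn
    have hχs : ContDiff ℝ ∞ χn := (χ.contDiff (n := (⊤ : ℕ∞))).comp (A.contDiff)
    have hnormA : ∀ z : ℂ, ‖(R⁻¹ : ℝ) • z‖ = R⁻¹ * ‖z‖ := by
      intro z
      rw [norm_smul, Real.norm_eq_abs, abs_of_pos (by positivity)]
    have hχ1 : ∀ z : ℂ, ‖z‖ ≤ R → χn z = 1 := by
      intro z hz
      apply χ.one_of_mem_closedBall
      simp only [Metric.mem_closedBall, dist_zero_right, hnormA]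
      calc R⁻¹ * ‖z‖ ≤ R⁻¹ * R := by
            exact mul_le_mul_of_nonneg_left hz (by positivity)
        _ = 1 := inv_mul_cancel₀ (ne_of_gt hRpos)
    have hχ0 : ∀ z : ℂ, 2*R ≤ ‖z‖ → χn z = 0 := by
      intro z hz
      apply χ.zero_of_le_dist
      simp only [dist_zero_right, hnormA]
      show (2:ℝ) ≤ R⁻¹ * ‖z‖
      calc (2:ℝ) = R⁻¹ * (2*R) := by field_simp
        _ ≤ R⁻¹ * ‖z‖ := mul_le_mul_of_nonneg_left hz (by positivity)
    have hχcs : HasCompactSupport χn := by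
      apply HasCompactSupport.intro (isCompact_closedBall (0:ℂ) (2*R))
      intro z hz
      apply hχ0
      simp only [Metric.mem_closedBall, dist_zero_right, not_le] at hz
      linarith
    have hfd : ∀ z : ℂ, fderiv ℝ χn z = (fderiv ℝ χ (A z)).comp A := by
      intro z
      exact (((χ.contDiff (n := (⊤ : ℕ∞))).differentiable (by simp) (A z)).hasFDerivAt.comp z
        A.hasFDerivAt).fderiv
    have hgrad : ∀ z : ℂ, ‖fderiv ℝ χn z‖ ≤ K * R⁻¹ := by
      intro z
      rw [hfd z]
      calc ‖(fderiv ℝ χ (A z)).comp A‖ ≤ ‖fderiv ℝ χ (A z)‖ * ‖A‖ :=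
            ContinuousLinearMap.opNorm_comp_le _ _
        _ ≤ K * R⁻¹ := by
            refine mul_le_mul (hK _) ?_ (norm_nonneg _) hKn
            refine ContinuousLinearMap.opNorm_le_bound _ (by positivity) (fun w => ?_)
            rw [hAap w, hnormA w]
    have hzero1 : ∀ z : ℂ, ‖z‖ < R → fderiv ℝ χn z = 0 := by
      intro z hz
      have hev : χn =ᶠ[nhds z] fun _ => (1:ℝ) := by
        have hop : IsOpen {w : ℂ | ‖w‖ < R} := isOpen_lt continuous_norm continuous_const
        filter_upwards [hop.mem_nhds hz] with w hw
        exact hχ1 w (le_of_lt hw)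
      rw [hev.fderiv_eq]
      exact fderiv_const_apply 1
    have hzero2 : ∀ z : ℂ, 2*R < ‖z‖ → fderiv ℝ χn z = 0 := by
      intro z hz
      have hev : χn =ᶠ[nhds z] fun _ => (0:ℝ) := by
        have hop : IsOpen {w : ℂ | 2*R < ‖w‖} := isOpen_lt continuous_const continuous_norm
        filter_upwards [hop.mem_nhds hz] with w hw
        exact hχ0 w (le_of_lt hw)
      rw [hev.fderiv_eq]
      exact fderiv_const_apply 0
    -- the boundary error term
    set Bn : ℂ → ℝ := fun z => pdx χn z * V1 T z + pdy χn z * V2 T z with hBn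
    have hpdle : ∀ z : ℂ, |pdx χn z| ≤ K * R⁻¹ ∧ |pdy χn z| ≤ K * R⁻¹ := by
      intro z
      constructor
      · calc |pdx χn z| = ‖fderiv ℝ χn z 1‖ := rfl
          _ ≤ ‖fderiv ℝ χn z‖ * ‖(1:ℂ)‖ := ContinuousLinearMap.le_opNorm _ _
          _ ≤ K * R⁻¹ := by rw [norm_one, mul_one]; exact hgrad z
      · calc |pdy χn z| = ‖fderiv ℝ χn z Complex.I‖ := rfl
          _ ≤ ‖fderiv ℝ χn z‖ * ‖Complex.I‖ := ContinuousLinearMap.le_opNorm _ _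
          _ ≤ K * R⁻¹ := by rw [Complex.norm_I, mul_one]; exact hgrad z
    have hBbound : ∀ z ∈ Metric.closedBall (0:ℂ) (2*R), ‖Bn z‖ ≤ 2*K*CF/R^3 := by
      intro z _
      rcases lt_or_ge ‖z‖ R with hlt | hge
      · have h1 : pdx χn z = 0 := by rw [pdx, hzero1 z hlt]; rfl
        have h2 : pdy χn z = 0 := by rw [pdy, hzero1 z hlt]; rfl
        simp only [hBn, h1, h2, zero_mul, add_zero, norm_zero]
        positivity
      · have hz1 : (1:ℝ) ≤ ‖z‖ := le_trans hR1 hge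
        have hzpos : (0:ℝ) < ‖z‖ := lt_of_lt_of_le one_pos hz1
        have hFz : ‖Ff T z‖ ≤ CF / R^2 := by
          have h1 : ‖Ff T z‖ ≤ CF / ‖z‖^2 := by
            rw [le_div_iff₀ (by positivity)]
            exact hCF z hz1
          refine le_trans h1 ?_
          exact div_le_div_of_nonneg_left hCFn (by positivity)
            (by exact pow_le_pow_left₀ (le_of_lt hRpos) hge 2)
        have hV1 : |V1 T z| ≤ CF / R^2 := by
          refine le_trans ?_ hFz
          rw [show V1 T z = (Ff T z).re from rfl]
          have := Complex.abs_re_le_norm (Ff T z)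
          exact this
        have hV2 : |V2 T z| ≤ CF / R^2 := by
          refine le_trans ?_ hFz
          rw [show V2 T z = -((Ff T z).im) from rfl, abs_neg]
          have := Complex.abs_im_le_norm (Ff T z)
          exact this
        calc ‖Bn z‖ ≤ |pdx χn z * V1 T z| + |pdy χn z * V2 T z| := abs_add_le _ _
          _ = |pdx χn z| * |V1 T z| + |pdy χn z| * |V2 T z| := by
              rw [abs_mul, abs_mul]
          _ ≤ (K * R⁻¹) * (CF / R^2) + (K * R⁻¹) * (CF / R^2) := by
              gcongr
              exacts [(hpdle z).1, (hpdle z).2]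
          _ = 2*K*CF/R^3 := by field_simp; ring
    -- integrals
    have hv1cont : Continuous (V1 T) := (contDiff_V1 hT).continuous
    have hv2cont : Continuous (V2 T) := (contDiff_V2 hT).continuous
    have hi1 : Integrable (fun z => pdx χn z * V1 T z) := by
      refine Continuous.integrable_of_hasCompactSupport
        (((contDiff_pdx hχs).continuous).mul hv1cont) ?_
      exact (hasCompactSupport_pdx hχcs).mul_right
    have hi2 : Integrable (fun z => χn z * pdx (V1 T) z) := by
      refine Continuous.integrable_of_hasCompactSupport
        (hχs.continuous.mul (contDiff_pdx (contDiff_V1 hT)).continuous) ?_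
      exact hχcs.mul_right
    have hi3 : Integrable (fun z => pdy χn z * V2 T z) := by
      refine Continuous.integrable_of_hasCompactSupport
        (((contDiff_pdy hχs).continuous).mul hv2cont) ?_
      exact (hasCompactSupport_pdy hχcs).mul_right
    have hi4 : Integrable (fun z => χn z * pdy (V2 T) z) := by
      refine Continuous.integrable_of_hasCompactSupport
        (hχs.continuous.mul (contDiff_pdy (contDiff_V2 hT)).continuous) ?_
      exact hχcs.mul_right
    have hx0 : ∫ z : ℂ, pdx (fun w => χn w * V1 T w) z = 0 :=
      integral_pdx_eq_zero (hχs.mul (contDiff_V1 hT)) hχcs.mul_right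
    have hy0 : ∫ z : ℂ, pdy (fun w => χn w * V2 T w) z = 0 :=
      integral_pdy_eq_zero (hχs.mul (contDiff_V2 hT)) hχcs.mul_right
    have hxsplit : ∫ z : ℂ, pdx (fun w => χn w * V1 T w) z
        = (∫ z : ℂ, pdx χn z * V1 T z) + ∫ z : ℂ, χn z * pdx (V1 T) z := by
      rw [← integral_add hi1 hi2]
      apply integral_congr_ae
      apply Filter.Eventually.of_forall
      intro z
      exact pdx_mul ((hχs.differentiable (by simp)) z) (((contDiff_V1 hT).differentiable (by simp)) z)
    have hysplit : ∫ z : ℂ, pdy (fun w => χn w * V2 T w) z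
        = (∫ z : ℂ, pdy χn z * V2 T z) + ∫ z : ℂ, χn z * pdy (V2 T) z := by
      rw [← integral_add hi3 hi4]
      apply integral_congr_ae
      apply Filter.Eventually.of_forall
      intro z
      exact pdy_mul ((hχs.differentiable (by simp)) z) (((contDiff_V2 hT).differentiable (by simp)) z)
    have hDsum : ∀ z : ℂ, χn z * pdx (V1 T) z + χn z * pdy (V2 T) z = χn z * Dfun T z := by
      intro z
      rw [Dfun, ← div_identity hT z]
      ring
    have hchiD : Integrable (fun z => χn z * Dfun T z) := by
      refine hDint.bdd_mul (c := 1) ?_ ?_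
      · exact hχs.continuous.aestronglyMeasurable
      · refine Filter.Eventually.of_forall (fun z => ?_)
        rw [Real.norm_eq_abs, abs_of_nonneg (χ.nonneg)]
        exact χ.le_one
    have hmain : ∫ z : ℂ, χn z * Dfun T z = -(∫ z : ℂ, Bn z) := by
      have hBint : Integrable Bn := hi1.add hi3
      have e1 : ∫ z : ℂ, Bn z = (∫ z : ℂ, pdx χn z * V1 T z) + ∫ z : ℂ, pdy χn z * V2 T z :=
        integral_add hi1 hi3
      have e2 : (∫ z : ℂ, χn z * pdx (V1 T) z) + ∫ z : ℂ, χn z * pdy (V2 T) z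
          = ∫ z : ℂ, χn z * Dfun T z := by
        rw [← integral_add hi2 hi4]
        apply integral_congr_ae
        exact Filter.Eventually.of_forall hDsum
      have := hx0
      have h4 : ((∫ z : ℂ, pdx χn z * V1 T z) + ∫ z : ℂ, χn z * pdx (V1 T) z)
          + ((∫ z : ℂ, pdy χn z * V2 T z) + ∫ z : ℂ, χn z * pdy (V2 T) z) = 0 := by
        rw [← hxsplit, ← hysplit, hx0, hy0]
        ring
      have h5 := e2
      rw [e1]
      linarith [h4, h5]
    -- bound the boundary term
    have hBsupp : ∀ z : ℂ, z ∉ Metric.closedBall (0:ℂ) (2*R) → Bn z = 0 := by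
      intro z hz
      simp only [Metric.mem_closedBall, dist_zero_right, not_le] at hz
      have h1 : pdx χn z = 0 := by rw [pdx, hzero2 z hz]; rfl
      have h2 : pdy χn z = 0 := by rw [pdy, hzero2 z hz]; rfl
      simp [hBn, h1, h2]
    have hBset : ∫ z : ℂ, Bn z = ∫ z in Metric.closedBall (0:ℂ) (2*R), Bn z :=
      (setIntegral_eq_integral_of_forall_compl_eq_zero hBsupp).symm
    have hBnorm : |∫ z in Metric.closedBall (0:ℂ) (2*R), Bn z|
        ≤ (2*K*CF/R^3) * (volume (Metric.closedBall (0:ℂ) (2*R))).toReal := by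
      have := norm_setIntegral_le_of_norm_le_const
        (measure_closedBall_lt_top (μ := (volume : Measure ℂ)) (x := (0:ℂ)) (r := 2*R))
        hBbound
      simpa [Real.norm_eq_abs, mul_comm, measureReal_def] using this
    have hvol : (volume (Metric.closedBall (0:ℂ) (2*R))).toReal = (2*R)^2 * v1 := by
      rw [Measure.addHaar_closedBall volume (0:ℂ) (by positivity : (0:ℝ) ≤ 2*R)]
      rw [ENNReal.toReal_mul, ENNReal.toReal_ofReal (by positivity), hv1]
      rw [Complex.finrank_real_complex]
    rw [hmain, abs_neg, hBset]
    calc |∫ z in Metric.closedBall (0:ℂ) (2*R), Bn z|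
        ≤ (2*K*CF/R^3) * ((2*R)^2 * v1) := by rw [← hvol]; exact hBnorm
      _ = (8*K*CF*v1) / R := by field_simp; ring
  -- limits
  have htends1 : Filter.Tendsto (fun n : ℕ => ∫ z : ℂ, χ ((((n:ℝ)+1))⁻¹ • z) * Dfun T z)
      Filter.atTop (nhds (∫ z : ℂ, Dfun T z)) := by
    apply tendsto_integral_of_dominated_convergence (fun z => |Dfun T z|)
    · intro n
      refine AEStronglyMeasurable.mul ?_ hDint.aestronglyMeasurable
      exact (((χ.contDiff (n := (⊤ : ℕ∞))).comp
        ((contDiff_const (c := (((n:ℝ)+1))⁻¹)).smul contDiff_id)).continuous).aestronglyMeasurable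
    · exact hDint.abs
    · intro n
      apply Filter.Eventually.of_forall
      intro z
      rw [Real.norm_eq_abs, abs_mul]
      calc |χ ((((n:ℝ)+1))⁻¹ • z)| * |Dfun T z| ≤ 1 * |Dfun T z| := by
            refine mul_le_mul_of_nonneg_right ?_ (abs_nonneg _)
            rw [abs_of_nonneg (χ.nonneg)]
            exact χ.le_one
        _ = |Dfun T z| := one_mul _
    · apply Filter.Eventually.of_forall
      intro z
      apply Filter.Tendsto.congr' _ tendsto_const_nhds
      filter_upwards [Filter.eventually_ge_atTop ⌈‖z‖⌉₊] with n hn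
      have h1 : ‖z‖ ≤ (n:ℝ) + 1 := by
        calc ‖z‖ ≤ (⌈‖z‖⌉₊ : ℝ) := Nat.le_ceil _
          _ ≤ (n:ℝ) := by exact_mod_cast hn
          _ ≤ (n:ℝ) + 1 := by linarith
      have hone : χ ((((n:ℝ)+1))⁻¹ • z) = 1 := by
        apply χ.one_of_mem_closedBall
        simp only [Metric.mem_closedBall, dist_zero_right]
        rw [norm_smul, Real.norm_eq_abs, abs_of_pos (by positivity)]
        have hp : (0:ℝ) < (n:ℝ) + 1 := by positivity
        calc ((n:ℝ)+1)⁻¹ * ‖z‖ ≤ ((n:ℝ)+1)⁻¹ * ((n:ℝ)+1) :=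
              mul_le_mul_of_nonneg_left h1 (by positivity)
          _ = 1 := inv_mul_cancel₀ (ne_of_gt hp)
      rw [hone, one_mul]
  have htends2 : Filter.Tendsto (fun n : ℕ => ∫ z : ℂ, χ ((((n:ℝ)+1))⁻¹ • z) * Dfun T z)
      Filter.atTop (nhds 0) := by
    have hden : Filter.Tendsto (fun n : ℕ => (n:ℝ) + 1) Filter.atTop Filter.atTop :=
      Filter.tendsto_atTop_add_const_right _ 1 tendsto_natCast_atTop_atTop
    exact squeeze_zero_norm (fun n => by rw [Real.norm_eq_abs]; exact key n)
      (Filter.Tendsto.div_atTop tendsto_const_nhds hden)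
  exact tendsto_nhds_unique htends1 htends2

end final

end PZaux

/-- For any smooth weight-one density `T`, the functions `T·Δ²T` and
`(∂ₓₓT − ∂_yyT)² + 4(∂ₓ∂_yT)²` are integrable on `ℝ²` with equal integrals; in
particular `∫ T·Δ²T ≥ 0`. (Since `Δ² = 16 ∂_z²∂_z̄²`, this is the identity
`⟨∂_z²∂_z̄²T, T⟩ = ∫ |∂_z²T|²` for the SL(2,ℂ)-invariant inner product.) -/
theorem paneitz_inner_product (T : ℂ → ℝ) (hT : SmoothWeightOneDensity T) :
    Integrable (fun z : ℂ => T z * lap (lap T) z) ∧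
    Integrable (fun z : ℂ =>
      (pdx (pdx T) z - pdy (pdy T) z) ^ 2 + 4 * (pdx (pdy T) z) ^ 2) ∧
    (∫ z : ℂ, T z * lap (lap T) z) =
      (∫ z : ℂ, (pdx (pdx T) z - pdy (pdy T) z) ^ 2 + 4 * (pdx (pdy T) z) ^ 2) ∧
    0 ≤ ∫ z : ℂ, T z * lap (lap T) z := by
  obtain ⟨hTs, That, hh, heq⟩ := hT
  have hTs' : ContDiff ℝ PZaux.iSmooth T := hTs.of_le (by unfold PZaux.iSmooth; exact le_rfl)
  have hh' : ContDiff ℝ PZaux.iSmooth That := hh.of_le (by unfold PZaux.iSmooth; exact le_rfl)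
  have hc1 : Continuous (fun z : ℂ => T z * lap (lap T) z) :=
    hTs'.continuous.mul (PZaux.contDiff_lapT (PZaux.contDiff_lapT hTs')).continuous
  have hc2 : Continuous (fun z : ℂ =>
      (pdx (pdx T) z - pdy (pdy T) z) ^ 2 + 4 * (pdx (pdy T) z) ^ 2) :=
    (((PZaux.contDiff_pdx (PZaux.contDiff_pdx hTs')).continuous.sub
        (PZaux.contDiff_pdy (PZaux.contDiff_pdy hTs')).continuous).pow 2).add
      (continuous_const.mul ((PZaux.contDiff_pdx (PZaux.contDiff_pdy hTs')).continuous.pow 2))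
  obtain ⟨C, hCn, hC⟩ := PZaux.decay_bounds hTs' hh' heq
  have hi1 : Integrable (fun z : ℂ => T z * lap (lap T) z) :=
    PZaux.integrable_of_decay _ hc1 C (fun z hz => (hC z hz).1)
  have hi2 : Integrable (fun z : ℂ =>
      (pdx (pdx T) z - pdy (pdy T) z) ^ 2 + 4 * (pdx (pdy T) z) ^ 2) :=
    PZaux.integrable_of_decay _ hc2 C (fun z hz => (hC z hz).2.1)
  have hD : Integrable (PZaux.Dfun T) := hi1.sub hi2
  have h0 : ∫ z : ℂ, PZaux.Dfun T z = 0 :=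
    PZaux.integral_D_zero hTs' hD C hCn (fun z hz => (hC z hz).2.2)
  have heqint : (∫ z : ℂ, T z * lap (lap T) z)
      - (∫ z : ℂ, (pdx (pdx T) z - pdy (pdy T) z) ^ 2 + 4 * (pdx (pdy T) z) ^ 2) = 0 := by
    rw [← integral_sub hi1 hi2]
    exact h0
  have heq2 : (∫ z : ℂ, T z * lap (lap T) z)
      = ∫ z : ℂ, (pdx (pdx T) z - pdy (pdy T) z) ^ 2 + 4 * (pdx (pdy T) z) ^ 2 :=
    sub_eq_zero.mp heqint
  refine ⟨hi1, hi2, heq2, ?_⟩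
  rw [heq2]
  apply integral_nonneg
  intro z
  positivity
end
end

section
/- Let T be a smooth weight-one density. Then ∫_{ℝ²} [(∂ₓₓT − ∂_yyT)² + 4(∂ₓ∂_yT)²] dA = 0 if and only if there exists p ∈ ℝ⁴ with T = p·Q. (This identifies the radical of the SL(2,ℂ)-invariant inner product ⟨∂_z²∂_z̄²T, T⟩ on supertranslations with the subspace of translations, so that the inner product is positive definite on the quotient space of vacua shifts.) -/
open MeasureTheory

noncomputable section

section AUX
open Complex
lemma clm_decomp {F : Type*} [NormedAddCommGroup F] [NormedSpace ℝ F]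
    (L : ℂ →L[ℝ] F) (v : ℂ) : L v = v.re • L 1 + v.im • L Complex.I := by
  have hv : v = v.re • (1 : ℂ) + v.im • Complex.I := by
    rw [Complex.real_smul, Complex.real_smul, mul_one]
    exact (Complex.re_add_im v).symm
  conv_lhs => rw [hv]
  rw [map_add, L.map_smul, L.map_smul]

lemma contDiff_fderiv_apply {F : Type*} [NormedAddCommGroup F] [NormedSpace ℝ F]
    {f : ℂ → F} (hf : ContDiff ℝ (⊤ : ℕ∞) f) (v : ℂ) :
    ContDiff ℝ (⊤ : ℕ∞) (fun z => fderiv ℝ f z v) :=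
  (hf.fderiv_right (by simp)).clm_apply contDiff_const

def Kop (g : ℂ → ℂ) (z : ℂ) : ℂ := fderiv ℝ g z 1 + fderiv ℝ g z Complex.I * Complex.I

lemma Kop_mul {a b : ℂ → ℂ} {z : ℂ} (ha : DifferentiableAt ℝ a z)
    (hb : DifferentiableAt ℝ b z) :
    Kop (fun w => a w * b w) z = Kop a z * b z + a z * Kop b z := by
  unfold Kop
  rw [fderiv_fun_mul ha hb]
  simp only [ContinuousLinearMap.add_apply, ContinuousLinearMap.smul_apply, smul_eq_mul]
  ring

lemma myHasFDerivAt_inv {z : ℂ} (hz : z ≠ 0) :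
    HasFDerivAt (fun w : ℂ => w⁻¹)
      (((1 : ℂ →L[ℂ] ℂ).smulRight (-(z^2)⁻¹)).restrictScalars ℝ) z :=
  ((hasDerivAt_inv hz).hasFDerivAt).restrictScalars ℝ

lemma Kop_comp_inv {g : ℂ → ℂ} {z : ℂ} (hz : z ≠ 0)
    (hg : DifferentiableAt ℝ g z⁻¹) :
    Kop (fun w => g w⁻¹) z = -((starRingEnd ℂ) z ^ 2)⁻¹ * Kop g z⁻¹ := by
  have hι := myHasFDerivAt_inv hz
  have hcomp := hg.hasFDerivAt.comp z hι
  have hf : fderiv ℝ (fun w => g w⁻¹) z = (fderiv ℝ g z⁻¹).comp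
      (((1 : ℂ →L[ℂ] ℂ).smulRight (-(z^2)⁻¹)).restrictScalars ℝ) := hcomp.fderiv
  unfold Kop
  rw [hf]
  simp only [ContinuousLinearMap.coe_comp', Function.comp_apply,
    ContinuousLinearMap.coe_restrictScalars', ContinuousLinearMap.smulRight_apply,
    ContinuousLinearMap.one_apply, smul_eq_mul]
  set c : ℂ := -(z^2)⁻¹ with hc
  rw [show (1 : ℂ) * c = c by ring, show Complex.I * c = c * Complex.I by ring]
  rw [clm_decomp (fderiv ℝ g z⁻¹) c, clm_decomp (fderiv ℝ g z⁻¹) (c * Complex.I)]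
  have hcbar : -((starRingEnd ℂ) z ^ 2)⁻¹ = (c.re : ℂ) - c.im * Complex.I := by
    have h1 : -((starRingEnd ℂ) z ^ 2)⁻¹ = (starRingEnd ℂ) c := by
      simp [hc]
    have h2 : (starRingEnd ℂ) c = (c.re : ℂ) - c.im * Complex.I := by
      simp [Complex.ext_iff]
    rw [h1, h2]
  rw [hcbar]
  set X := fderiv ℝ g z⁻¹ 1
  set Y := fderiv ℝ g z⁻¹ Complex.I
  simp only [Complex.mul_re, Complex.mul_im, Complex.I_re, Complex.I_im, Complex.real_smul,
    mul_zero, mul_one, zero_sub, add_zero, zero_add]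
  push_cast
  ring_nf
  rw [Complex.I_sq]
  ring


/-- Clairaut: second derivative application in terms of iterated directional derivatives. -/
lemma pd_dir_eq {F : Type*} [NormedAddCommGroup F] [NormedSpace ℝ F]
    {f : ℂ → F} (hf : ContDiff ℝ (⊤ : ℕ∞) f) (v w : ℂ) (z : ℂ) :
    fderiv ℝ (fun t => fderiv ℝ f t v) z w = fderiv ℝ (fderiv ℝ f) z w v := by
  have hdf : Differentiable ℝ (fderiv ℝ f) := (hf.fderiv_right (m := (⊤ : ℕ∞)) (by simp)).differentiable (by simp)
  have h := ((ContinuousLinearMap.apply ℝ F v).hasFDerivAt.comp z (hdf z).hasFDerivAt).fderiv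
  calc fderiv ℝ (fun t => fderiv ℝ f t v) z w
      = fderiv ℝ ((ContinuousLinearMap.apply ℝ F v) ∘ (fderiv ℝ f)) z w := rfl
    _ = fderiv ℝ (fderiv ℝ f) z w v := by rw [h]; rfl

lemma clairaut {f : ℂ → ℝ} (hf : ContDiff ℝ (⊤ : ℕ∞) f) (z : ℂ) :
    pdx (pdy f) z = pdy (pdx f) z := by
  have hdiff : Differentiable ℝ f := hf.differentiable (by simp)
  have hdf : Differentiable ℝ (fderiv ℝ f) := (hf.fderiv_right (m := (⊤ : ℕ∞)) (by simp)).differentiable (by simp)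
  have hsymm := second_derivative_symmetric (f' := fderiv ℝ f)
    (fun y => (hdiff y).hasFDerivAt) (hdf z).hasFDerivAt Complex.I 1
  unfold pdx pdy
  rw [pd_dir_eq hf Complex.I 1, pd_dir_eq hf 1 Complex.I]
  rw [← hsymm]

/-- constancy from vanishing partials -/
lemma const_of_pd_zero {f : ℂ → ℝ} (hf : Differentiable ℝ f)
    (hx : ∀ z, pdx f z = 0) (hy : ∀ z, pdy f z = 0) (z : ℂ) : f z = f 0 := by
  apply is_const_of_fderiv_eq_zero hf
  intro x
  ext v
  rw [clm_decomp (fderiv ℝ f x) v]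
  have h1 := hx x; have h2 := hy x
  unfold pdx at h1; unfold pdy at h2
  simp [h1, h2]

/-- derivatives of the model quadratic -/
lemma quad_hasFDerivAt (a b c d : ℝ) (z : ℂ) :
    HasFDerivAt (fun w : ℂ => a * (w.re ^ 2 + w.im ^ 2) + b * w.re + c * w.im + d)
      ((2 * a * z.re + b) • (Complex.reCLM : ℂ →L[ℝ] ℝ)
        + (2 * a * z.im + c) • (Complex.imCLM : ℂ →L[ℝ] ℝ)) z := by
  have hre : HasFDerivAt (fun w : ℂ => w.re) (Complex.reCLM : ℂ →L[ℝ] ℝ) z :=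
    Complex.reCLM.hasFDerivAt
  have him : HasFDerivAt (fun w : ℂ => w.im) (Complex.imCLM : ℂ →L[ℝ] ℝ) z :=
    Complex.imCLM.hasFDerivAt
  have h : HasFDerivAt (fun w : ℂ => a * (w.re ^ 2 + w.im ^ 2) + b * w.re + c * w.im + d)
      (a • ((2 * z.re) • (Complex.reCLM : ℂ →L[ℝ] ℝ) + (2 * z.im) • (Complex.imCLM : ℂ →L[ℝ] ℝ))
        + b • (Complex.reCLM : ℂ →L[ℝ] ℝ) + c • (Complex.imCLM : ℂ →L[ℝ] ℝ) + 0) z := by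
    apply HasFDerivAt.add _ (hasFDerivAt_const d z)
    apply HasFDerivAt.add _ (him.const_mul c)
    apply HasFDerivAt.add _ (hre.const_mul b)
    have hsq : HasFDerivAt (fun w : ℂ => w.re ^ 2 + w.im ^ 2)
        ((2 * z.re) • (Complex.reCLM : ℂ →L[ℝ] ℝ) + (2 * z.im) • (Complex.imCLM : ℂ →L[ℝ] ℝ)) z := by
      have h1 : HasFDerivAt (fun w : ℂ => w.re ^ 2) ((2 * z.re) • (Complex.reCLM : ℂ →L[ℝ] ℝ)) z := by
        have := hre.fun_mul hre
        simpa [pow_two, two_mul, add_smul] using this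
      have h2 : HasFDerivAt (fun w : ℂ => w.im ^ 2) ((2 * z.im) • (Complex.imCLM : ℂ →L[ℝ] ℝ)) z := by
        have := him.fun_mul him
        simpa [pow_two, two_mul, add_smul] using this
      exact h1.add h2
    exact hsq.const_mul a
  convert h using 1
  ext v
  simp
  ring
lemma quad_pdx (a b c d : ℝ) (z : ℂ) :
    pdx (fun w : ℂ => a * (w.re ^ 2 + w.im ^ 2) + b * w.re + c * w.im + d) z = 2 * a * z.re + b := by
  unfold pdx
  rw [(quad_hasFDerivAt a b c d z).fderiv]
  simp
lemma quad_pdy (a b c d : ℝ) (z : ℂ) :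
    pdy (fun w : ℂ => a * (w.re ^ 2 + w.im ^ 2) + b * w.re + c * w.im + d) z = 2 * a * z.im + c := by
  unfold pdy
  rw [(quad_hasFDerivAt a b c d z).fderiv]
  simp
lemma quad_diffAt (a b c d : ℝ) (z : ℂ) :
    DifferentiableAt ℝ (fun w : ℂ => a * (w.re ^ 2 + w.im ^ 2) + b * w.re + c * w.im + d) z :=
  (quad_hasFDerivAt a b c d z).differentiableAt

/-- elementary Kop values -/
lemma Kop_id (z : ℂ) : Kop (fun w : ℂ => w) z = 0 := by
  unfold Kop
  rw [fderiv_id']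
  simp [Complex.I_mul_I]

lemma Kop_const (a z : ℂ) : Kop (fun _ : ℂ => a) z = 0 := by
  unfold Kop
  simp [fderiv_const]

lemma Kop_conj (z : ℂ) : Kop (fun w : ℂ => (starRingEnd ℂ) w) z = 2 := by
  unfold Kop
  have : fderiv ℝ (fun w : ℂ => (starRingEnd ℂ) w) z = (Complex.conjCLE : ℂ ≃L[ℝ] ℂ) := by
    exact (Complex.conjCLE.toContinuousLinearMap.hasFDerivAt (x := z)).fderiv
  rw [this]
  simp [Complex.conjCLE_apply, Complex.I_mul_I]
  norm_num

lemma Kop_sub {a b : ℂ → ℂ} {z : ℂ} (ha : DifferentiableAt ℝ a z)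
    (hb : DifferentiableAt ℝ b z) :
    Kop (fun w => a w - b w) z = Kop a z - Kop b z := by
  unfold Kop
  rw [fderiv_fun_sub ha hb]
  simp only [ContinuousLinearMap.sub_apply]
  ring

lemma diffAt_conj (z : ℂ) : DifferentiableAt ℝ (fun w : ℂ => (starRingEnd ℂ) w) z :=
  (Complex.conjCLE.toContinuousLinearMap.hasFDerivAt (x := z)).differentiableAt

lemma Kop_conj_inv {z : ℂ} (hz : z ≠ 0) :
    Kop (fun w : ℂ => ((starRingEnd ℂ) w)⁻¹) z = -2 * ((starRingEnd ℂ) z ^ 2)⁻¹ := by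
  have h : (fun w : ℂ => ((starRingEnd ℂ) w)⁻¹) = (fun w : ℂ => (starRingEnd ℂ) (w⁻¹)) := by
    funext w; rw [map_inv₀]
  rw [h, Kop_comp_inv hz (diffAt_conj _), Kop_conj]
  ring

lemma hasFDerivAt_normSq (z : ℂ) :
    HasFDerivAt (fun w : ℂ => Complex.normSq w)
      ((2 * z.re) • (Complex.reCLM : ℂ →L[ℝ] ℝ) + (2 * z.im) • (Complex.imCLM : ℂ →L[ℝ] ℝ)) z := by
  have hre : HasFDerivAt (fun w : ℂ => w.re) (Complex.reCLM : ℂ →L[ℝ] ℝ) z :=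
    Complex.reCLM.hasFDerivAt
  have him : HasFDerivAt (fun w : ℂ => w.im) (Complex.imCLM : ℂ →L[ℝ] ℝ) z :=
    Complex.imCLM.hasFDerivAt
  have h1 := hre.fun_mul hre
  have h2 := him.fun_mul him
  have := h1.fun_add h2
  have heq : (fun w : ℂ => w.re * w.re + w.im * w.im) = fun w : ℂ => Complex.normSq w := by
    funext w; rw [Complex.normSq_apply]
  rw [heq] at this
  refine this.congr_fderiv ?_
  ext v
  simp
  ring

/-- combination lemma: for a real-linear functional on ℂ,
`L c + L (I c) * I = conj c * (L 1 + L I * I)` in ℂ. -/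
lemma dir_combo (L : ℂ →L[ℝ] ℝ) (c : ℂ) :
    ((L c : ℝ) : ℂ) + ((L (Complex.I * c) : ℝ) : ℂ) * Complex.I
      = (starRingEnd ℂ) c * (((L 1 : ℝ) : ℂ) + ((L Complex.I : ℝ) : ℂ) * Complex.I) := by
  rw [clm_decomp L c, clm_decomp L (Complex.I * c)]
  have hconj : (starRingEnd ℂ) c = (c.re : ℂ) - c.im * Complex.I := by
    simp [Complex.ext_iff]
  rw [hconj]
  simp only [Complex.mul_re, Complex.mul_im, Complex.I_re, Complex.I_im, smul_eq_mul,
    mul_zero, mul_one, zero_sub, add_zero, zero_add, zero_mul, sub_zero]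
  push_cast
  ring_nf
  rw [Complex.I_sq]
  ring

section formulas

variable {T u : ℂ → ℝ}

/-- Step (i): formula for the first-derivative combination of `T` off the origin. -/
lemma WT_formula (hT : ContDiff ℝ (⊤ : ℕ∞) T) (hu : ContDiff ℝ (⊤ : ℕ∞) u)
    (hrel : ∀ w : ℂ, w ≠ 0 → T w = Complex.normSq w * u w⁻¹)
    {z : ℂ} (hz : z ≠ 0) :
    ((pdx T z : ℝ) : ℂ) + ((pdy T z : ℝ) : ℂ) * Complex.I
      = 2 * z * ((u z⁻¹ : ℝ) : ℂ)
        - z * ((starRingEnd ℂ) z)⁻¹ * (((pdx u z⁻¹ : ℝ) : ℂ) + ((pdy u z⁻¹ : ℝ) : ℂ) * Complex.I) := by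
  -- local formula and its derivative
  set w := z⁻¹ with hw
  set c : ℂ := -(z ^ 2)⁻¹ with hc
  have hm := hasFDerivAt_normSq z
  have huc : HasFDerivAt (fun v : ℂ => u v⁻¹)
      ((fderiv ℝ u w).comp (((1 : ℂ →L[ℂ] ℂ).smulRight c).restrictScalars ℝ)) z :=
    ((hu.differentiable (by simp)) w).hasFDerivAt.comp z (myHasFDerivAt_inv hz)
  have hprod := hm.fun_mul huc
  -- T agrees with the product near z
  have hev : T =ᶠ[nhds z] fun v : ℂ => Complex.normSq v * u v⁻¹ := by
    have hmem : {v : ℂ | v ≠ 0} ∈ nhds z := by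
      exact IsOpen.mem_nhds isOpen_compl_singleton hz
    exact Filter.eventuallyEq_of_mem hmem (fun v hv => hrel v hv)
  have hfd : fderiv ℝ T z = fderiv ℝ (fun v : ℂ => Complex.normSq v * u v⁻¹) z := hev.fderiv_eq
  have hfd2 := hprod.fderiv
  have hx : pdx T z = Complex.normSq z * (fderiv ℝ u w (1 * c)) + u w * (2 * z.re) := by
    unfold pdx
    rw [hfd, hfd2]
    simp [ContinuousLinearMap.smulRight_apply]
    exact Or.inl rfl
  have hy : pdy T z = Complex.normSq z * (fderiv ℝ u w (Complex.I * c)) + u w * (2 * z.im) := by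
    unfold pdy
    rw [hfd, hfd2]
    simp [ContinuousLinearMap.smulRight_apply]
    exact Or.inl rfl
  rw [hx, hy]
  rw [one_mul]
  push_cast
  set L := fderiv ℝ u w
  have hcombo := dir_combo L c
  have hLx : (pdx u w : ℂ) = ((L 1 : ℝ) : ℂ) := rfl
  have hLy : (pdy u w : ℂ) = ((L Complex.I : ℝ) : ℂ) := rfl
  rw [hLx, hLy]
  -- rearrange to use hcombo
  have key : (Complex.normSq z : ℂ) * (starRingEnd ℂ) c = - z * ((starRingEnd ℂ) z)⁻¹ := by
    have hzbar : (starRingEnd ℂ) z ≠ 0 := by simpa using hz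
    have hns : (Complex.normSq z : ℂ) = z * (starRingEnd ℂ) z := (Complex.mul_conj z).symm
    rw [hns, hc]
    rw [map_neg, map_inv₀, map_pow]
    field_simp
  calc (Complex.normSq z : ℂ) * ((L c : ℝ) : ℂ) + ((u w : ℝ) : ℂ) * (2 * z.re)
        + ((Complex.normSq z : ℂ) * ((L (Complex.I * c) : ℝ) : ℂ) + ((u w : ℝ) : ℂ) * (2 * z.im)) * Complex.I
      = (Complex.normSq z : ℂ) * (((L c : ℝ) : ℂ) + ((L (Complex.I * c) : ℝ) : ℂ) * Complex.I)
        + ((u w : ℝ) : ℂ) * (2 * z.re + 2 * z.im * Complex.I) := by ring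
    _ = (Complex.normSq z : ℂ) * ((starRingEnd ℂ) c * (((L 1 : ℝ) : ℂ) + ((L Complex.I : ℝ) : ℂ) * Complex.I))
        + ((u w : ℝ) : ℂ) * (2 * z) := by
          rw [hcombo]
          congr 2
          have : (z.re : ℂ) + z.im * Complex.I = z := Complex.re_add_im z
          calc (2 * z.re : ℂ) + 2 * z.im * Complex.I = 2 * ((z.re : ℂ) + z.im * Complex.I) := by ring
            _ = 2 * z := by rw [this]
    _ = 2 * z * ((u w : ℝ) : ℂ) - z * ((starRingEnd ℂ) z)⁻¹ * (((L 1 : ℝ) : ℂ) + ((L Complex.I : ℝ) : ℂ) * Complex.I) := by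
          rw [← mul_assoc, key]
          ring

end formulas

section main

variable {T u : ℂ → ℝ}

/-- Kop of the complexification of a real function. -/
lemma Kop_ofReal {f : ℂ → ℝ} (hf : DifferentiableAt ℝ f z) :
    Kop (fun w => ((f w : ℝ) : ℂ)) z = ((pdx f z : ℝ) : ℂ) + ((pdy f z : ℝ) : ℂ) * Complex.I := by
  unfold Kop
  have h := (Complex.ofRealCLM.hasFDerivAt.comp z hf.hasFDerivAt).fderiv
  rw [show (fun w => ((f w : ℝ) : ℂ)) = (Complex.ofRealCLM ∘ f) from rfl, h]
  rfl

/-- the Kop-combination of first derivatives of `u`. -/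
def Gfun (u : ℂ → ℝ) (z : ℂ) : ℂ := ((pdx u z : ℝ) : ℂ) + ((pdy u z : ℝ) : ℂ) * Complex.I

lemma Gfun_contDiff (hu : ContDiff ℝ (⊤ : ℕ∞) u) : ContDiff ℝ (⊤ : ℕ∞) (Gfun u) := by
  unfold Gfun
  have h1 : ContDiff ℝ (⊤ : ℕ∞) (pdx u) := contDiff_fderiv_apply hu 1
  have h2 : ContDiff ℝ (⊤ : ℕ∞) (pdy u) := contDiff_fderiv_apply hu Complex.I
  exact ((Complex.ofRealCLM.contDiff.comp h1)).add
    (((Complex.ofRealCLM.contDiff.comp h2)).mul contDiff_const)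

lemma key_identity (hT : ContDiff ℝ (⊤ : ℕ∞) T) (hu : ContDiff ℝ (⊤ : ℕ∞) u)
    (hrel : ∀ w : ℂ, w ≠ 0 → T w = Complex.normSq w * u w⁻¹)
    {z : ℂ} (hz : z ≠ 0) :
    ((pdx (pdx T) z - pdy (pdy T) z : ℝ) : ℂ) + 2 * ((pdx (pdy T) z : ℝ) : ℂ) * Complex.I
      = z * (((starRingEnd ℂ) z)⁻¹) ^ 3 * Kop (Gfun u) z⁻¹ := by
  set w := z⁻¹ with hw
  have hzbar : (starRingEnd ℂ) z ≠ 0 := by simpa using hz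
  have hTx : ContDiff ℝ (⊤ : ℕ∞) (pdx T) := contDiff_fderiv_apply hT 1
  have hTy : ContDiff ℝ (⊤ : ℕ∞) (pdy T) := contDiff_fderiv_apply hT Complex.I
  have hG := Gfun_contDiff hu
  set WT : ℂ → ℂ := fun v => ((pdx T v : ℝ) : ℂ) + ((pdy T v : ℝ) : ℂ) * Complex.I with hWT
  -- Step 1 : Kop WT z = LHS
  have step1 : Kop WT z
      = ((pdx (pdx T) z - pdy (pdy T) z : ℝ) : ℂ) + 2 * ((pdx (pdy T) z : ℝ) : ℂ) * Complex.I := by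
    have hx1 : HasFDerivAt (fun v => ((pdx T v : ℝ) : ℂ))
        (Complex.ofRealCLM.comp (fderiv ℝ (pdx T) z)) z :=
      Complex.ofRealCLM.hasFDerivAt.comp z ((hTx.differentiable (by simp)) z).hasFDerivAt
    have hy1 : HasFDerivAt (fun v => ((pdy T v : ℝ) : ℂ) * Complex.I)
        (Complex.I • (Complex.ofRealCLM.comp (fderiv ℝ (pdy T) z))) z := by
      have := (Complex.ofRealCLM.hasFDerivAt.comp z
        ((hTy.differentiable (by simp)) z).hasFDerivAt).mul_const Complex.I
      exact this
    have hWTd := (hx1.fun_add hy1).fderiv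
    unfold Kop
    rw [hWTd]
    simp only [ContinuousLinearMap.add_apply, ContinuousLinearMap.coe_comp', Function.comp_apply,
      ContinuousLinearMap.smul_apply, Complex.ofRealCLM_apply, smul_eq_mul]
    have hcl : fderiv ℝ (pdy T) z 1 = fderiv ℝ (pdx T) z Complex.I := clairaut hT z
    rw [hcl]
    push_cast
    have : (pdx (pdx T) z : ℂ) = (fderiv ℝ (pdx T) z 1 : ℝ) := rfl
    rw [this]
    have : (pdy (pdy T) z : ℂ) = (fderiv ℝ (pdy T) z Complex.I : ℝ) := rfl
    rw [this]
    have : (pdx (pdy T) z : ℂ) = (fderiv ℝ (pdx T) z Complex.I : ℝ) := by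
      exact_mod_cast congrArg (fun r : ℝ => (r : ℂ)) (clairaut hT z)
    rw [this]
    push_cast
    ring_nf
    rw [Complex.I_sq]
    ring
  -- Step 2 : WT agrees with the explicit formula near z
  set Φ : ℂ → ℂ := fun v => 2 * v * ((u v⁻¹ : ℝ) : ℂ) - v * ((starRingEnd ℂ) v)⁻¹ * Gfun u v⁻¹ with hΦ
  have hev : WT =ᶠ[nhds z] Φ := by
    have hmem : {v : ℂ | v ≠ 0} ∈ nhds z := IsOpen.mem_nhds isOpen_compl_singleton hz
    refine Filter.eventuallyEq_of_mem hmem (fun v hv => ?_)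
    exact WT_formula hT hu hrel hv
  have step2 : Kop WT z = Kop Φ z := by
    unfold Kop
    rw [hev.fderiv_eq]
  -- Step 3 : compute Kop Φ z
  have hdu : Differentiable ℝ u := hu.differentiable (by simp)
  have hdG : Differentiable ℝ (Gfun u) := hG.differentiable (by simp)
  have hdinv : DifferentiableAt ℝ (fun v : ℂ => v⁻¹) z := (myHasFDerivAt_inv hz).differentiableAt
  have d_uci : DifferentiableAt ℝ (fun v : ℂ => ((u v⁻¹ : ℝ) : ℂ)) z :=
    (Complex.ofRealCLM.differentiableAt.comp _ ((hdu z⁻¹).comp z hdinv))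
  have d_Gci : DifferentiableAt ℝ (fun v : ℂ => Gfun u v⁻¹) z := (hdG z⁻¹).comp z hdinv
  have d_two : DifferentiableAt ℝ (fun v : ℂ => 2 * v) z := by
    exact (differentiable_id.const_mul (2:ℂ)).differentiableAt
  have d_cinv : DifferentiableAt ℝ (fun v : ℂ => ((starRingEnd ℂ) v)⁻¹) z := by
    have : (fun v : ℂ => ((starRingEnd ℂ) v)⁻¹) = (fun v : ℂ => (starRingEnd ℂ) (v⁻¹)) := by
      funext v; rw [map_inv₀]
    rw [this]
    exact (diffAt_conj z⁻¹).comp z hdinv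
  have d_m : DifferentiableAt ℝ (fun v : ℂ => v * ((starRingEnd ℂ) v)⁻¹) z :=
    differentiableAt_id.mul d_cinv
  have step3 : Kop Φ z = z * (((starRingEnd ℂ) z)⁻¹) ^ 3 * Kop (Gfun u) w := by
    have ha : Kop (fun v : ℂ => 2 * v * ((u v⁻¹ : ℝ) : ℂ)) z
        = 2 * z * (-((starRingEnd ℂ) z ^ 2)⁻¹ * ((( pdx u w :ℝ):ℂ) + ((pdy u w :ℝ):ℂ) * Complex.I)) := by
      rw [Kop_mul d_two d_uci]
      have h2v : Kop (fun v : ℂ => 2 * v) z = 0 := by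
        rw [Kop_mul (a := fun _ : ℂ => (2:ℂ)) (b := fun v : ℂ => v)
          (differentiableAt_const (2:ℂ)) differentiableAt_id]
        rw [Kop_const, Kop_id]
        ring
      rw [h2v, Kop_comp_inv (g := fun v : ℂ => ((u v : ℝ) : ℂ)) hz
        (Complex.ofRealCLM.differentiableAt.comp _ (hdu z⁻¹)),
        Kop_ofReal (hdu z⁻¹)]
      ring
    have hb : Kop (fun v : ℂ => v * ((starRingEnd ℂ) v)⁻¹ * Gfun u v⁻¹) z
        = (-2 * z * ((starRingEnd ℂ) z ^ 2)⁻¹) * Gfun u w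
          + z * ((starRingEnd ℂ) z)⁻¹ * (-((starRingEnd ℂ) z ^ 2)⁻¹ * Kop (Gfun u) w) := by
      rw [Kop_mul d_m d_Gci]
      have hm : Kop (fun v : ℂ => v * ((starRingEnd ℂ) v)⁻¹) z = z * (-2 * ((starRingEnd ℂ) z ^ 2)⁻¹) := by
        rw [Kop_mul (a := fun v : ℂ => v) (b := fun v : ℂ => ((starRingEnd ℂ) v)⁻¹)
          differentiableAt_id d_cinv, Kop_id, Kop_conj_inv hz]
        ring
      rw [hm, Kop_comp_inv hz (hdG z⁻¹)]
      ring
    have hsub : Kop Φ z = Kop (fun v : ℂ => 2 * v * ((u v⁻¹ : ℝ) : ℂ)) z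
        - Kop (fun v : ℂ => v * ((starRingEnd ℂ) v)⁻¹ * Gfun u v⁻¹) z :=
      Kop_sub (d_two.mul d_uci) (d_m.mul d_Gci)
    rw [hsub, ha, hb]
    have hGw : Gfun u w = (((pdx u w :ℝ):ℂ) + ((pdy u w :ℝ):ℂ) * Complex.I) := rfl
    rw [← hGw]
    have hfix : (((starRingEnd ℂ) z)⁻¹) ^ 3
        = (((starRingEnd ℂ) z) ^ 2)⁻¹ * ((starRingEnd ℂ) z)⁻¹ := by
      rw [pow_succ, inv_pow]
    linear_combination (-(z * Kop (Gfun u) z⁻¹)) * hfix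
  rw [← step1, step2, step3]

end main

lemma normSq_combo (a b : ℝ) :
    Complex.normSq (((a : ℝ) : ℂ) + 2 * ((b : ℝ) : ℂ) * Complex.I) = a ^ 2 + 4 * b ^ 2 := by
  simp [Complex.normSq_apply]
  ring

lemma pd_sub {f g : ℂ → ℝ} {z : ℂ} (hf : DifferentiableAt ℝ f z) (hg : DifferentiableAt ℝ g z) :
    pdx (fun w => f w - g w) z = pdx f z - pdx g z ∧
    pdy (fun w => f w - g w) z = pdy f z - pdy g z := by
  unfold pdx pdy
  rw [fderiv_fun_sub hf hg]
  simp

lemma pd_zero_fun (z : ℂ) : pdx (fun _ : ℂ => (0:ℝ)) z = 0 ∧ pdy (fun _ : ℂ => (0:ℝ)) z = 0 := by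
  unfold pdx pdy
  simp

section forwardPDE

variable {T : ℂ → ℝ}

/-- From the two PDEs, `T` is the model quadratic. -/
lemma quadratic_of_pde (hT : ContDiff ℝ (⊤ : ℕ∞) T)
    (hxx : ∀ z, pdx (pdx T) z = pdy (pdy T) z)
    (hxy : ∀ z, pdx (pdy T) z = 0) :
    ∀ z : ℂ, T z = (pdx (pdx T) 0 / 2) * (z.re ^ 2 + z.im ^ 2)
      + pdx T 0 * z.re + pdy T 0 * z.im + T 0 := by
  have hTd : Differentiable ℝ T := hT.differentiable (by simp)
  have hsx : ContDiff ℝ (⊤ : ℕ∞) (pdx T) := contDiff_fderiv_apply hT 1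
  have hsy : ContDiff ℝ (⊤ : ℕ∞) (pdy T) := contDiff_fderiv_apply hT Complex.I
  have hsxx : ContDiff ℝ (⊤ : ℕ∞) (pdx (pdx T)) := contDiff_fderiv_apply hsx 1
  have hsxy : ContDiff ℝ (⊤ : ℕ∞) (pdx (pdy T)) := contDiff_fderiv_apply hsy 1
  have hyx_eq : pdy (pdx T) = pdx (pdy T) := by
    funext w; exact (clairaut hT w).symm
  have hxyzero : pdx (pdy T) = (fun _ : ℂ => (0:ℝ)) := funext hxy
  -- pdx (pdx T) is constant
  have hconst : ∀ z, pdx (pdx T) z = pdx (pdx T) 0 := by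
    apply const_of_pd_zero (hsxx.differentiable (by simp))
    · intro z
      have h1 : pdx (pdx T) = pdy (pdy T) := funext hxx
      rw [h1]
      have h2 : pdx (pdy (pdy T)) z = pdy (pdx (pdy T)) z := clairaut hsy z
      rw [h2, hxyzero]
      exact (pd_zero_fun z).2
    · intro z
      have h2 : pdy (pdx (pdx T)) z = pdx (pdy (pdx T)) z := (clairaut hsx z).symm
      rw [h2, hyx_eq, hxyzero]
      exact (pd_zero_fun z).1
  set a : ℝ := pdx (pdx T) 0 / 2 with ha
  -- pdx T z = 2a z.re + pdx T 0
  have hpdxT : ∀ z : ℂ, pdx T z = 2 * a * z.re + pdx T 0 := by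
    intro z
    have hk : ∀ w : ℂ, (fun v : ℂ => pdx T v
        - (0 * (v.re ^ 2 + v.im ^ 2) + (2 * a) * v.re + 0 * v.im + 0)) w
        = (fun v : ℂ => pdx T v
        - (0 * (v.re ^ 2 + v.im ^ 2) + (2 * a) * v.re + 0 * v.im + 0)) 0 := by
      apply const_of_pd_zero
      · exact (hsx.differentiable (by simp)).sub (fun w => quad_diffAt 0 (2*a) 0 0 w)
      · intro w
        rw [(pd_sub ((hsx.differentiable (by simp)) w) (quad_diffAt 0 (2*a) 0 0 w)).1,
          quad_pdx, hconst w]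
        rw [ha]; ring
      · intro w
        rw [(pd_sub ((hsx.differentiable (by simp)) w) (quad_diffAt 0 (2*a) 0 0 w)).2,
          quad_pdy]
        have : pdy (pdx T) w = 0 := by rw [hyx_eq, hxyzero]
        rw [this]; ring
    have := hk z
    simp only at this
    have h0 : (0:ℝ) * ((0:ℂ).re ^ 2 + (0:ℂ).im ^ 2) + (2*a) * (0:ℂ).re + 0 * (0:ℂ).im + 0 = 0 := by
      simp
    rw [h0] at this
    linarith [this]
  have hpdyT : ∀ z : ℂ, pdy T z = 2 * a * z.im + pdy T 0 := by
    intro z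
    have hk : ∀ w : ℂ, (fun v : ℂ => pdy T v
        - (0 * (v.re ^ 2 + v.im ^ 2) + 0 * v.re + (2 * a) * v.im + 0)) w
        = (fun v : ℂ => pdy T v
        - (0 * (v.re ^ 2 + v.im ^ 2) + 0 * v.re + (2 * a) * v.im + 0)) 0 := by
      apply const_of_pd_zero
      · exact (hsy.differentiable (by simp)).sub (fun w => quad_diffAt 0 0 (2*a) 0 w)
      · intro w
        rw [(pd_sub ((hsy.differentiable (by simp)) w) (quad_diffAt 0 0 (2*a) 0 w)).1,
          quad_pdx, hxy w]
        ring
      · intro w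
        rw [(pd_sub ((hsy.differentiable (by simp)) w) (quad_diffAt 0 0 (2*a) 0 w)).2,
          quad_pdy]
        have : pdy (pdy T) w = 2 * a := by rw [← hxx w, hconst w, ha]; ring
        rw [this]; ring
    have := hk z
    simp only at this
    have h0 : (0:ℝ) * ((0:ℂ).re ^ 2 + (0:ℂ).im ^ 2) + 0 * (0:ℂ).re + (2*a) * (0:ℂ).im + 0 = 0 := by
      simp
    rw [h0] at this
    linarith [this]
  -- now T minus the quadratic is constant
  intro z
  have hk : ∀ w : ℂ, (fun v : ℂ => T v
      - (a * (v.re ^ 2 + v.im ^ 2) + pdx T 0 * v.re + pdy T 0 * v.im + 0)) w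
      = (fun v : ℂ => T v
      - (a * (v.re ^ 2 + v.im ^ 2) + pdx T 0 * v.re + pdy T 0 * v.im + 0)) 0 := by
    apply const_of_pd_zero
    · exact hTd.sub (fun w => quad_diffAt a (pdx T 0) (pdy T 0) 0 w)
    · intro w
      rw [(pd_sub (hTd w) (quad_diffAt a (pdx T 0) (pdy T 0) 0 w)).1, quad_pdx, hpdxT w]
      ring
    · intro w
      rw [(pd_sub (hTd w) (quad_diffAt a (pdx T 0) (pdy T 0) 0 w)).2, quad_pdy, hpdyT w]
      ring
  have := hk z
  simp only at this
  simp at this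
  linarith [this]

end forwardPDE


end AUX

/-- The radical of the SL(2,ℂ)-invariant inner product on supertranslations is exactly
the subspace of translations: `∫ [(∂ₓₓT − ∂_yyT)² + 4(∂ₓ∂_yT)²] = 0` iff `T = p·Q`
for some `p ∈ ℝ⁴`. -/
theorem paneitz_radical (T : ℂ → ℝ) (hT : SmoothWeightOneDensity T) :
    (∫ z : ℂ, (pdx (pdx T) z - pdy (pdy T) z) ^ 2 + 4 * (pdx (pdy T) z) ^ 2) = 0 ↔
      ∃ p : Fin 4 → ℝ, ∀ z : ℂ, T z = dotQ p z := by
  obtain ⟨hsm, That, hThat, hrel⟩ := hT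
  have hsx : ContDiff ℝ (⊤ : ℕ∞) (pdx T) := contDiff_fderiv_apply hsm 1
  have hsy : ContDiff ℝ (⊤ : ℕ∞) (pdy T) := contDiff_fderiv_apply hsm Complex.I
  constructor
  · -- forward direction
    intro h0
    set F : ℂ → ℝ := fun z => (pdx (pdx T) z - pdy (pdy T) z) ^ 2 + 4 * (pdx (pdy T) z) ^ 2
      with hF
    have hFnonneg : ∀ z, 0 ≤ F z := by intro z; rw [hF]; positivity
    have hFcont : Continuous F := by
      rw [hF]
      have h1 : Continuous (pdx (pdx T)) := (contDiff_fderiv_apply hsx 1).continuous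
      have h2 : Continuous (pdy (pdy T)) := (contDiff_fderiv_apply hsy Complex.I).continuous
      have h3 : Continuous (pdx (pdy T)) := (contDiff_fderiv_apply hsy 1).continuous
      continuity
    -- bound the integrand
    have hKGcont : Continuous (fun w => Kop (Gfun That) w) := by
      have hG := Gfun_contDiff hThat
      exact ((contDiff_fderiv_apply hG 1).continuous).add
        (((contDiff_fderiv_apply hG Complex.I).continuous).mul continuous_const)
    obtain ⟨M, hM⟩ := (isCompact_closedBall (0:ℂ) 1).exists_bound_of_continuousOn
      hKGcont.continuousOn
    obtain ⟨C₀, hC₀⟩ := (isCompact_closedBall (0:ℂ) 1).exists_bound_of_continuousOn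
      hFcont.continuousOn
    have hM0 : 0 ≤ M := le_trans (norm_nonneg _) (hM 0 (by simp))
    have hC₀0 : 0 ≤ C₀ := le_trans (norm_nonneg _) (hC₀ 0 (by simp))
    set C : ℝ := 16 * (C₀ + M ^ 2) with hC
    have hbound : ∀ z : ℂ, ‖F z‖ ≤ C * (1 + ‖z‖) ^ (-(4:ℝ)) := by
      intro z
      have hn0 : (0:ℝ) ≤ ‖z‖ := norm_nonneg z
      have h4 : ((1:ℝ) + ‖z‖) ^ (-(4:ℝ)) = (((1:ℝ)+‖z‖)^(4:ℕ))⁻¹ := by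
        rw [Real.rpow_neg (by linarith)]
        rw [show ((4:ℝ)) = ((4:ℕ):ℝ) by norm_num, Real.rpow_natCast]
      rw [h4, Real.norm_eq_abs, _root_.abs_of_nonneg (hFnonneg z)]
      have hpow_pos : (0:ℝ) < ((1:ℝ)+‖z‖)^(4:ℕ) := by positivity
      have key : F z * ((1:ℝ)+‖z‖)^(4:ℕ) ≤ C := by
        rcases le_total ‖z‖ 1 with hle | hge
        · have h1 : F z ≤ C₀ := by
            have := hC₀ z (by simpa [Metric.mem_closedBall, Complex.dist_eq] using
              (by simpa using hle : dist z 0 ≤ 1))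
            calc F z ≤ ‖F z‖ := le_abs_self _
              _ ≤ C₀ := this
          have h2 : ((1:ℝ)+‖z‖)^(4:ℕ) ≤ 16 := by
            calc ((1:ℝ)+‖z‖)^(4:ℕ) ≤ 2^(4:ℕ) :=
              pow_le_pow_left₀ (by linarith) (by linarith) 4
              _ = 16 := by norm_num
          have h3 := hFnonneg z
          have hM2 : (0:ℝ) ≤ M^2 := sq_nonneg M
          rw [hC]
          nlinarith
        · have hz : z ≠ 0 := by
            intro h
            rw [h] at hge; simp at hge; linarith
          have hid := key_identity hsm hThat hrel hz
          have hFz : F z = Complex.normSq (z * (((starRingEnd ℂ) z)⁻¹) ^ 3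
              * Kop (Gfun That) z⁻¹) := by
            calc F z = Complex.normSq (((pdx (pdx T) z - pdy (pdy T) z : ℝ) : ℂ)
                + 2 * ((pdx (pdy T) z : ℝ) : ℂ) * Complex.I) := (normSq_combo _ _).symm
              _ = _ := by rw [hid]
          have hnormsq : Complex.normSq (z * (((starRingEnd ℂ) z)⁻¹) ^ 3
              * Kop (Gfun That) z⁻¹)
              = ‖z‖^2 * ((‖z‖^2)⁻¹)^3 * Complex.normSq (Kop (Gfun That) z⁻¹) := by
            rw [Complex.normSq_mul, Complex.normSq_mul, map_pow,
              Complex.normSq_inv, Complex.normSq_conj]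
            rw [Complex.normSq_eq_norm_sq]
          have hKw : Complex.normSq (Kop (Gfun That) z⁻¹) ≤ M ^ 2 := by
            have hmem : z⁻¹ ∈ Metric.closedBall (0:ℂ) 1 := by
              simp only [Metric.mem_closedBall, Complex.dist_eq, sub_zero]
              rw [norm_inv]
              exact inv_le_one_of_one_le₀ hge
            have h := hM z⁻¹ hmem
            rw [Complex.normSq_eq_norm_sq]
            exact pow_le_pow_left₀ (norm_nonneg _) h 2
          have hn1 : (1:ℝ) ≤ ‖z‖ := hge
          have hnne : (‖z‖:ℝ) ≠ 0 := by linarith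
          -- F z * ‖z‖^4 = normSq K
          have hF4 : F z * ‖z‖^(4:ℕ) = Complex.normSq (Kop (Gfun That) z⁻¹) := by
            rw [hFz, hnormsq, inv_pow, ← pow_mul]
            have hc : (‖z‖:ℝ)^(2*3) * (‖z‖^(2*3))⁻¹ = 1 := mul_inv_cancel₀ (by positivity)
            linear_combination Complex.normSq (Kop (Gfun That) z⁻¹) * hc
          have h2 : ((1:ℝ)+‖z‖)^(4:ℕ) ≤ 16 * ‖z‖^(4:ℕ) := by
            calc ((1:ℝ)+‖z‖)^(4:ℕ) ≤ (2*‖z‖)^(4:ℕ) :=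
              pow_le_pow_left₀ (by linarith) (by linarith) 4
              _ = 16 * ‖z‖^(4:ℕ) := by ring
          calc F z * ((1:ℝ)+‖z‖)^(4:ℕ) ≤ F z * (16 * ‖z‖^(4:ℕ)) :=
                mul_le_mul_of_nonneg_left h2 (hFnonneg z)
            _ = 16 * (F z * ‖z‖^(4:ℕ)) := by ring
            _ = 16 * Complex.normSq (Kop (Gfun That) z⁻¹) := by rw [hF4]
            _ ≤ 16 * M^2 := by linarith [hKw]
            _ ≤ C := by rw [hC]; nlinarith
      calc F z = F z * ((1:ℝ)+‖z‖)^(4:ℕ) * (((1:ℝ)+‖z‖)^(4:ℕ))⁻¹ := by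
            field_simp
        _ ≤ C * (((1:ℝ)+‖z‖)^(4:ℕ))⁻¹ :=
            mul_le_mul_of_nonneg_right key (inv_nonneg.mpr (le_of_lt hpow_pos))
    have hgint : Integrable (fun z : ℂ => C * (1 + ‖z‖) ^ (-(4:ℝ))) := by
      refine (integrable_one_add_norm (E := ℂ) (μ := volume) ?_).const_mul C
      rw [Complex.finrank_real_complex]; norm_num
    have hFint : Integrable F := hgint.mono' hFcont.aestronglyMeasurable (ae_of_all _ hbound)
    have hae : F =ᵐ[volume] 0 := (integral_eq_zero_iff_of_nonneg hFnonneg hFint).mp h0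
    have hFeq : F = 0 := (Continuous.ae_eq_iff_eq volume hFcont continuous_const).mp hae
    have hF0 : ∀ z, F z = 0 := fun z => congrFun hFeq z
    have hxx : ∀ z, pdx (pdx T) z = pdy (pdy T) z := by
      intro z
      have h : (pdx (pdx T) z - pdy (pdy T) z) ^ 2 + 4 * (pdx (pdy T) z) ^ 2 = 0 := hF0 z
      nlinarith [sq_nonneg (pdx (pdx T) z - pdy (pdy T) z), sq_nonneg (pdx (pdy T) z)]
    have hxy : ∀ z, pdx (pdy T) z = 0 := by
      intro z
      have h : (pdx (pdx T) z - pdy (pdy T) z) ^ 2 + 4 * (pdx (pdy T) z) ^ 2 = 0 := hF0 z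
      nlinarith [sq_nonneg (pdx (pdx T) z - pdy (pdy T) z), sq_nonneg (pdx (pdy T) z)]
    have hquad := quadratic_of_pde hsm hxx hxy
    set a : ℝ := pdx (pdx T) 0 / 2
    set b : ℝ := pdx T 0
    set c : ℝ := pdy T 0
    set d : ℝ := T 0
    refine ⟨![-(a+d)/2, b/2, c/2, (d-a)/2], fun z => ?_⟩
    rw [hquad z]
    simp [dotQ, Q, Fin.sum_univ_four]
    ring
  · -- backward direction
    rintro ⟨p, hp⟩
    set A : ℝ := -(p 0 + p 3) with hA
    set B : ℝ := 2 * p 1 with hB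
    set Cc : ℝ := 2 * p 2 with hCc
    set D : ℝ := p 3 - p 0 with hD
    have hTeq : T = fun w : ℂ => A * (w.re ^ 2 + w.im ^ 2) + B * w.re + Cc * w.im + D := by
      funext w
      rw [hp w]
      simp [dotQ, Q, Fin.sum_univ_four, hA, hB, hCc, hD]
      ring
    have hpdx : pdx T = fun w : ℂ => 0 * (w.re^2+w.im^2) + (2*A) * w.re + 0 * w.im + B := by
      funext w
      rw [hTeq, quad_pdx]
      ring
    have hpdy : pdy T = fun w : ℂ => 0 * (w.re^2+w.im^2) + 0 * w.re + (2*A) * w.im + Cc := by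
      funext w
      rw [hTeq, quad_pdy]
      ring
    have hzero : ∀ z : ℂ, (pdx (pdx T) z - pdy (pdy T) z) ^ 2 + 4 * (pdx (pdy T) z) ^ 2 = 0 := by
      intro z
      rw [hpdx, hpdy, quad_pdx, quad_pdy, quad_pdx]
      ring
    have : (fun z : ℂ => (pdx (pdx T) z - pdy (pdy T) z) ^ 2 + 4 * (pdx (pdy T) z) ^ 2)
        = fun _ : ℂ => (0:ℝ) := funext hzero
    rw [this]
    exact integral_zero ℂ ℝ
end
end

section
/- For every m > 0 and each μ ∈ {0,1,2,3}, the function (x,y) ↦ (m/π)(1 + x² + y²)^{-3} Qᵘ(x,y) is Lebesgue integrable on ℝ² and ∫_{ℝ²} (m/π)(1 + x² + y²)^{-3} Qᵘ(x,y) dx dy equals the μ-th component of (−m, 0, 0, 0). That is, the hard massive supermomentum P(z) = (m/π)(1+|z|²)^{-3} projects under π onto the momentum p = (−m,0,0,0) of a mass-m particle at rest. -/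
open MeasureTheory

noncomputable section

open Filter Set Real

lemma hD3 (r : ℝ) : HasDerivAt (fun r : ℝ => -((4*(1+r^2)^2)⁻¹)) (r/(1+r^2)^3) r := by
  have h1 : HasDerivAt (fun r:ℝ => 1+r^2) (2*r) r := by
    simpa using (hasDerivAt_pow 2 r).const_add 1
  have h2 := ((h1.fun_pow 2).const_mul 4).fun_inv (by positivity)
  refine h2.fun_neg.congr_deriv ?_
  have : (1:ℝ)+r^2 ≠ 0 := by positivity
  field_simp
  ring

lemma hD2 (r : ℝ) : HasDerivAt (fun r : ℝ => -((2*(1+r^2))⁻¹)) (r/(1+r^2)^2) r := by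
  have h1 : HasDerivAt (fun r:ℝ => 1+r^2) (2*r) r := by
    simpa using (hasDerivAt_pow 2 r).const_add 1
  have h2 := (h1.const_mul 2).fun_inv (by positivity)
  refine h2.fun_neg.congr_deriv ?_
  have : (1:ℝ)+r^2 ≠ 0 := by positivity
  field_simp

lemma tend3 : Tendsto (fun r : ℝ => -((4*(1+r^2)^2)⁻¹)) atTop (nhds 0) := by
  have t1 : Tendsto (fun r:ℝ => 1+r^2) atTop atTop :=
    tendsto_atTop_add_const_left _ 1 (tendsto_pow_atTop two_ne_zero)
  have t2 : Tendsto (fun r:ℝ => ((1:ℝ)+r^2)^2) atTop atTop := by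
    simpa [pow_two] using t1.atTop_mul_atTop₀ t1
  have t3 : Tendsto (fun r:ℝ => 4*((1:ℝ)+r^2)^2) atTop atTop := t2.const_mul_atTop (by norm_num)
  have t4 : Tendsto (fun r:ℝ => ((4*(1+r^2)^2)⁻¹ : ℝ)) atTop (nhds 0) :=
    tendsto_inv_atTop_zero.comp t3
  have := t4.neg
  rw [neg_zero] at this
  exact this

lemma tend2 : Tendsto (fun r : ℝ => -((2*(1+r^2))⁻¹)) atTop (nhds 0) := by
  have t1 : Tendsto (fun r:ℝ => 1+r^2) atTop atTop :=
    tendsto_atTop_add_const_left _ 1 (tendsto_pow_atTop two_ne_zero)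
  have t3 : Tendsto (fun r:ℝ => 2*((1:ℝ)+r^2)) atTop atTop := t1.const_mul_atTop (by norm_num)
  have t4 : Tendsto (fun r:ℝ => ((2*(1+r^2))⁻¹ : ℝ)) atTop (nhds 0) :=
    tendsto_inv_atTop_zero.comp t3
  have := t4.neg
  rw [neg_zero] at this
  exact this

lemma intOn3 : IntegrableOn (fun r : ℝ => r/(1+r^2)^3) (Ioi 0) := by
  refine integrableOn_Ioi_deriv_of_nonneg ?_ (fun x _ => hD3 x)
    (fun x hx => div_nonneg hx.le (by positivity)) tend3
  exact (hD3 0).continuousAt.continuousWithinAt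

lemma intOn2 : IntegrableOn (fun r : ℝ => r/(1+r^2)^2) (Ioi 0) := by
  refine integrableOn_Ioi_deriv_of_nonneg ?_ (fun x _ => hD2 x)
    (fun x hx => div_nonneg hx.le (by positivity)) tend2
  exact (hD2 0).continuousAt.continuousWithinAt

lemma intVal3 : (∫ r in Ioi (0:ℝ), r/(1+r^2)^3) = 1/4 := by
  rw [integral_Ioi_of_hasDerivAt_of_tendsto (hD3 0).continuousAt.continuousWithinAt
    (fun x _ => hD3 x) intOn3 tend3]
  norm_num

lemma intVal2 : (∫ r in Ioi (0:ℝ), r/(1+r^2)^2) = 1/2 := by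
  rw [integral_Ioi_of_hasDerivAt_of_tendsto (hD2 0).continuousAt.continuousWithinAt
    (fun x _ => hD2 x) intOn2 tend2]
  norm_num

lemma angCos : (∫ θ in Ioo (-π) π, Real.cos θ) = 0 := by
  rw [← integral_Ioc_eq_integral_Ioo,
    ← intervalIntegral.integral_of_le (by linarith [Real.pi_pos] : -π ≤ π)]
  simp

lemma angSin : (∫ θ in Ioo (-π) π, Real.sin θ) = 0 := by
  rw [← integral_Ioc_eq_integral_Ioo,
    ← intervalIntegral.integral_of_le (by linarith [Real.pi_pos] : -π ≤ π)]
  simp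

lemma angOne : (∫ _ in Ioo (-π) π, (1:ℝ)) = 2*π := by
  rw [setIntegral_const, smul_eq_mul, mul_one, Real.volume_real_Ioo_of_le (by linarith [Real.pi_pos] : -π ≤ π)]
  ring

lemma symm_re (p : ℝ × ℝ) : (Complex.polarCoord.symm p).re = p.1 * Real.cos p.2 := by
  simp [Complex.polarCoord_symm_apply, Complex.add_re, Complex.mul_re, Complex.ofReal_re,
    Complex.cos_ofReal_re, Complex.sin_ofReal_re]

lemma symm_im (p : ℝ × ℝ) : (Complex.polarCoord.symm p).im = p.1 * Real.sin p.2 := by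
  simp [Complex.polarCoord_symm_apply, Complex.add_im, Complex.mul_im,
    Complex.cos_ofReal_re, Complex.sin_ofReal_re]

lemma Q_abs_le (z : ℂ) (μ : Fin 4) : |Q z μ| ≤ 2 * (1 + z.re^2 + z.im^2) := by
  fin_cases μ
  · show |(-1 - z.re^2 - z.im^2 : ℝ)| ≤ _
    rw [abs_le]; constructor <;> nlinarith [sq_nonneg z.re, sq_nonneg z.im]
  · show |(2 * z.re : ℝ)| ≤ _
    rw [abs_le]; constructor <;> nlinarith [sq_nonneg (z.re-1), sq_nonneg (z.re+1), sq_nonneg z.im]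
  · show |(2 * z.im : ℝ)| ≤ _
    rw [abs_le]; constructor <;> nlinarith [sq_nonneg (z.im-1), sq_nonneg (z.im+1), sq_nonneg z.re]
  · show |(1 - z.re^2 - z.im^2 : ℝ)| ≤ _
    rw [abs_le]; constructor <;> nlinarith [sq_nonneg z.re, sq_nonneg z.im]

lemma integrable_main (m : ℝ) (hm : 0 < m) (μ : Fin 4) :
    Integrable (fun z : ℂ => m / Real.pi / (1 + z.re ^ 2 + z.im ^ 2) ^ 3 * Q z μ) := by
  have h2 : Integrable (fun z : ℂ => ((1:ℝ) + ‖z‖^2) ^ (-(4:ℝ)/2)) :=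
    integrable_rpow_neg_one_add_norm_sq
      (by rw [Complex.finrank_real_complex]; norm_num)
  have hQ : Continuous fun z : ℂ => Q z μ := by
    fin_cases μ
    · show Continuous fun z : ℂ => (-1 - z.re^2 - z.im^2 : ℝ); fun_prop
    · show Continuous fun z : ℂ => (2 * z.re : ℝ); fun_prop
    · show Continuous fun z : ℂ => (2 * z.im : ℝ); fun_prop
    · show Continuous fun z : ℂ => (1 - z.re^2 - z.im^2 : ℝ); fun_prop
  have hc : Continuous fun z : ℂ => m / Real.pi / (1 + z.re ^ 2 + z.im ^ 2) ^ 3 * Q z μ := by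
    refine Continuous.mul (Continuous.div continuous_const (by fun_prop)
      (fun z => by positivity)) hQ
  refine (h2.const_mul (2*m/Real.pi)).mono' hc.aestronglyMeasurable
    (Filter.Eventually.of_forall fun z => ?_)
  have hn : (1:ℝ) + ‖z‖^2 = 1 + z.re^2 + z.im^2 := by
    rw [Complex.sq_norm, Complex.normSq_apply]; ring
  have hs : (0:ℝ) < 1 + z.re^2 + z.im^2 := by positivity
  have hr : ((1:ℝ)+‖z‖^2) ^ (-(4:ℝ)/2) = ((1+z.re^2+z.im^2)^2)⁻¹ := by
    rw [hn, show (-(4:ℝ)/2 : ℝ) = -((2:ℕ):ℝ) by norm_num, Real.rpow_neg hs.le,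
      Real.rpow_natCast]
  rw [hr, Real.norm_eq_abs, abs_mul,
    abs_of_nonneg (by positivity : (0:ℝ) ≤ m / Real.pi / (1 + z.re ^ 2 + z.im ^ 2) ^ 3)]
  calc m / Real.pi / (1 + z.re ^ 2 + z.im ^ 2) ^ 3 * |Q z μ|
      ≤ m / Real.pi / (1 + z.re ^ 2 + z.im ^ 2) ^ 3 * (2 * (1 + z.re^2 + z.im^2)) := by
        apply mul_le_mul_of_nonneg_left (Q_abs_le z μ) (by positivity)
    _ = 2*m/Real.pi * ((1 + z.re ^ 2 + z.im ^ 2)^2)⁻¹ := by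
        field_simp

/-- The hard massive supermomentum `P(z) = (m/π)(1+|z|²)⁻³` projects onto the momentum
`p = (−m, 0, 0, 0)` of a mass-`m` particle at rest: for each `μ`, the function
`(m/π)(1+x²+y²)⁻³ Qᵘ` is integrable with integral the `μ`-th component of `(−m,0,0,0)`. -/
theorem hard_massive_projection (m : ℝ) (hm : 0 < m) (μ : Fin 4) :
    Integrable (fun z : ℂ => m / Real.pi / (1 + z.re ^ 2 + z.im ^ 2) ^ 3 * Q z μ) ∧
    (∫ z : ℂ, m / Real.pi / (1 + z.re ^ 2 + z.im ^ 2) ^ 3 * Q z μ)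
      = ![-m, 0, 0, 0] μ := by
  refine ⟨integrable_main m hm μ, ?_⟩
  have hπ := Real.pi_pos
  fin_cases μ
  · -- μ = 0
    show (∫ z : ℂ, m / Real.pi / (1 + z.re ^ 2 + z.im ^ 2) ^ 3 * (-1 - z.re^2 - z.im^2)) = -m
    rw [← Complex.integral_comp_polarCoord_symm,
      show polarCoord.target = Ioi (0:ℝ) ×ˢ Ioo (-π) π from rfl,
      setIntegral_congr_fun (measurableSet_Ioi.prod measurableSet_Ioo)
        (fun p _ => show _ = (fun r : ℝ => -(m/Real.pi) * (r/(1+r^2)^2)) p.1 *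
            (fun _ : ℝ => (1:ℝ)) p.2 by
          have h := Real.sin_sq_add_cos_sq p.2
          simp only [smul_eq_mul, symm_re, symm_im]
          rw [show (1:ℝ)+(p.1*Real.cos p.2)^2+(p.1*Real.sin p.2)^2 = 1+p.1^2 by
            linear_combination p.1^2*h]
          rw [show (-1:ℝ)-(p.1*Real.cos p.2)^2-(p.1*Real.sin p.2)^2 = -(1+p.1^2) by
            linear_combination -(p.1^2)*h]
          have h1 : (1:ℝ)+p.1^2 ≠ 0 := by positivity
          field_simp),
      Measure.volume_eq_prod,
      setIntegral_prod_mul (fun r : ℝ => -(m/Real.pi) * (r/(1+r^2)^2)) (fun _ : ℝ => (1:ℝ)),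
      integral_const_mul, intVal2, angOne]
    field_simp
  · -- μ = 1
    show (∫ z : ℂ, m / Real.pi / (1 + z.re ^ 2 + z.im ^ 2) ^ 3 * (2 * z.re)) = 0
    rw [← Complex.integral_comp_polarCoord_symm,
      show polarCoord.target = Ioi (0:ℝ) ×ˢ Ioo (-π) π from rfl,
      setIntegral_congr_fun (measurableSet_Ioi.prod measurableSet_Ioo)
        (fun p _ => show _ = (fun r : ℝ => 2*(m/Real.pi) * (r^2/(1+r^2)^3)) p.1 *
            (fun θ : ℝ => Real.cos θ) p.2 by
          have h := Real.sin_sq_add_cos_sq p.2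
          simp only [smul_eq_mul, symm_re, symm_im]
          rw [show (1:ℝ)+(p.1*Real.cos p.2)^2+(p.1*Real.sin p.2)^2 = 1+p.1^2 by
            linear_combination p.1^2*h]
          have h1 : (1:ℝ)+p.1^2 ≠ 0 := by positivity
          field_simp),
      Measure.volume_eq_prod,
      setIntegral_prod_mul (fun r : ℝ => 2*(m/Real.pi) * (r^2/(1+r^2)^3))
        (fun θ : ℝ => Real.cos θ),
      angCos, mul_zero]
  · -- μ = 2
    show (∫ z : ℂ, m / Real.pi / (1 + z.re ^ 2 + z.im ^ 2) ^ 3 * (2 * z.im)) = 0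
    rw [← Complex.integral_comp_polarCoord_symm,
      show polarCoord.target = Ioi (0:ℝ) ×ˢ Ioo (-π) π from rfl,
      setIntegral_congr_fun (measurableSet_Ioi.prod measurableSet_Ioo)
        (fun p _ => show _ = (fun r : ℝ => 2*(m/Real.pi) * (r^2/(1+r^2)^3)) p.1 *
            (fun θ : ℝ => Real.sin θ) p.2 by
          have h := Real.sin_sq_add_cos_sq p.2
          simp only [smul_eq_mul, symm_re, symm_im]
          rw [show (1:ℝ)+(p.1*Real.cos p.2)^2+(p.1*Real.sin p.2)^2 = 1+p.1^2 by
            linear_combination p.1^2*h]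
          have h1 : (1:ℝ)+p.1^2 ≠ 0 := by positivity
          field_simp),
      Measure.volume_eq_prod,
      setIntegral_prod_mul (fun r : ℝ => 2*(m/Real.pi) * (r^2/(1+r^2)^3))
        (fun θ : ℝ => Real.sin θ),
      angSin, mul_zero]
  · -- μ = 3
    show (∫ z : ℂ, m / Real.pi / (1 + z.re ^ 2 + z.im ^ 2) ^ 3 * (1 - z.re^2 - z.im^2)) = 0
    rw [← Complex.integral_comp_polarCoord_symm,
      show polarCoord.target = Ioi (0:ℝ) ×ˢ Ioo (-π) π from rfl,
      setIntegral_congr_fun (measurableSet_Ioi.prod measurableSet_Ioo)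
        (fun p _ => show _ = (fun r : ℝ => (m/Real.pi) * (2*(r/(1+r^2)^3) - r/(1+r^2)^2)) p.1 *
            (fun _ : ℝ => (1:ℝ)) p.2 by
          have h := Real.sin_sq_add_cos_sq p.2
          simp only [smul_eq_mul, symm_re, symm_im]
          rw [show (1:ℝ)+(p.1*Real.cos p.2)^2+(p.1*Real.sin p.2)^2 = 1+p.1^2 by
            linear_combination p.1^2*h]
          rw [show (1:ℝ)-(p.1*Real.cos p.2)^2-(p.1*Real.sin p.2)^2 = 1-p.1^2 by
            linear_combination -(p.1^2)*h]
          have h1 : (1:ℝ)+p.1^2 ≠ 0 := by positivity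
          field_simp
          ring),
      Measure.volume_eq_prod,
      setIntegral_prod_mul (fun r : ℝ => (m/Real.pi) * (2*(r/(1+r^2)^3) - r/(1+r^2)^2))
        (fun _ : ℝ => (1:ℝ)),
      integral_const_mul, integral_sub (intOn3.const_mul 2) intOn2, integral_const_mul,
      intVal3, intVal2, angOne]
    norm_num
end
end

section
/- Let p₁, p₂ ∈ ℝ⁴ be linearly independent with B(p₁,p₁) ≤ 0 and B(p₂,p₂) ≤ 0 (two non-collinear causal momenta, each massive or massless). Let η := diag(−1,1,1,1) as a 4×4 real matrix. Then the stabilizer group G := { A : Matrix (Fin 4) (Fin 4) ℝ | Aᵀ η A = η, det A = 1, A p₁ = p₁, A p₂ = p₂ } (a group under matrix multiplication) is isomorphic as a group to the circle group { u ∈ ℂ : |u| = 1 } ≅ SO(2). (This is the claim that the common little group ℓ_{p₁} ∩ ℓ_{p₂} of two non-collinear causal momenta consists of the rotations in the plane orthogonal to the Lorentzian plane they span.) -/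
noncomputable section

/-- The Minkowski metric matrix `η = diag(−1, 1, 1, 1)`. -/
def eta : Matrix (Fin 4) (Fin 4) ℝ := Matrix.diagonal ![-1, 1, 1, 1]

/-- The common stabilizer of two momenta inside the proper Lorentz group: matrices `A`
with `Aᵀ η A = η`, `det A = 1`, fixing both `p₁` and `p₂`. -/
def stabSet (p₁ p₂ : Fin 4 → ℝ) : Set (Matrix (Fin 4) (Fin 4) ℝ) :=
  {A | A.transpose * eta * A = eta ∧ A.det = 1 ∧ A.mulVec p₁ = p₁ ∧ A.mulVec p₂ = p₂}

open Matrix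

lemma mink_comm (u v : Fin 4 → ℝ) : mink u v = mink v u := by simp [mink]; ring

/-- A nonzero vector orthogonal to a timelike vector is spacelike. -/
lemma spacelike_of_orth_timelike (v x : Fin 4 → ℝ) (hv : mink v v < 0)
    (ho : mink v x = 0) (hx : x ≠ 0) : 0 < mink x x := by
  simp only [mink] at *
  have hv0 : v 0 ≠ 0 := by intro h; rw [h] at hv; nlinarith [sq_nonneg (v 1), sq_nonneg (v 2), sq_nonneg (v 3)]
  by_cases hs : x 1 = 0 ∧ x 2 = 0 ∧ x 3 = 0
  · obtain ⟨e1, e2, e3⟩ := hs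
    have : x 0 = 0 := by
      rw [e1, e2, e3] at ho
      have : v 0 * x 0 = 0 := by linarith
      rcases mul_eq_zero.mp this with h | h
      · exact absurd h hv0
      · exact h
    exact absurd (funext fun i => by fin_cases i <;> simp [this, e1, e2, e3]) hx
  · have hS : 0 < x 1 ^ 2 + x 2 ^ 2 + x 3 ^ 2 := by
      rcases not_and_or.mp hs with h | h
      · nlinarith [sq_nonneg (x 2), sq_nonneg (x 3), sq_pos_of_ne_zero h]
      rcases not_and_or.mp h with h | h
      · nlinarith [sq_nonneg (x 1), sq_nonneg (x 3), sq_pos_of_ne_zero h]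
      · nlinarith [sq_nonneg (x 1), sq_nonneg (x 2), sq_pos_of_ne_zero h]
    have key : (v 0 * x 0) ^ 2 = (v 1 * x 1 + v 2 * x 2 + v 3 * x 3) ^ 2 := by
      have : v 0 * x 0 = v 1 * x 1 + v 2 * x 2 + v 3 * x 3 := by linarith
      rw [this]
    have hv2 : 0 < (v 0) ^ 2 := by positivity
    nlinarith [sq_nonneg (v 1 * x 2 - v 2 * x 1), sq_nonneg (v 1 * x 3 - v 3 * x 1),
      sq_nonneg (v 2 * x 3 - v 3 * x 2), mul_pos hv2 hS,
      mul_pos hS (show (0:ℝ) < v 0 ^ 2 - (v 1 ^ 2 + v 2 ^ 2 + v 3 ^ 2) by linarith)]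

/-- Helper: Gram determinant is negative when the first vector is timelike. -/
lemma gram_det_neg_of_timelike (p₁ p₂ : Fin 4 → ℝ)
    (hnd : ∀ s t : ℝ, s • p₁ + t • p₂ = 0 → s = 0 ∧ t = 0)
    (hc : mink p₁ p₁ < 0) :
    mink p₁ p₁ * mink p₂ p₂ - mink p₁ p₂ ^ 2 < 0 := by
  set w : Fin 4 → ℝ := mink p₁ p₁ • p₂ - mink p₁ p₂ • p₁ with hw
  have hwo : mink p₁ w = 0 := by simp [hw, mink]; ring
  have hwne : w ≠ 0 := by
    intro h
    have : (-(mink p₁ p₂)) • p₁ + (mink p₁ p₁) • p₂ = 0 := by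
      rw [← h]; funext i; simp [hw]; ring
    exact absurd ((hnd _ _ this).2) (ne_of_lt hc)
  have hws : 0 < mink w w := spacelike_of_orth_timelike p₁ w hc hwo hwne
  have hid : mink w w = mink p₁ p₁ * (mink p₁ p₁ * mink p₂ p₂ - mink p₁ p₂ ^ 2) := by
    simp [hw, mink]; ring
  nlinarith

lemma gram_det_neg (p₁ p₂ : Fin 4 → ℝ)
    (hind : LinearIndependent ℝ ![p₁, p₂])
    (h₁ : mink p₁ p₁ ≤ 0) (h₂ : mink p₂ p₂ ≤ 0) :
    mink p₁ p₁ * mink p₂ p₂ - mink p₁ p₂ ^ 2 < 0 := by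
  have hnd : ∀ s t : ℝ, s • p₁ + t • p₂ = 0 → s = 0 ∧ t = 0 :=
    LinearIndependent.pair_iff.mp hind
  rcases lt_or_eq_of_le h₁ with hc | hc
  · exact gram_det_neg_of_timelike p₁ p₂ hnd hc
  rcases lt_or_eq_of_le h₂ with hc2 | hc2
  · have hnd' : ∀ s t : ℝ, s • p₂ + t • p₁ = 0 → s = 0 ∧ t = 0 := by
      intro s t h
      have := hnd t s (by rw [← h]; abel)
      exact ⟨this.2, this.1⟩
    have := gram_det_neg_of_timelike p₂ p₁ hnd' hc2
    rw [mink_comm p₂ p₁] at this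
    nlinarith
  -- both null
  · have hne : mink p₁ p₂ ≠ 0 := by
      intro h12
      -- then t • p₂ = s • p₁ with t = p₁ 0 ≠ 0
      have hp1ne : p₁ ≠ 0 := by
        intro h
        have := hnd 1 0 (by simp [h])
        exact one_ne_zero this.1
      have ht : p₁ 0 ≠ 0 := by
        intro h0
        apply hp1ne
        have hc' : -(p₁ 0 * p₁ 0) + p₁ 1 * p₁ 1 + p₁ 2 * p₁ 2 + p₁ 3 * p₁ 3 = 0 := hc
        rw [h0] at hc'
        have e1 : p₁ 1 = 0 := by nlinarith [sq_nonneg (p₁ 1), sq_nonneg (p₁ 2), sq_nonneg (p₁ 3)]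
        have e2 : p₁ 2 = 0 := by nlinarith [sq_nonneg (p₁ 1), sq_nonneg (p₁ 2), sq_nonneg (p₁ 3)]
        have e3 : p₁ 3 = 0 := by nlinarith [sq_nonneg (p₁ 1), sq_nonneg (p₁ 2), sq_nonneg (p₁ 3)]
        funext i; fin_cases i <;> simp [h0, e1, e2, e3]
      set y : Fin 4 → ℝ := (-(p₂ 0)) • p₁ + (p₁ 0) • p₂ with hy
      have hyy : mink y y = 0 := by
        have : mink y y = (p₂ 0)^2 * mink p₁ p₁ - 2 * (p₂ 0) * (p₁ 0) * mink p₁ p₂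
            + (p₁ 0)^2 * mink p₂ p₂ := by simp [hy, mink]; ring
        rw [this, hc, hc2, h12]; ring
      have hy0 : y 0 = 0 := by simp [hy]; ring
      have hyz : y = 0 := by
        have hyy' : -(y 0 * y 0) + y 1 * y 1 + y 2 * y 2 + y 3 * y 3 = 0 := hyy
        rw [hy0] at hyy'
        have e1 : y 1 = 0 := by nlinarith [sq_nonneg (y 1), sq_nonneg (y 2), sq_nonneg (y 3)]
        have e2 : y 2 = 0 := by nlinarith [sq_nonneg (y 1), sq_nonneg (y 2), sq_nonneg (y 3)]
        have e3 : y 3 = 0 := by nlinarith [sq_nonneg (y 1), sq_nonneg (y 2), sq_nonneg (y 3)]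
        funext i; fin_cases i <;> simp [hy0, e1, e2, e3]
      exact ht (hnd _ _ hyz).2
    have h0 : 0 < mink p₁ p₂ ^ 2 := by positivity
    have hz : mink p₁ p₁ * mink p₂ p₂ = 0 := by rw [hc]; ring
    linarith

/-- A nonzero vector orthogonal to both causal independent momenta is spacelike. -/
lemma orth_spacelike (p₁ p₂ : Fin 4 → ℝ)
    (hdet : mink p₁ p₁ * mink p₂ p₂ - mink p₁ p₂ ^ 2 < 0)
    (h₁ : mink p₁ p₁ ≤ 0) (h₂ : mink p₂ p₂ ≤ 0)
    (x : Fin 4 → ℝ) (hx : x ≠ 0) (o1 : mink p₁ x = 0) (o2 : mink p₂ x = 0) :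
    0 < mink x x := by
  rcases lt_or_eq_of_le h₁ with hc | hc
  · exact spacelike_of_orth_timelike p₁ x hc o1 hx
  · -- B11 = 0, so B12 ≠ 0 and v := -B12 • p₁ + p₂ is timelike
    have hB12 : mink p₁ p₂ ≠ 0 := by
      intro h; rw [← hc, h] at hdet; simp at hdet
      nlinarith
    set v : Fin 4 → ℝ := (-(mink p₁ p₂)) • p₁ + p₂ with hv
    have hvv : mink v v < 0 := by
      have : mink v v = (mink p₁ p₂)^2 * mink p₁ p₁ - 2 * mink p₁ p₂ * mink p₁ p₂
          + mink p₂ p₂ := by simp [hv, mink]; ring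
      rw [this, ← hc]
      nlinarith [sq_pos_of_ne_zero hB12]
    have hvo : mink v x = 0 := by
      have : mink v x = (-(mink p₁ p₂)) * mink p₁ x + mink p₂ x := by simp [hv, mink]; ring
      rw [this, o1, o2]; ring
    exact spacelike_of_orth_timelike v x hvv hvo hx

/-- Bilinearity helpers. -/
lemma mink_smul_left (c : ℝ) (x y : Fin 4 → ℝ) : mink (c • x) y = c * mink x y := by
  simp [mink]; ring
lemma mink_smul_right (c : ℝ) (x y : Fin 4 → ℝ) : mink x (c • y) = c * mink x y := by
  simp [mink]; ring
lemma mink_sub_right (x y z : Fin 4 → ℝ) : mink x (y - z) = mink x y - mink x z := by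
  simp [mink]; ring

lemma exists_orthonormal (p₁ p₂ : Fin 4 → ℝ)
    (hdet : mink p₁ p₁ * mink p₂ p₂ - mink p₁ p₂ ^ 2 < 0)
    (h₁ : mink p₁ p₁ ≤ 0) (h₂ : mink p₂ p₂ ≤ 0) :
    ∃ e₂ e₃ : Fin 4 → ℝ, mink e₂ e₂ = 1 ∧ mink e₃ e₃ = 1 ∧ mink e₂ e₃ = 0 ∧
      mink p₁ e₂ = 0 ∧ mink p₁ e₃ = 0 ∧ mink p₂ e₂ = 0 ∧ mink p₂ e₃ = 0 := by
  set N : Matrix (Fin 2) (Fin 4) ℝ :=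
    Matrix.of ![![-(p₁ 0), p₁ 1, p₁ 2, p₁ 3], ![-(p₂ 0), p₂ 1, p₂ 2, p₂ 3]] with hN
  set K := LinearMap.ker N.mulVecLin with hK
  have memK : ∀ x : Fin 4 → ℝ, x ∈ K ↔ mink p₁ x = 0 ∧ mink p₂ x = 0 := by
    intro x
    rw [hK, LinearMap.mem_ker]
    constructor
    · intro h
      constructor
      · have := congrFun h 0
        simp [hN, Matrix.mulVecLin, Matrix.mulVec, dotProduct, Fin.sum_univ_four] at this
        simp [mink]; linarith
      · have := congrFun h 1
        simp [hN, Matrix.mulVecLin, Matrix.mulVec, dotProduct, Fin.sum_univ_four] at this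
        simp [mink]; linarith
    · intro ⟨ha, hb⟩
      simp [mink] at ha hb
      funext i; fin_cases i <;>
        simp [hN, Matrix.mulVecLin, Matrix.mulVec, dotProduct, Fin.sum_univ_four] <;> linarith
  have hrank : 2 ≤ Module.finrank ℝ K := by
    rw [hK]
    have := LinearMap.finrank_range_add_finrank_ker N.mulVecLin
    have hr : Module.finrank ℝ (LinearMap.range N.mulVecLin) ≤ 2 := by
      have := Submodule.finrank_le (LinearMap.range N.mulVecLin)
      simpa using this
    have h4 : Module.finrank ℝ (Fin 4 → ℝ) = 4 := by simp
    omega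
  obtain ⟨g, hg⟩ := exists_linearIndependent_of_le_finrank hrank
  have hgc : LinearIndependent ℝ (fun i : Fin 2 => ((g i : K) : Fin 4 → ℝ)) :=
    hg.map' K.subtype K.ker_subtype
  rw [linearIndependent_fin2] at hgc
  obtain ⟨hw1ne, hw2ne⟩ := hgc
  set w₁ : Fin 4 → ℝ := ((g 1 : K) : Fin 4 → ℝ) with hw₁
  set w₂ : Fin 4 → ℝ := ((g 0 : K) : Fin 4 → ℝ) with hw₂
  have hw₁K : mink p₁ w₁ = 0 ∧ mink p₂ w₁ = 0 := (memK w₁).mp (g 1).2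
  have hw₂K : mink p₁ w₂ = 0 ∧ mink p₂ w₂ = 0 := (memK w₂).mp (g 0).2
  have hm₁ : 0 < mink w₁ w₁ := orth_spacelike p₁ p₂ hdet h₁ h₂ w₁ hw1ne hw₁K.1 hw₁K.2
  set r₁ := Real.sqrt (mink w₁ w₁) with hr₁
  have hr₁pos : 0 < r₁ := Real.sqrt_pos.mpr hm₁
  set e₂ : Fin 4 → ℝ := r₁⁻¹ • w₁ with he₂
  have he₂e₂ : mink e₂ e₂ = 1 := by
    rw [he₂, mink_smul_left, mink_smul_right, hr₁]
    rw [← Real.sqrt_inv]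
    have := Real.sq_sqrt (le_of_lt (inv_pos.mpr hm₁))
    have h' : Real.sqrt (mink w₁ w₁)⁻¹ * Real.sqrt (mink w₁ w₁)⁻¹ = (mink w₁ w₁)⁻¹ := by
      nlinarith [Real.sq_sqrt (le_of_lt (inv_pos.mpr hm₁))]
    rw [← mul_assoc, h']
    field_simp
  have hp₁e₂ : mink p₁ e₂ = 0 := by rw [he₂, mink_smul_right, hw₁K.1]; ring
  have hp₂e₂ : mink p₂ e₂ = 0 := by rw [he₂, mink_smul_right, hw₁K.2]; ring
  set w' : Fin 4 → ℝ := w₂ - (mink e₂ w₂) • e₂ with hw'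
  have hw'ne : w' ≠ 0 := by
    intro h
    rw [hw'] at h
    have hsub : w₂ = (mink e₂ w₂) • e₂ := sub_eq_zero.mp h
    exact hw2ne (mink e₂ w₂ * r₁⁻¹) (by rw [mul_smul, ← he₂, ← hsub])
  have hw'p₁ : mink p₁ w' = 0 := by
    rw [hw', mink_sub_right, mink_smul_right, hw₂K.1, hp₁e₂]; ring
  have hw'p₂ : mink p₂ w' = 0 := by
    rw [hw', mink_sub_right, mink_smul_right, hw₂K.2, hp₂e₂]; ring
  have he₂w' : mink e₂ w' = 0 := by
    rw [hw', mink_sub_right, mink_smul_right, he₂e₂]; ring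
  have hm' : 0 < mink w' w' := orth_spacelike p₁ p₂ hdet h₁ h₂ w' hw'ne hw'p₁ hw'p₂
  set r₂ := Real.sqrt (mink w' w') with hr₂
  set e₃ : Fin 4 → ℝ := r₂⁻¹ • w' with he₃
  have he₃e₃ : mink e₃ e₃ = 1 := by
    rw [he₃, mink_smul_left, mink_smul_right, ← mul_assoc, hr₂]
    have h' : (Real.sqrt (mink w' w'))⁻¹ * (Real.sqrt (mink w' w'))⁻¹ = (mink w' w')⁻¹ := by
      rw [← Real.sqrt_inv]
      nlinarith [Real.sq_sqrt (le_of_lt (inv_pos.mpr hm'))]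
    rw [h']
    field_simp
  refine ⟨e₂, e₃, he₂e₂, he₃e₃, ?_, hp₁e₂, ?_, hp₂e₂, ?_⟩
  · rw [he₃, mink_smul_right, he₂w']; ring
  · rw [he₃, mink_smul_right, hw'p₁]; ring
  · rw [he₃, mink_smul_right, hw'p₂]; ring

lemma circle_sq (u : Circle) : ((u:ℂ).re)^2 + ((u:ℂ).im)^2 = 1 := by
  simpa [Complex.normSq_apply, pow_two] using Circle.normSq_coe u

/-- Rotation family. -/
def rotM (u : Circle) : Matrix (Fin 4) (Fin 4) ℝ :=
  Matrix.of ![![1,0,0,0],![0,1,0,0],![0,0,(u:ℂ).re, -(u:ℂ).im],![0,0,(u:ℂ).im,(u:ℂ).re]]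

lemma rotM_mul (u v : Circle) : rotM (u * v) = rotM u * rotM v := by
  ext i j
  fin_cases i <;> fin_cases j <;>
    simp [rotM, Matrix.mul_apply, Fin.sum_univ_four, Circle.coe_mul,
      Complex.mul_re, Complex.mul_im, Matrix.vecHead, Matrix.vecTail] <;> ring

lemma rotM_det (u : Circle) : (rotM u).det = 1 := by
  simp [rotM, Matrix.det_succ_row_zero, Fin.sum_univ_succ, Fin.succAbove]
  nlinarith [circle_sq u]

set_option maxHeartbeats 2000000 in
lemma main_construction (p₁ p₂ e₂ e₃ : Fin 4 → ℝ)
    (hdet : mink p₁ p₁ * mink p₂ p₂ - mink p₁ p₂ ^ 2 < 0)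
    (h22 : mink e₂ e₂ = 1) (h33 : mink e₃ e₃ = 1) (h23 : mink e₂ e₃ = 0)
    (o12 : mink p₁ e₂ = 0) (o13 : mink p₁ e₃ = 0) (o22 : mink p₂ e₂ = 0) (o23 : mink p₂ e₃ = 0) :
    ∃ f : Circle → Matrix (Fin 4) (Fin 4) ℝ,
      Function.Injective f ∧ Set.range f = stabSet p₁ p₂ ∧
      ∀ u v : Circle, f (u * v) = f u * f v := by
  classical
  set c : Fin 4 → (Fin 4 → ℝ) := ![p₁, p₂, e₂, e₃] with hc
  set P : Matrix (Fin 4) (Fin 4) ℝ := Matrix.of (fun i j => c j i) with hP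
  set G : Matrix (Fin 4) (Fin 4) ℝ :=
    Matrix.of ![![mink p₁ p₁, mink p₁ p₂, 0, 0], ![mink p₁ p₂, mink p₂ p₂, 0, 0],
      ![0,0,1,0], ![0,0,0,1]] with hG
  have o12' : mink e₂ p₁ = 0 := by rw [mink_comm]; exact o12
  have o13' : mink e₃ p₁ = 0 := by rw [mink_comm]; exact o13
  have o22' : mink e₂ p₂ = 0 := by rw [mink_comm]; exact o22
  have o23' : mink e₃ p₂ = 0 := by rw [mink_comm]; exact o23
  have h23' : mink e₃ e₂ = 0 := by rw [mink_comm]; exact h23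
  have hsym : mink p₂ p₁ = mink p₁ p₂ := mink_comm p₂ p₁
  have entry : ∀ i j, (Pᵀ * eta * P) i j = mink (c i) (c j) := by
    intro i j
    simp [Matrix.mul_apply, Fin.sum_univ_four, eta, Matrix.diagonal, hP, mink]
    try ring
  have hPG : Pᵀ * eta * P = G := by
    ext i j
    rw [entry]
    fin_cases i <;> fin_cases j <;>
      simp [hG, hc, h22, h33, h23, h23', o12, o13, o22, o23, o12', o13', o22', o23', hsym, Matrix.vecHead, Matrix.vecTail]
  have hdetG : G.det = mink p₁ p₁ * mink p₂ p₂ - mink p₁ p₂ ^ 2 := by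
    simp [hG, Matrix.det_succ_row_zero, Fin.sum_univ_succ, Fin.succAbove, Matrix.vecHead, Matrix.vecTail]
    ring
  have hdetEta : eta.det = -1 := by
    simp [eta, Matrix.det_diagonal, Fin.prod_univ_four]
  have hdetP : P.det ≠ 0 := by
    intro h
    have hd := congrArg Matrix.det hPG
    rw [Matrix.det_mul, Matrix.det_mul, Matrix.det_transpose, hdetEta, hdetG, h] at hd
    simp at hd
    nlinarith
  have hPunit : IsUnit P.det := isUnit_iff_ne_zero.mpr hdetP
  have hPinvP : P⁻¹ * P = 1 := Matrix.nonsing_inv_mul P hPunit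
  have hPPinv : P * P⁻¹ = 1 := Matrix.mul_nonsing_inv P hPunit
  have hetaG : (P⁻¹)ᵀ * G * P⁻¹ = eta := by
    rw [← hPG]
    have h1 : (P⁻¹)ᵀ * (Pᵀ * eta * P) * P⁻¹ = ((P * P⁻¹)ᵀ) * eta * (P * P⁻¹) := by
      rw [Matrix.transpose_mul]
      simp only [Matrix.mul_assoc]
    rw [h1, hPPinv]
    simp
  have hGform : ∀ X : Matrix (Fin 4) (Fin 4) ℝ, Pᵀ * (eta * (P * X)) = G * X := by
    intro X
    rw [← Matrix.mul_assoc, ← Matrix.mul_assoc, hPG]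
  have hetaform : ∀ X : Matrix (Fin 4) (Fin 4) ℝ, (P⁻¹)ᵀ * (G * (P⁻¹ * X)) = eta * X := by
    intro X
    rw [← Matrix.mul_assoc, ← Matrix.mul_assoc, hetaG]
  have hRG : ∀ u : Circle, (rotM u)ᵀ * G * rotM u = G := by
    intro u
    have hcs := circle_sq u
    ext i j
    fin_cases i <;> fin_cases j <;>
      simp [rotM, hG, Matrix.mul_apply, Fin.sum_univ_four, Matrix.vecHead, Matrix.vecTail] <;>
      linarith [hcs]
  have hcol : ∀ j : Fin 4, P.mulVec (Pi.single j 1) = c j := by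
    intro j
    rw [Matrix.mulVec_single]
    funext i
    simp [hP]
  have hinvcol : ∀ j : Fin 4, P⁻¹.mulVec (c j) = Pi.single j 1 := by
    intro j
    rw [← hcol, Matrix.mulVec_mulVec, hPinvP, Matrix.one_mulVec]
  have hrotfix : ∀ (u : Circle) (j : Fin 2),
      (rotM u).mulVec (Pi.single (Fin.castLE (by norm_num) j) 1) = Pi.single (Fin.castLE (by norm_num) j) 1 := by
    intro u j
    rw [Matrix.mulVec_single]
    funext i
    fin_cases j <;> fin_cases i <;> simp [rotM, Fin.castLE, Matrix.vecHead, Matrix.vecTail]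
  set f : Circle → Matrix (Fin 4) (Fin 4) ℝ := fun u => P * rotM u * P⁻¹ with hf
  have hfmul : ∀ u v : Circle, f (u * v) = f u * f v := by
    intro u v
    rw [hf]
    simp only
    rw [rotM_mul]
    simp only [Matrix.mul_assoc, Matrix.nonsing_inv_mul_cancel_left _ _ hPunit]
  have huncancel : ∀ X : Matrix (Fin 4) (Fin 4) ℝ, P⁻¹ * (P * X * P⁻¹) * P = X := by
    intro X
    simp only [Matrix.mul_assoc, Matrix.nonsing_inv_mul_cancel_left _ _ hPunit]
    rw [hPinvP, Matrix.mul_one]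
  have hfinj : Function.Injective f := by
    intro u v h
    have hR : rotM u = rotM v := by
      have := congrArg (fun M => P⁻¹ * M * P) h
      simpa only [hf, huncancel] using this
    have hre : (rotM u) 2 2 = (rotM v) 2 2 := by rw [hR]
    have him : (rotM u) 3 2 = (rotM v) 3 2 := by rw [hR]
    simp [rotM, Matrix.vecHead, Matrix.vecTail] at hre him
    exact Subtype.ext (Complex.ext hre him)
  refine ⟨f, hfinj, ?_, hfmul⟩
  apply Set.eq_of_subset_of_subset
  · rintro _ ⟨u, rfl⟩
    refine ⟨?_, ?_, ?_, ?_⟩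
    · -- Lorentz condition
      show (P * rotM u * P⁻¹)ᵀ * eta * (P * rotM u * P⁻¹) = eta
      simp only [Matrix.transpose_mul, Matrix.mul_assoc]
      rw [hGform]
      have hmid : (rotM u)ᵀ * (G * (rotM u * P⁻¹)) = G * P⁻¹ := by
        rw [← Matrix.mul_assoc, ← Matrix.mul_assoc, hRG u]
      rw [hmid, ← Matrix.mul_assoc, hetaG]
    · show (P * rotM u * P⁻¹).det = 1
      rw [Matrix.det_mul, Matrix.det_mul, rotM_det, Matrix.det_nonsing_inv,
        Ring.inverse_eq_inv']
      field_simp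
    · show (P * rotM u * P⁻¹).mulVec p₁ = p₁
      have : p₁ = c 0 := by simp [hc]
      rw [this, ← Matrix.mulVec_mulVec, ← Matrix.mulVec_mulVec, hinvcol]
      have h0 := hrotfix u 0
      simp only [show Fin.castLE (by norm_num : (2:ℕ) ≤ 4) (0 : Fin 2) = (0 : Fin 4) from rfl] at h0
      rw [h0, hcol]
    · show (P * rotM u * P⁻¹).mulVec p₂ = p₂
      have : p₂ = c 1 := by simp [hc]
      rw [this, ← Matrix.mulVec_mulVec, ← Matrix.mulVec_mulVec, hinvcol]
      have h1 := hrotfix u 1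
      simp only [show Fin.castLE (by norm_num : (2:ℕ) ≤ 4) (1 : Fin 2) = (1 : Fin 4) from rfl] at h1
      rw [h1, hcol]
  · rintro A ⟨horth, hdet1, hA1, hA2⟩
    set M : Matrix (Fin 4) (Fin 4) ℝ := P⁻¹ * A * P with hM
    clear_value M
    have hAeq : A = P * M * P⁻¹ := by
      rw [hM]
      simp only [Matrix.mul_assoc, Matrix.mul_nonsing_inv_cancel_left _ _ hPunit]
      rw [hPPinv, Matrix.mul_one]
    have hMG : Mᵀ * G * M = G := by
      rw [hM]
      simp only [Matrix.transpose_mul, Matrix.mul_assoc]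
      rw [hetaform (A * P)]
      have h2 : Aᵀ * (eta * (A * P)) = eta * P := by
        rw [← Matrix.mul_assoc, ← Matrix.mul_assoc, horth]
      rw [h2, ← Matrix.mul_assoc, hPG]
    have hc0 : c 0 = p₁ := by simp [hc]
    have hc1 : c 1 = p₂ := by simp [hc]
    have hMe0 : M.mulVec (Pi.single 0 1) = Pi.single 0 1 := by
      rw [hM, ← Matrix.mulVec_mulVec, ← Matrix.mulVec_mulVec, hcol, hc0, hA1, ← hc0, hinvcol]
    have hMe1 : M.mulVec (Pi.single 1 1) = Pi.single 1 1 := by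
      rw [hM, ← Matrix.mulVec_mulVec, ← Matrix.mulVec_mulVec, hcol, hc1, hA2, ← hc1, hinvcol]
    rw [Matrix.mulVec_single] at hMe0 hMe1
    have e00 : M 0 0 = 1 := by simpa using congrFun hMe0 0
    have e10 : M 1 0 = 0 := by simpa using congrFun hMe0 1
    have e20 : M 2 0 = 0 := by simpa using congrFun hMe0 2
    have e30 : M 3 0 = 0 := by simpa using congrFun hMe0 3
    have e01 : M 0 1 = 0 := by simpa using congrFun hMe1 0
    have e11 : M 1 1 = 1 := by simpa using congrFun hMe1 1
    have e21 : M 2 1 = 0 := by simpa using congrFun hMe1 2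
    have e31 : M 3 1 = 0 := by simpa using congrFun hMe1 3
    have E : ∀ i j, (Mᵀ * G * M) i j = G i j := fun i j => by rw [hMG]
    have q02 : mink p₁ p₁ * M 0 2 + mink p₁ p₂ * M 1 2 = 0 := by
      have h := E 0 2
      simp [Matrix.mul_apply, Fin.sum_univ_four, hG, Matrix.vecHead, Matrix.vecTail,
        e00, e10, e20, e30, e01, e11, e21, e31, Matrix.transpose_apply] at h
      linarith
    have q12 : mink p₁ p₂ * M 0 2 + mink p₂ p₂ * M 1 2 = 0 := by
      have h := E 1 2
      simp [Matrix.mul_apply, Fin.sum_univ_four, hG, Matrix.vecHead, Matrix.vecTail,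
        e00, e10, e20, e30, e01, e11, e21, e31, Matrix.transpose_apply] at h
      linarith
    have q03 : mink p₁ p₁ * M 0 3 + mink p₁ p₂ * M 1 3 = 0 := by
      have h := E 0 3
      simp [Matrix.mul_apply, Fin.sum_univ_four, hG, Matrix.vecHead, Matrix.vecTail,
        e00, e10, e20, e30, e01, e11, e21, e31, Matrix.transpose_apply] at h
      linarith
    have q13 : mink p₁ p₂ * M 0 3 + mink p₂ p₂ * M 1 3 = 0 := by
      have h := E 1 3
      simp [Matrix.mul_apply, Fin.sum_univ_four, hG, Matrix.vecHead, Matrix.vecTail,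
        e00, e10, e20, e30, e01, e11, e21, e31, Matrix.transpose_apply] at h
      linarith
    have hdet' : mink p₁ p₁ * mink p₂ p₂ - mink p₁ p₂ ^ 2 ≠ 0 := ne_of_lt hdet
    have h02 : M 0 2 = 0 := by
      have key : (mink p₁ p₁ * mink p₂ p₂ - mink p₁ p₂ ^ 2) * M 0 2 = 0 := by
        linear_combination (mink p₂ p₂) * q02 - (mink p₁ p₂) * q12
      exact (mul_eq_zero.mp key).resolve_left hdet'
    have h12 : M 1 2 = 0 := by
      have key : (mink p₁ p₁ * mink p₂ p₂ - mink p₁ p₂ ^ 2) * M 1 2 = 0 := by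
        linear_combination (mink p₁ p₁) * q12 - (mink p₁ p₂) * q02
      exact (mul_eq_zero.mp key).resolve_left hdet'
    have h03 : M 0 3 = 0 := by
      have key : (mink p₁ p₁ * mink p₂ p₂ - mink p₁ p₂ ^ 2) * M 0 3 = 0 := by
        linear_combination (mink p₂ p₂) * q03 - (mink p₁ p₂) * q13
      exact (mul_eq_zero.mp key).resolve_left hdet'
    have h13 : M 1 3 = 0 := by
      have key : (mink p₁ p₁ * mink p₂ p₂ - mink p₁ p₂ ^ 2) * M 1 3 = 0 := by
        linear_combination (mink p₁ p₁) * q13 - (mink p₁ p₂) * q03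
      exact (mul_eq_zero.mp key).resolve_left hdet'
    have q22 : M 2 2 * M 2 2 + M 3 2 * M 3 2 = 1 := by
      have h := E 2 2
      simp [Matrix.mul_apply, Fin.sum_univ_four, hG, Matrix.vecHead, Matrix.vecTail,
        h02, h12, e20, e30, e21, e31, Matrix.transpose_apply] at h
      linarith
    have q23 : M 2 2 * M 2 3 + M 3 2 * M 3 3 = 0 := by
      have h := E 2 3
      simp [Matrix.mul_apply, Fin.sum_univ_four, hG, Matrix.vecHead, Matrix.vecTail,
        h02, h12, h03, h13, e20, e30, e21, e31, Matrix.transpose_apply] at h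
      linarith
    have q33 : M 2 3 * M 2 3 + M 3 3 * M 3 3 = 1 := by
      have h := E 3 3
      simp [Matrix.mul_apply, Fin.sum_univ_four, hG, Matrix.vecHead, Matrix.vecTail,
        h03, h13, e20, e30, e21, e31, Matrix.transpose_apply] at h
      linarith
    have hdetM : M.det = 1 := by
      rw [hM, Matrix.det_mul, Matrix.det_mul, hdet1, Matrix.det_nonsing_inv,
        Ring.inverse_eq_inv']
      field_simp
    have hMform : M = Matrix.of ![![1,0,0,0],![0,1,0,0],
        ![0,0,M 2 2,M 2 3],![0,0,M 3 2,M 3 3]] := by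
      ext i j
      fin_cases i <;> fin_cases j <;>
        simp [e00, e10, e20, e30, e01, e11, e21, e31, h02, h12, h03, h13,
          Matrix.vecHead, Matrix.vecTail]
    have q4 : M 2 2 * M 3 3 - M 2 3 * M 3 2 = 1 := by
      have h := hdetM
      rw [hMform] at h
      simp [Matrix.det_succ_row_zero, Fin.sum_univ_succ, Fin.succAbove,
        Matrix.vecHead, Matrix.vecTail] at h
      linarith
    have hb : M 2 3 = -(M 3 2) := by
      linear_combination (-(M 2 3)) * q22 - (M 3 2) * q4 + (M 2 2) * q23
    have hd : M 3 3 = M 2 2 := by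
      linear_combination (-(M 3 3)) * q22 + (M 2 2) * q4 + (M 3 2) * q23
    set u : Circle := ⟨⟨M 2 2, M 3 2⟩, by
      simp [Submonoid.unitSphere, Complex.norm_def, Complex.normSq_mk]
      linear_combination q22⟩ with hu
    refine ⟨u, ?_⟩
    have hRu : rotM u = M := by
      rw [hMform]
      ext i j
      fin_cases i <;> fin_cases j <;>
        simp [rotM, hu, Matrix.vecHead, Matrix.vecTail, hb, hd]
    show P * rotM u * P⁻¹ = A
    rw [hRu, ← hAeq]


/-- For two non-collinear causal momenta `p₁, p₂` (each massive or massless), their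
common little group `ℓ_{p₁} ∩ ℓ_{p₂}` inside the proper Lorentz group is isomorphic as
a group to the circle group `{u ∈ ℂ : |u| = 1} ≅ SO(2)`: there is an injective
multiplicative map of the circle onto the stabilizer set. -/
theorem common_little_group_is_circle (p₁ p₂ : Fin 4 → ℝ)
    (hind : LinearIndependent ℝ ![p₁, p₂])
    (h₁ : mink p₁ p₁ ≤ 0) (h₂ : mink p₂ p₂ ≤ 0) :
    ∃ f : Circle → Matrix (Fin 4) (Fin 4) ℝ,
      Function.Injective f ∧ Set.range f = stabSet p₁ p₂ ∧
      ∀ u v : Circle, f (u * v) = f u * f v := by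
  have hdet := gram_det_neg p₁ p₂ hind h₁ h₂
  obtain ⟨e₂, e₃, h22, h33, h23, o12, o13, o22, o23⟩ := exists_orthonormal p₁ p₂ hdet h₁ h₂
  exact main_construction p₁ p₂ e₂ e₃ hdet h22 h33 h23 o12 o13 o22 o23
end
end
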